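/- arXiv:1811.07321 — 10 statements merged into one kernel-verified Lean document; each statement's English description precedes it below -/
import Mathlib

section
/- For every nonnegative integer a, the number of partitions of 12a into parts from {2,3,4} equals 3a^2+3a+1; the number of partitions of 12a+2 into parts from {2,3,4} equals 3a^2+4a+1; the number of partitions of 12a+4 equals 3a^2+5a+2; of 12a+6 equals 3a^2+6a+3; of 12a+8 equals 3a^2+7a+4; and of 12a+10 equals 3a^2+8a+5. -/
/-- `pCount k n` is the number of partitions of `n` all of whose parts lie in `{2, …, k}`. -/
noncomputable def pCount (k n : ℕ) : ℕ :=
  Nat.card {p : n.Partition // ∀ i ∈ p.parts, 2 ≤ i ∧ i ≤ k}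


noncomputable def pA (n : ℕ) : ℕ :=
  Nat.card {t : ℕ × ℕ × ℕ // 2 * t.1 + 3 * t.2.1 + 4 * t.2.2 = n}

noncomputable def pC (n : ℕ) : ℕ :=
  Nat.card {s : ℕ × ℕ // 3 * s.1 + 4 * s.2 = n}

instance finA (n : ℕ) : Finite {t : ℕ × ℕ × ℕ // 2 * t.1 + 3 * t.2.1 + 4 * t.2.2 = n} := by
  have : {t : ℕ × ℕ × ℕ | 2 * t.1 + 3 * t.2.1 + 4 * t.2.2 = n}.Finite := by
    apply Set.Finite.subset ((Set.finite_Iic n).prod ((Set.finite_Iic n).prod (Set.finite_Iic n)))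
    rintro ⟨x, y, z⟩ h
    simp only [Set.mem_setOf_eq] at h
    simp only [Set.mem_prod, Set.mem_Iic]
    omega
  exact this.to_subtype

instance finC (n : ℕ) : Finite {s : ℕ × ℕ // 3 * s.1 + 4 * s.2 = n} := by
  have : {s : ℕ × ℕ | 3 * s.1 + 4 * s.2 = n}.Finite := by
    apply Set.Finite.subset ((Set.finite_Iic n).prod (Set.finite_Iic n))
    rintro ⟨y, z⟩ h
    simp only [Set.mem_setOf_eq] at h
    simp only [Set.mem_prod, Set.mem_Iic]
    omega
  exact this.to_subtype

instance finD (n : ℕ) : Finite {y : ℕ // 3 * y = n} := by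
  have : {y : ℕ | 3 * y = n}.Finite := by
    apply Set.Finite.subset (Set.finite_Iic n)
    intro y h
    simp only [Set.mem_setOf_eq] at h
    simp only [Set.mem_Iic]
    omega
  exact this.to_subtype

def eA (n : ℕ) : {t : ℕ × ℕ × ℕ // 2 * t.1 + 3 * t.2.1 + 4 * t.2.2 = n + 2} ≃
    {t : ℕ × ℕ × ℕ // 2 * t.1 + 3 * t.2.1 + 4 * t.2.2 = n} ⊕
      {s : ℕ × ℕ // 3 * s.1 + 4 * s.2 = n + 2} where
  toFun t := if h : t.1.1 = 0 then Sum.inr ⟨t.1.2, by have := t.2; omega⟩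
    else Sum.inl ⟨(t.1.1 - 1, t.1.2), by have := t.2; simp only; omega⟩
  invFun s := match s with
    | Sum.inl t => ⟨(t.1.1 + 1, t.1.2), by have := t.2; simp only; omega⟩
    | Sum.inr s => ⟨(0, s.1), by have := s.2; simp only; omega⟩
  left_inv t := by
    obtain ⟨⟨x, y, z⟩, ht⟩ := t
    by_cases h : x = 0 <;> simp only [h, dif_pos, dif_neg, not_false_iff] <;>
      simp_all <;> omega
  right_inv s := by
    rcases s with ⟨⟨x, y, z⟩, ht⟩ | ⟨⟨y, z⟩, hs⟩ <;> simp

def eC (n : ℕ) : {s : ℕ × ℕ // 3 * s.1 + 4 * s.2 = n + 4} ≃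
    {s : ℕ × ℕ // 3 * s.1 + 4 * s.2 = n} ⊕ {y : ℕ // 3 * y = n + 4} where
  toFun s := if h : s.1.2 = 0 then Sum.inr ⟨s.1.1, by have := s.2; omega⟩
    else Sum.inl ⟨(s.1.1, s.1.2 - 1), by have := s.2; simp only; omega⟩
  invFun s := match s with
    | Sum.inl s => ⟨(s.1.1, s.1.2 + 1), by have := s.2; simp only; omega⟩
    | Sum.inr y => ⟨(y.1, 0), by have := y.2; simp only; omega⟩
  left_inv s := by
    obtain ⟨⟨y, z⟩, hs⟩ := s
    by_cases h : z = 0 <;> simp only [h, dif_pos, dif_neg, not_false_iff] <;>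
      simp_all <;> omega
  right_inv s := by
    rcases s with ⟨⟨y, z⟩, hs⟩ | ⟨y, hy⟩ <;> simp

lemma pD_val (n : ℕ) : Nat.card {y : ℕ // 3 * y = n} = if 3 ∣ n then 1 else 0 := by
  split_ifs with h
  · obtain ⟨k, rfl⟩ := h
    haveI : Unique {y : ℕ // 3 * y = 3 * k} :=
      ⟨⟨⟨k, rfl⟩⟩, by rintro ⟨y, hy⟩; exact Subtype.ext (show y = k by omega)⟩
    exact Nat.card_unique
  · haveI : IsEmpty {y : ℕ // 3 * y = n} := ⟨by rintro ⟨y, hy⟩; exact h ⟨y, hy.symm⟩⟩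
    exact Nat.card_of_isEmpty

lemma pA_step (n : ℕ) : pA (n + 2) = pA n + pC (n + 2) := by
  rw [pA, Nat.card_congr (eA n), Nat.card_sum]; rfl

lemma pC_step (n : ℕ) : pC (n + 4) = pC n + if 3 ∣ (n + 4) then 1 else 0 := by
  rw [pC, Nat.card_congr (eC n), Nat.card_sum, pD_val]; rfl

lemma pC_12 (n : ℕ) : pC (n + 12) = pC n + 1 := by
  have h1 := pC_step n
  have h2 := pC_step (n + 4)
  have h3 := pC_step (n + 8)
  have e1 : (3 ∣ n + 4) ↔ n % 3 = 2 := by omega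
  have e2 : (3 ∣ n + 4 + 4) ↔ n % 3 = 1 := by omega
  have e3 : (3 ∣ n + 8 + 4) ↔ n % 3 = 0 := by omega
  simp only [e1] at h1; simp only [e2] at h2; simp only [e3] at h3
  have : n + 4 + 4 = n + 8 := by ring
  rw [this] at h2
  have : n + 8 + 4 = n + 12 := by ring
  rw [this] at h3
  split_ifs at h1 h2 h3 <;> omega

lemma pA_0 : pA 0 = 1 := by
  haveI : Unique {t : ℕ × ℕ × ℕ // 2 * t.1 + 3 * t.2.1 + 4 * t.2.2 = 0} :=
    ⟨⟨⟨(0, 0, 0), rfl⟩⟩, by rintro ⟨⟨x, y, z⟩, h⟩; simp only at h; ext <;> simp <;> omega⟩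
  exact Nat.card_unique

lemma pC_0 : pC 0 = 1 := by
  haveI : Unique {s : ℕ × ℕ // 3 * s.1 + 4 * s.2 = 0} :=
    ⟨⟨⟨(0, 0), rfl⟩⟩, by rintro ⟨⟨y, z⟩, h⟩; simp only at h; ext <;> simp <;> omega⟩
  exact Nat.card_unique

lemma pC_2 : pC 2 = 0 := by
  haveI : IsEmpty {s : ℕ × ℕ // 3 * s.1 + 4 * s.2 = 2} :=
    ⟨by rintro ⟨⟨y, z⟩, h⟩; simp only at h; omega⟩
  exact Nat.card_of_isEmpty

lemma pC_vals (a : ℕ) : pC (12 * a) = a + 1 ∧ pC (12 * a + 2) = a ∧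
    pC (12 * a + 4) = a + 1 ∧ pC (12 * a + 6) = a + 1 ∧
    pC (12 * a + 8) = a + 1 ∧ pC (12 * a + 10) = a + 1 := by
  induction a with
  | zero =>
    have h4 : pC 4 = 1 := by have := pC_step 0; rw [pC_0] at this; norm_num at this; omega
    have h6 : pC 6 = 1 := by have := pC_step 2; rw [pC_2] at this; norm_num at this; omega
    have h8 : pC 8 = 1 := by have := pC_step 4; rw [h4] at this; norm_num at this; omega
    have h10 : pC 10 = 1 := by have := pC_step 6; rw [h6] at this; norm_num at this; omega
    refine ⟨pC_0, pC_2, ?_, ?_, ?_, ?_⟩ <;> norm_num [h4, h6, h8, h10]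
  | succ a ih =>
    obtain ⟨i0, i2, i4, i6, i8, i10⟩ := ih
    have key : ∀ r, pC (12 * (a + 1) + r) = pC (12 * a + r) + 1 := fun r => by
      rw [show 12 * (a + 1) + r = (12 * a + r) + 12 by ring, pC_12]
    have key0 : pC (12 * (a + 1)) = pC (12 * a) + 1 := by
      rw [show 12 * (a + 1) = 12 * a + 12 by ring, pC_12]
    exact ⟨by rw [key0, i0], by rw [key, i2], by rw [key, i4], by rw [key, i6],
      by rw [key, i8], by rw [key, i10]⟩

lemma pA_vals (a : ℕ) : pA (12 * a) = 3 * a ^ 2 + 3 * a + 1 ∧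
    pA (12 * a + 2) = 3 * a ^ 2 + 4 * a + 1 ∧
    pA (12 * a + 4) = 3 * a ^ 2 + 5 * a + 2 ∧
    pA (12 * a + 6) = 3 * a ^ 2 + 6 * a + 3 ∧
    pA (12 * a + 8) = 3 * a ^ 2 + 7 * a + 4 ∧
    pA (12 * a + 10) = 3 * a ^ 2 + 8 * a + 5 := by
  induction a with
  | zero =>
    obtain ⟨c0, c2, c4, c6, c8, c10⟩ := pC_vals 0
    norm_num at c0 c2 c4 c6 c8 c10
    have h2 : pA 2 = 1 := by have h := pA_step 0; norm_num [pA_0, c2] at h; omega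
    have h4 : pA 4 = 2 := by have := pA_step 2; rw [h2] at this; norm_num [c4] at this; omega
    have h6 : pA 6 = 3 := by have := pA_step 4; rw [h4] at this; norm_num [c6] at this; omega
    have h8 : pA 8 = 4 := by have := pA_step 6; rw [h6] at this; norm_num [c8] at this; omega
    have h10 : pA 10 = 5 := by have := pA_step 8; rw [h8] at this; norm_num [c10] at this; omega
    refine ⟨pA_0, ?_, ?_, ?_, ?_, ?_⟩ <;> norm_num [h2, h4, h6, h8, h10]
  | succ a ih =>
    obtain ⟨i0, i2, i4, i6, i8, i10⟩ := ih
    obtain ⟨c0, c2, c4, c6, c8, c10⟩ := pC_vals (a + 1)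
    have h0 : pA (12 * (a + 1)) = pA (12 * a + 10) + pC (12 * (a + 1)) := by
      have : 12 * (a + 1) = (12 * a + 10) + 2 := by ring
      rw [this, pA_step]
    have h2 : pA (12 * (a + 1) + 2) = pA (12 * (a + 1)) + pC (12 * (a + 1) + 2) := by
      have : 12 * (a + 1) + 2 = (12 * (a + 1)) + 2 := by ring
      rw [this, pA_step]
    have h4 : pA (12 * (a + 1) + 4) = pA (12 * (a + 1) + 2) + pC (12 * (a + 1) + 4) := by
      have : 12 * (a + 1) + 4 = (12 * (a + 1) + 2) + 2 := by ring
      rw [this, pA_step]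
    have h6 : pA (12 * (a + 1) + 6) = pA (12 * (a + 1) + 4) + pC (12 * (a + 1) + 6) := by
      have : 12 * (a + 1) + 6 = (12 * (a + 1) + 4) + 2 := by ring
      rw [this, pA_step]
    have h8 : pA (12 * (a + 1) + 8) = pA (12 * (a + 1) + 6) + pC (12 * (a + 1) + 8) := by
      have : 12 * (a + 1) + 8 = (12 * (a + 1) + 6) + 2 := by ring
      rw [this, pA_step]
    have h10 : pA (12 * (a + 1) + 10) = pA (12 * (a + 1) + 8) + pC (12 * (a + 1) + 10) := by
      have : 12 * (a + 1) + 10 = (12 * (a + 1) + 8) + 2 := by ring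
      rw [this, pA_step]
    have sq : (a + 1) ^ 2 = a ^ 2 + 2 * a + 1 := by ring
    rw [i10, c0] at h0
    rw [h0, c2] at h2
    rw [h2, c4] at h4
    rw [h4, c6] at h6
    rw [h6, c8] at h8
    rw [h8, c10] at h10
    refine ⟨?_, ?_, ?_, ?_, ?_, ?_⟩ <;> rw [sq] at * <;> omega

lemma multiset_decomp (s : Multiset ℕ) (h : ∀ i ∈ s, i = 2 ∨ i = 3 ∨ i = 4) :
    s = Multiset.replicate (s.count 2) 2 + Multiset.replicate (s.count 3) 3 +
      Multiset.replicate (s.count 4) 4 := by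
  ext b
  rw [Multiset.count_add, Multiset.count_add, Multiset.count_replicate,
    Multiset.count_replicate, Multiset.count_replicate]
  by_cases h2 : b = 2
  · subst h2; simp
  by_cases h3 : b = 3
  · subst h3; simp
  by_cases h4 : b = 4
  · subst h4; simp
  have : b ∉ s := fun hb => by rcases h b hb with rfl | rfl | rfl <;> simp_all
  rw [Multiset.count_eq_zero_of_notMem this]
  simp [h2, h3, h4, Ne.symm]

lemma repl_sum (x y z : ℕ) : (Multiset.replicate x 2 + Multiset.replicate y 3 +
    Multiset.replicate z 4).sum = 2 * x + 3 * y + 4 * z := by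
  simp [Multiset.sum_replicate]
  ring

def partEquiv (n : ℕ) : {p : n.Partition // ∀ i ∈ p.parts, 2 ≤ i ∧ i ≤ 4} ≃
    {t : ℕ × ℕ × ℕ // 2 * t.1 + 3 * t.2.1 + 4 * t.2.2 = n} where
  toFun p := ⟨(p.1.parts.count 2, p.1.parts.count 3, p.1.parts.count 4), by
    have hd := multiset_decomp p.1.parts (fun i hi => by have := p.2 i hi; omega)
    have hs := p.1.parts_sum
    rw [hd, repl_sum] at hs
    exact hs⟩
  invFun t := ⟨⟨Multiset.replicate t.1.1 2 + Multiset.replicate t.1.2.1 3 +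
      Multiset.replicate t.1.2.2 4,
    by intro i hi
       simp only [Multiset.mem_add, Multiset.eq_of_mem_replicate] at hi
       rcases hi with (hi | hi) | hi <;> rw [Multiset.eq_of_mem_replicate hi] <;> norm_num,
    by rw [repl_sum]; exact t.2⟩,
    by intro i hi
       simp only [Multiset.mem_add] at hi
       rcases hi with (hi | hi) | hi <;> rw [Multiset.eq_of_mem_replicate hi] <;> omega⟩
  left_inv p := by
    apply Subtype.ext
    apply Nat.Partition.ext
    exact (multiset_decomp p.1.parts (fun i hi => by have := p.2 i hi; omega)).symm
  right_inv t := by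
    apply Subtype.ext
    obtain ⟨⟨x, y, z⟩, ht⟩ := t
    simp only [Multiset.count_add, Multiset.count_replicate]
    norm_num

lemma pCount_eq_pA (n : ℕ) : pCount 4 n = pA n := Nat.card_congr (partEquiv n)

/-- Explicit formulas for the number of partitions of even numbers into parts
from `{2,3,4}`. -/
theorem p4_even_formulas (a : ℕ) :
    pCount 4 (12 * a) = 3 * a ^ 2 + 3 * a + 1 ∧
    pCount 4 (12 * a + 2) = 3 * a ^ 2 + 4 * a + 1 ∧
    pCount 4 (12 * a + 4) = 3 * a ^ 2 + 5 * a + 2 ∧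
    pCount 4 (12 * a + 6) = 3 * a ^ 2 + 6 * a + 3 ∧
    pCount 4 (12 * a + 8) = 3 * a ^ 2 + 7 * a + 4 ∧
    pCount 4 (12 * a + 10) = 3 * a ^ 2 + 8 * a + 5 := by
  simp only [pCount_eq_pA]
  exact pA_vals a
end

section
/- For all k ≥ 5 and n ≥ 14, p_k(n) ≥ p_k(n-1), where p_k(n) is the number of partitions of n into parts of size between 2 and k inclusive. -/
open Multiset

namespace PkAux

lemma sup_mem {s : Multiset ℕ} (h : s ≠ 0) : s.sup ∈ s := by
  induction s using Multiset.induction_on with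
  | empty => exact absurd rfl h
  | cons a t ih =>
    rw [Multiset.sup_cons]
    rcases eq_or_ne t 0 with rfl | ht
    · simp
    · rcases le_total t.sup a with h1 | h1
      · rw [sup_eq_left.2 h1]; exact Multiset.mem_cons_self a t
      · rw [sup_eq_right.2 h1]; exact Multiset.mem_cons_of_mem (ih ht)

/-- rebuild a multiset from counts of 2,3,4,5 and the big parts -/
def out (a b c d : ℕ) (ρ : Multiset ℕ) : Multiset ℕ :=
  replicate a 2 + replicate b 3 + replicate c 4 + replicate d 5 + ρ

def Valid (k m a b c d : ℕ) (ρ : Multiset ℕ) : Prop :=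
  2*a + 3*b + 4*c + 5*d + ρ.sum = m ∧ ∀ i ∈ ρ, 6 ≤ i ∧ i ≤ k

lemma out_sum (a b c d : ℕ) (ρ : Multiset ℕ) :
    (out a b c d ρ).sum = 2*a + 3*b + 4*c + 5*d + ρ.sum := by
  simp [out, Multiset.sum_replicate, smul_eq_mul]; ring

lemma mem_out {a b c d : ℕ} {ρ : Multiset ℕ} {i : ℕ} (hi : i ∈ out a b c d ρ) :
    (2 ≤ i ∧ i ≤ 5) ∨ i ∈ ρ := by
  simp only [out, Multiset.mem_add, Multiset.eq_of_mem_replicate] at hi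
  rcases hi with (((h|h)|h)|h)|h
  · left; rw [Multiset.eq_of_mem_replicate h]; omega
  · left; rw [Multiset.eq_of_mem_replicate h]; omega
  · left; rw [Multiset.eq_of_mem_replicate h]; omega
  · left; rw [Multiset.eq_of_mem_replicate h]; omega
  · right; exact h

lemma count_out_small {a b c d : ℕ} {ρ : Multiset ℕ} (hρ : ∀ i ∈ ρ, 6 ≤ i) :
    (out a b c d ρ).count 2 = a ∧ (out a b c d ρ).count 3 = b ∧
    (out a b c d ρ).count 4 = c ∧ (out a b c d ρ).count 5 = d := by
  have hc : ∀ j, j < 6 → ρ.count j = 0 := fun j hj =>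
    Multiset.count_eq_zero.2 fun hmem => by have := hρ j hmem; omega
  refine ⟨?_, ?_, ?_, ?_⟩ <;>
    simp [out, Multiset.count_add, Multiset.count_replicate, hc 2 (by omega),
      hc 3 (by omega), hc 4 (by omega), hc 5 (by omega)]

lemma filter_out {a b c d : ℕ} {ρ : Multiset ℕ} (hρ : ∀ i ∈ ρ, 6 ≤ i) :
    (out a b c d ρ).filter (6 ≤ ·) = ρ := by
  have h1 : ∀ (t : ℕ) (x : ℕ), x ≤ 5 → (replicate t x).filter (fun i => 6 ≤ i) = 0 :=
    fun t x hx => Multiset.filter_eq_nil.2 fun i hi => by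
      rw [Multiset.eq_of_mem_replicate hi]; omega
  simp only [out, Multiset.filter_add, h1 a 2 (by omega), h1 b 3 (by omega),
    h1 c 4 (by omega), h1 d 5 (by omega), Multiset.filter_eq_self.2 hρ]
  simp

lemma decomp (M : Multiset ℕ) (h : ∀ i ∈ M, 2 ≤ i) :
    out (M.count 2) (M.count 3) (M.count 4) (M.count 5) (M.filter (6 ≤ ·)) = M := by
  ext j
  simp only [out, Multiset.count_add, Multiset.count_replicate, Multiset.count_filter]
  by_cases h6 : 6 ≤ j
  · rw [if_pos h6, if_neg (by omega), if_neg (by omega), if_neg (by omega), if_neg (by omega)]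
    omega
  · have hj5 : j ≤ 5 := by omega
    interval_cases j
    · have : M.count 0 = 0 := Multiset.count_eq_zero.2 fun hm => by have := h 0 hm; omega
      simp [this]
    · have : M.count 1 = 0 := Multiset.count_eq_zero.2 fun hm => by have := h 1 hm; omega
      simp [this]
    · simp
    · simp
    · simp
    · simp


def step (k a b c d : ℕ) (ρ : Multiset ℕ) : ℕ × ℕ × ℕ × ℕ × Multiset ℕ :=
  if a ≠ 0 then (a-1, b+1, c, d, ρ)
  else if b ≠ 0 then
    (if b % 2 = 0 then (3*(b/2)-2, 0, c, d+1, ρ) else (3*(b/2)+2, 0, c, d, ρ))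
  else if d ≠ 0 then (3, 0, c, d-1, ρ)
  else if c ≠ 0 then (0, 0, c-1, 1, ρ)
  else if ρ.sup < k then (0, 0, 0, 0, (ρ.sup+1) ::ₘ ρ.erase ρ.sup)
  else if k = 6 then (0, 0, 1, 3, replicate (ρ.card - 3) 6)
  else (1, 0, 0, 0, (k-1) ::ₘ ρ.erase k)

def ValidT (k m : ℕ) (t : ℕ × ℕ × ℕ × ℕ × Multiset ℕ) : Prop :=
  Valid k m t.1 t.2.1 t.2.2.1 t.2.2.2.1 t.2.2.2.2

lemma sup_facts {k m : ℕ} {ρ : Multiset ℕ} (hm : 13 ≤ m)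
    (hsum : ρ.sum = m) (hρ : ∀ i ∈ ρ, 6 ≤ i ∧ i ≤ k) :
    ρ ≠ 0 ∧ ρ.sup ∈ ρ ∧ 6 ≤ ρ.sup ∧ ρ.sup ≤ k := by
  have hne : ρ ≠ 0 := by
    rintro rfl; simp at hsum; omega
  have hmem := sup_mem hne
  exact ⟨hne, hmem, (hρ _ hmem).1, (hρ _ hmem).2⟩

lemma erase_sum {ρ : Multiset ℕ} {x : ℕ} (hx : x ∈ ρ) :
    (ρ.erase x).sum + x = ρ.sum := by
  conv_rhs => rw [← Multiset.cons_erase hx]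
  rw [Multiset.sum_cons]; ring

lemma replicate_six {k : ℕ} {ρ : Multiset ℕ} (hk : k = 6)
    (hρ : ∀ i ∈ ρ, 6 ≤ i ∧ i ≤ k) : ρ = replicate ρ.card 6 := by
  subst hk
  exact Multiset.eq_replicate_card.2 fun b hb => by have := hρ b hb; omega

lemma valid_step {k m a b c d : ℕ} {ρ : Multiset ℕ} (hk : 5 ≤ k) (hm : 13 ≤ m)
    (v : Valid k m a b c d ρ) : ValidT k (m+1) (step k a b c d ρ) := by
  obtain ⟨hsum, hρ⟩ := v
  unfold step ValidT Valid
  split_ifs with h1 h2 h3 h4 h5 h6 h7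
  · constructor
    · simp only; omega
    · exact hρ
  · constructor
    · simp only; omega
    · exact hρ
  · constructor
    · simp only; omega
    · exact hρ
  · constructor
    · simp only; omega
    · exact hρ
  · constructor
    · simp only; omega
    · exact hρ
  · -- 5a : sup < k
    have hz : a = 0 ∧ b = 0 ∧ c = 0 ∧ d = 0 := by omega
    obtain ⟨rfl, rfl, rfl, rfl⟩ := hz
    have hs : ρ.sum = m := by omega
    obtain ⟨hne, hmem, h6s, hks⟩ := sup_facts hm hs hρ
    have he := erase_sum hmem
    constructor
    · simp only [Multiset.sum_cons]
      omega
    · intro i hi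
      rcases Multiset.mem_cons.1 hi with rfl | hi
      · omega
      · exact hρ i (Multiset.mem_of_mem_erase hi)
  · -- 5b : k = 6
    have hz : a = 0 ∧ b = 0 ∧ c = 0 ∧ d = 0 := by omega
    obtain ⟨rfl, rfl, rfl, rfl⟩ := hz
    have hs : ρ.sum = m := by omega
    have hrep := replicate_six h7 hρ
    have hsum6 : 6 * ρ.card = m := by
      have := congrArg Multiset.sum hrep
      rw [hs, Multiset.sum_replicate, smul_eq_mul] at this
      omega
    have hcard : 3 ≤ ρ.card := by omega
    constructor
    · simp only [Multiset.sum_replicate, smul_eq_mul]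
      omega
    · intro i hi
      rw [Multiset.eq_of_mem_replicate hi]; omega
  · -- 5c : k ≥ 7, sup = k
    have hz : a = 0 ∧ b = 0 ∧ c = 0 ∧ d = 0 := by omega
    obtain ⟨rfl, rfl, rfl, rfl⟩ := hz
    have hs : ρ.sum = m := by omega
    obtain ⟨hne, hmem, h6s, hks⟩ := sup_facts hm hs hρ
    have hsupk : ρ.sup = k := by omega
    have hkmem : k ∈ ρ := hsupk ▸ hmem
    have h7k : 7 ≤ k := by
      rcases Nat.lt_or_ge k 7 with h | h
      · omega
      · exact h
    have he := erase_sum hkmem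
    constructor
    · simp only [Multiset.sum_cons]
      omega
    · intro i hi
      rcases Multiset.mem_cons.1 hi with rfl | hi
      · omega
      · exact hρ i (Multiset.mem_of_mem_erase hi)


lemma sup_insert_succ (ρ : Multiset ℕ) :
    ((ρ.sup+1) ::ₘ ρ.erase ρ.sup).sup = ρ.sup + 1 := by
  rw [Multiset.sup_cons]
  have h : (ρ.erase ρ.sup).sup ≤ ρ.sup :=
    Multiset.sup_le.2 fun b hb => Multiset.le_sup (Multiset.mem_of_mem_erase hb)
  exact sup_eq_left.2 (le_trans h (Nat.le_succ _))

lemma cons_erase_inj {ρ1 ρ2 : Multiset ℕ} {x : ℕ} (h1 : x ∈ ρ1) (h2 : x ∈ ρ2)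
    (h : ρ1.erase x = ρ2.erase x) : ρ1 = ρ2 := by
  rw [← Multiset.cons_erase h1, ← Multiset.cons_erase h2, h]

set_option maxHeartbeats 2000000 in
lemma step_inj {k m a1 b1 c1 d1 a2 b2 c2 d2 : ℕ} {ρ1 ρ2 : Multiset ℕ}
    (hm : 13 ≤ m)
    (v1 : Valid k m a1 b1 c1 d1 ρ1) (v2 : Valid k m a2 b2 c2 d2 ρ2)
    (h : step k a1 b1 c1 d1 ρ1 = step k a2 b2 c2 d2 ρ2) :
    a1 = a2 ∧ b1 = b2 ∧ c1 = c2 ∧ d1 = d2 ∧ ρ1 = ρ2 := by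
  have hv1 := v1.1
  have hv2 := v2.1
  have hb1 := v1.2
  have hb2 := v2.2
  unfold step at h
  split_ifs at h <;>
    (simp only [Prod.mk.injEq] at h; obtain ⟨e1, e2, e3, e4, e5⟩ := h) <;>
    first
      | (exact ⟨by omega, by omega, by omega, by omega, e5⟩)
      | omega
      | skip
  -- remaining: the three multiset-surgery diagonal cases (5a, 5b, 5c)
  · -- 5a diagonal
    have hz1 : a1 = 0 ∧ b1 = 0 ∧ c1 = 0 ∧ d1 = 0 := by omega
    have hz2 : a2 = 0 ∧ b2 = 0 ∧ c2 = 0 ∧ d2 = 0 := by omega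
    have hs1 : ρ1.sum = m := by omega
    have hs2 : ρ2.sum = m := by omega
    have hne1 : ρ1 ≠ 0 := by rintro rfl; simp at hs1; omega
    have hne2 : ρ2 ≠ 0 := by rintro rfl; simp at hs2; omega
    have hsup : ρ1.sup = ρ2.sup := by
      have := congrArg Multiset.sup e5
      rw [sup_insert_succ, sup_insert_succ] at this
      omega
    rw [hsup] at e5
    have he : ρ1.erase ρ2.sup = ρ2.erase ρ2.sup := (Multiset.cons_inj_right _).1 e5
    have h1m : ρ2.sup ∈ ρ1 := hsup ▸ sup_mem hne1
    have h2m : ρ2.sup ∈ ρ2 := sup_mem hne2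
    exact ⟨by omega, by omega, by omega, by omega, cons_erase_inj h1m h2m he⟩
  · -- 5b diagonal (k = 6)
    by_cases hk6 : k = 6
    case neg => omega
    have hz1 : a1 = 0 ∧ b1 = 0 ∧ c1 = 0 ∧ d1 = 0 := by omega
    have hz2 : a2 = 0 ∧ b2 = 0 ∧ c2 = 0 ∧ d2 = 0 := by omega
    have hs1 : ρ1.sum = m := by omega
    have hs2 : ρ2.sum = m := by omega
    have hr1 := replicate_six hk6 hb1
    have hr2 := replicate_six hk6 hb2
    have hc1 : 6 * ρ1.card = m := by
      have := congrArg Multiset.sum hr1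
      rw [hs1, Multiset.sum_replicate, smul_eq_mul] at this; omega
    have hc2 : 6 * ρ2.card = m := by
      have := congrArg Multiset.sum hr2
      rw [hs2, Multiset.sum_replicate, smul_eq_mul] at this; omega
    have hcc : ρ1.card = ρ2.card := by omega
    refine ⟨by omega, by omega, by omega, by omega, ?_⟩
    rw [hr1, hr2, hcc]
  · -- 5c diagonal (k ≥ 7, part k present)
    have hz1 : a1 = 0 ∧ b1 = 0 ∧ c1 = 0 ∧ d1 = 0 := by omega
    have hz2 : a2 = 0 ∧ b2 = 0 ∧ c2 = 0 ∧ d2 = 0 := by omega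
    have hs1 : ρ1.sum = m := by omega
    have hs2 : ρ2.sum = m := by omega
    have hne1 : ρ1 ≠ 0 := by rintro rfl; simp at hs1; omega
    have hne2 : ρ2 ≠ 0 := by rintro rfl; simp at hs2; omega
    have hsle1 : ρ1.sup ≤ k := Multiset.sup_le.2 fun b hb => (hb1 b hb).2
    have hsle2 : ρ2.sup ≤ k := Multiset.sup_le.2 fun b hb => (hb2 b hb).2
    have hk1 : k ∈ ρ1 := by
      have : ρ1.sup = k := by omega
      exact this ▸ sup_mem hne1
    have hk2 : k ∈ ρ2 := by
      have : ρ2.sup = k := by omega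
      exact this ▸ sup_mem hne2
    have he : ρ1.erase k = ρ2.erase k := (Multiset.cons_inj_right _).1 e5
    exact ⟨by omega, by omega, by omega, by omega, cons_erase_inj hk1 hk2 he⟩


lemma validT_sum {k m : ℕ} {t : ℕ × ℕ × ℕ × ℕ × Multiset ℕ} (v : ValidT k m t) :
    2*t.1 + 3*t.2.1 + 4*t.2.2.1 + 5*t.2.2.2.1 + t.2.2.2.2.sum = m := v.1

lemma validT_mem {k m : ℕ} {t : ℕ × ℕ × ℕ × ℕ × Multiset ℕ} (v : ValidT k m t) :
    ∀ i ∈ t.2.2.2.2, 6 ≤ i ∧ i ≤ k := v.2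

lemma out_bounds {k m : ℕ} (hk : 5 ≤ k) {t : ℕ × ℕ × ℕ × ℕ × Multiset ℕ}
    (v : ValidT k m t) :
    ∀ i ∈ out t.1 t.2.1 t.2.2.1 t.2.2.2.1 t.2.2.2.2, 2 ≤ i ∧ i ≤ k := by
  intro i hi
  rcases mem_out hi with h | h
  · exact ⟨h.1, le_trans h.2 hk⟩
  · have := validT_mem v i h
    omega

lemma out_inj {t1 t2 : ℕ × ℕ × ℕ × ℕ × Multiset ℕ}
    (h1 : ∀ i ∈ t1.2.2.2.2, 6 ≤ i) (h2 : ∀ i ∈ t2.2.2.2.2, 6 ≤ i)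
    (h : out t1.1 t1.2.1 t1.2.2.1 t1.2.2.2.1 t1.2.2.2.2
       = out t2.1 t2.2.1 t2.2.2.1 t2.2.2.2.1 t2.2.2.2.2) : t1 = t2 := by
  obtain ⟨a1, b1, c1, d1, ρ1⟩ := t1
  obtain ⟨a2, b2, c2, d2, ρ2⟩ := t2
  simp only at h h1 h2
  obtain ⟨ca1, cb1, cc1, cd1⟩ := count_out_small (a := a1) (b := b1) (c := c1) (d := d1) h1
  obtain ⟨ca2, cb2, cc2, cd2⟩ := count_out_small (a := a2) (b := b2) (c := c2) (d := d2) h2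
  have hf1 := filter_out (a := a1) (b := b1) (c := c1) (d := d1) h1
  have hf2 := filter_out (a := a2) (b := b2) (c := c2) (d := d2) h2
  simp only [Prod.mk.injEq]
  refine ⟨?_, ?_, ?_, ?_, ?_⟩
  · rw [← ca1, ← ca2, h]
  · rw [← cb1, ← cb2, h]
  · rw [← cc1, ← cc2, h]
  · rw [← cd1, ← cd2, h]
  · rw [← hf1, ← hf2, h]

lemma valid_tup {k m : ℕ} (p : m.Partition) (hp : ∀ i ∈ p.parts, 2 ≤ i ∧ i ≤ k) :
    Valid k m (p.parts.count 2) (p.parts.count 3) (p.parts.count 4) (p.parts.count 5)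
      (p.parts.filter (6 ≤ ·)) := by
  constructor
  · have hd := decomp p.parts (fun i hi => (hp i hi).1)
    have hs := congrArg Multiset.sum hd
    rw [out_sum, p.parts_sum] at hs
    exact hs
  · intro i hi
    simp only [Multiset.mem_filter] at hi
    exact ⟨hi.2, (hp i hi.1).2⟩

def Fmap (k m : ℕ) (hk : 5 ≤ k) (hm : 13 ≤ m)
    (p : {p : m.Partition // ∀ i ∈ p.parts, 2 ≤ i ∧ i ≤ k}) :
    {q : (m+1).Partition // ∀ i ∈ q.parts, 2 ≤ i ∧ i ≤ k} :=
  let t := step k (p.1.parts.count 2) (p.1.parts.count 3) (p.1.parts.count 4)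
      (p.1.parts.count 5) (p.1.parts.filter (6 ≤ ·))
  have hv : ValidT k (m+1) t := valid_step hk hm (valid_tup p.1 p.2)
  ⟨⟨out t.1 t.2.1 t.2.2.1 t.2.2.2.1 t.2.2.2.2,
    fun {i} hi => by have := out_bounds hk hv i hi; omega,
    by rw [out_sum]; exact validT_sum hv⟩,
   out_bounds hk hv⟩

lemma Fmap_inj (k m : ℕ) (hk : 5 ≤ k) (hm : 13 ≤ m) :
    Function.Injective (Fmap k m hk hm) := by
  rintro ⟨p1, hp1⟩ ⟨p2, hp2⟩ h
  have hparts := congrArg (fun q => q.1.parts) h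
  simp only [Fmap] at hparts
  have hv1 : ValidT k (m+1) (step k (p1.parts.count 2) (p1.parts.count 3)
      (p1.parts.count 4) (p1.parts.count 5) (p1.parts.filter (6 ≤ ·))) :=
    valid_step hk hm (valid_tup p1 hp1)
  have hv2 : ValidT k (m+1) (step k (p2.parts.count 2) (p2.parts.count 3)
      (p2.parts.count 4) (p2.parts.count 5) (p2.parts.filter (6 ≤ ·))) :=
    valid_step hk hm (valid_tup p2 hp2)
  have hstep := out_inj (fun i hi => (validT_mem hv1 i hi).1)
    (fun i hi => (validT_mem hv2 i hi).1) hparts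
  obtain ⟨e1, e2, e3, e4, e5⟩ := step_inj hm (valid_tup p1 hp1) (valid_tup p2 hp2) hstep
  have hpp : p1.parts = p2.parts := by
    rw [← decomp p1.parts (fun i hi => (hp1 i hi).1),
        ← decomp p2.parts (fun i hi => (hp2 i hi).1), e1, e2, e3, e4, e5]
  exact Subtype.ext (Nat.Partition.ext hpp)

lemma pCount_le (k m : ℕ) (hk : 5 ≤ k) (hm : 13 ≤ m) : pCount k m ≤ pCount k (m+1) :=
  Nat.card_le_card_of_injective (Fmap k m hk hm) (Fmap_inj k m hk hm)

end PkAux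


/-- For `k ≥ 5` and `n ≥ 14`, `p_k(n) ≥ p_k(n-1)`. -/
theorem pk_monotone (k n : ℕ) (hk : 5 ≤ k) (hn : 14 ≤ n) :
    pCount k (n - 1) ≤ pCount k n := by
  obtain ⟨m, rfl⟩ : ∃ m, n = m + 1 := ⟨n - 1, by omega⟩
  simpa using PkAux.pCount_le k m hk (by omega)
end

section
/- Let d_4(n) = p_4(n) - p_4(n-1), where p_4(n) counts partitions of n into parts from {2,3,4}. Then d_4(n) ≥ 0 when n is even; d_4(n) = -floor((n+11)/12) when n is odd and n is not congruent to 3 mod 12; and d_4(n) = -floor(n/12) when n ≡ 3 (mod 12). -/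
/-- `d₄(n) = p₄(n) - p₄(n-1)` as an integer. -/
noncomputable def d4 (n : ℕ) : ℤ := (pCount 4 n : ℤ) - (pCount 4 (n - 1) : ℤ)

/-!
A partition of `n` into parts `2, 3, 4` is a solution of `2a + 3b + 4c = n`. Splitting off the
solutions with `c = 0` gives `p₄(n + 4) = p₄(n) + r(n + 4)`, where `r(m)` counts the solutions of
`2a + 3b = m`, and the same trick on `b` gives `r(m) = ⌊m/6⌋ + 1` for even `m`, `⌊(m+3)/6⌋` for
odd `m`. Hence `d₄(n + 12) - d₄(n)` is an explicit sum of six values of `r`: it is `-1` for odd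
`n` and nonnegative for even `n ≥ 2`, and the theorem follows by induction from `n ≤ 12`.
-/

def reps23 (m : ℕ) : Finset (ℕ × ℕ) :=
  (Finset.range (m + 1) ×ˢ Finset.range (m + 1)).filter fun x => 2 * x.1 + 3 * x.2 = m

def reps234 (n : ℕ) : Finset (ℕ × ℕ × ℕ) :=
  (Finset.range (n + 1) ×ˢ Finset.range (n + 1) ×ˢ Finset.range (n + 1)).filter
    fun x => 2 * x.1 + 3 * x.2.1 + 4 * x.2.2 = n

lemma mem_reps23 {m : ℕ} {x : ℕ × ℕ} : x ∈ reps23 m ↔ 2 * x.1 + 3 * x.2 = m := by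
  simp only [reps23, Finset.mem_filter, Finset.mem_product, Finset.mem_range]
  omega

lemma mem_reps234 {n : ℕ} {x : ℕ × ℕ × ℕ} :
    x ∈ reps234 n ↔ 2 * x.1 + 3 * x.2.1 + 4 * x.2.2 = n := by
  simp only [reps234, Finset.mem_filter, Finset.mem_product, Finset.mem_range]
  omega

lemma sum_replicate_two_three_four (a b c : ℕ) :
    (Multiset.replicate a 2 + Multiset.replicate b 3 + Multiset.replicate c 4).sum
      = 2 * a + 3 * b + 4 * c := by
  simp only [Multiset.sum_add, Multiset.sum_replicate, smul_eq_mul]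
  ring

lemma eq_replicate_count_two_three_four {s : Multiset ℕ} (hs : ∀ i ∈ s, 2 ≤ i ∧ i ≤ 4) :
    s = Multiset.replicate (s.count 2) 2 + Multiset.replicate (s.count 3) 3 +
      Multiset.replicate (s.count 4) 4 := by
  ext i
  simp only [Multiset.count_add, Multiset.count_replicate]
  by_cases hi : i ∈ s
  · obtain rfl | rfl | rfl : i = 2 ∨ i = 3 ∨ i = 4 := by have := hs i hi; omega
    all_goals simp
  · rw [Multiset.count_eq_zero_of_notMem hi]
    split_ifs <;> simp_all

lemma pCount_four_eq_card_reps234 (n : ℕ) : pCount 4 n = (reps234 n).card := by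
  rw [pCount, ← Nat.card_eq_finsetCard]
  refine Nat.card_congr
    { toFun := fun p => ⟨(p.1.parts.count 2, p.1.parts.count 3, p.1.parts.count 4), ?_⟩
      invFun := fun x =>
        ⟨⟨Multiset.replicate x.1.1 2 + Multiset.replicate x.1.2.1 3 +
            Multiset.replicate x.1.2.2 4, ?_, ?_⟩, ?_⟩
      left_inv := fun p => Subtype.ext <| Nat.Partition.ext
        (eq_replicate_count_two_three_four p.2).symm
      right_inv := fun ⟨⟨a, b, c⟩, _⟩ => Subtype.ext <| by simp [Multiset.count_replicate] }
  · rw [mem_reps234, ← sum_replicate_two_three_four, ← eq_replicate_count_two_three_four p.2]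
    exact p.1.parts_sum
  · intro i hi
    simp only [Multiset.mem_add, Multiset.mem_replicate] at hi
    omega
  · rw [sum_replicate_two_three_four]
    exact mem_reps234.mp x.2
  · intro i hi
    simp only [Multiset.mem_add, Multiset.mem_replicate] at hi
    omega

lemma card_reps23_add_three (m : ℕ) :
    (reps23 (m + 3)).card = (reps23 m).card + if m % 2 = 1 then 1 else 0 := by
  rw [← Finset.card_filter_add_card_filter_not (p := fun x : ℕ × ℕ => 1 ≤ x.2)]
  congr 1
  · refine Finset.card_nbij' (fun x => (x.1, x.2 - 1)) (fun y => (y.1, y.2 + 1)) ?_ ?_ ?_ ?_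
    all_goals
      intro x h
      simp only [Finset.mem_coe, Finset.mem_filter, mem_reps23, Prod.ext_iff, true_and] at h ⊢
      omega
  · split_ifs with hm
    · rw [Finset.card_eq_one]
      refine ⟨((m + 3) / 2, 0), Finset.ext fun ⟨a, b⟩ => ?_⟩
      simp only [Finset.mem_filter, mem_reps23, Finset.mem_singleton, Prod.mk.injEq]
      omega
    · rw [Finset.card_eq_zero, Finset.filter_eq_empty_iff]
      rintro ⟨a, b⟩ h
      rw [mem_reps23] at h
      omega

lemma card_reps23 (m : ℕ) :
    (reps23 m).card = if m % 2 = 0 then m / 6 + 1 else (m + 3) / 6 := by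
  induction m using Nat.strong_induction_on with
  | _ m ih =>
    rcases lt_or_ge m 3 with hm | hm
    · interval_cases m <;> decide
    · obtain ⟨k, rfl⟩ := Nat.exists_eq_add_of_le' hm
      rw [card_reps23_add_three, ih k (by omega)]
      split_ifs <;> omega

lemma card_reps234_add_four (n : ℕ) :
    (reps234 (n + 4)).card = (reps234 n).card + (reps23 (n + 4)).card := by
  rw [← Finset.card_filter_add_card_filter_not (p := fun x : ℕ × ℕ × ℕ => 1 ≤ x.2.2)]
  congr 1
  · refine Finset.card_nbij' (fun x => (x.1, x.2.1, x.2.2 - 1)) (fun y => (y.1, y.2.1, y.2.2 + 1))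
      ?_ ?_ ?_ ?_
    all_goals
      intro x h
      simp only [Finset.mem_coe, Finset.mem_filter, mem_reps234, Prod.ext_iff, true_and] at h ⊢
      omega
  · refine Finset.card_nbij' (fun x => (x.1, x.2.1)) (fun y => (y.1, y.2, 0)) ?_ ?_ ?_ ?_
    all_goals
      intro x h
      simp only [Finset.mem_coe, Finset.mem_filter, mem_reps234, mem_reps23, Prod.ext_iff,
        true_and] at h ⊢ <;> omega

lemma d4_add_four {n : ℕ} (hn : 1 ≤ n) :
    d4 (n + 4) = d4 n + (reps23 (n + 4)).card - (reps23 (n + 3)).card := by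
  obtain ⟨k, rfl⟩ := Nat.exists_eq_add_of_le' hn
  simp only [d4, pCount_four_eq_card_reps234, Nat.add_sub_cancel,
    show k + 1 + 4 - 1 = k + 4 by omega, card_reps234_add_four]
  push_cast
  ring

lemma d4_add_twelve {n : ℕ} (hn : 1 ≤ n) :
    d4 (n + 12) = d4 n + (reps23 (n + 4)).card + (reps23 (n + 8)).card + (reps23 (n + 12)).card
      - (reps23 (n + 3)).card - (reps23 (n + 7)).card - (reps23 (n + 11)).card := by
  rw [d4_add_four (n := n + 8) (by omega), d4_add_four (n := n + 4) (by omega), d4_add_four hn]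
  ring

lemma d4_add_twelve_of_odd {n : ℕ} (hn : n % 2 = 1) : d4 (n + 12) = d4 n - 1 := by
  rw [d4_add_twelve (by omega)]
  simp only [card_reps23]
  split_ifs <;> omega

lemma d4_le_d4_add_twelve_of_even {n : ℕ} (hn : n % 2 = 0) (hn₀ : n ≠ 0) :
    d4 n ≤ d4 (n + 12) := by
  rw [d4_add_twelve (by omega)]
  simp only [card_reps23]
  split_ifs <;> omega

set_option maxRecDepth 8000 in
/-- `d₄(n) ≥ 0` for even `n`; `d₄(n) = -⌊(n+11)/12⌋` for odd `n` with `n ≢ 3 (mod 12)`;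
and `d₄(n) = -⌊n/12⌋` when `n ≡ 3 (mod 12)`. -/
theorem d4_formula (n : ℕ) :
    (Even n → 0 ≤ d4 n) ∧
    (Odd n → n % 12 ≠ 3 → d4 n = -(((n + 11) / 12 : ℕ) : ℤ)) ∧
    (n % 12 = 3 → d4 n = -((n / 12 : ℕ) : ℤ)) := by
  simp only [Nat.even_iff, Nat.odd_iff]
  induction n using Nat.strong_induction_on with
  | _ n ih =>
    rcases lt_or_ge n 13 with hn | hn
    · simp only [d4, pCount_four_eq_card_reps234]
      interval_cases n <;> decide
    · obtain ⟨m, rfl⟩ : ∃ m, n = m + 12 := ⟨n - 12, by omega⟩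
      obtain ⟨hev, hodd, hthree⟩ := ih m (by omega)
      refine ⟨fun he => ?_, fun ho h3 => ?_, fun h3 => ?_⟩
      · linarith [hev (by omega), d4_le_d4_add_twelve_of_even (n := m) (by omega) (by omega)]
      · rw [d4_add_twelve_of_odd (by omega), hodd (by omega) (by omega)]
        omega
      · rw [d4_add_twelve_of_odd (by omega), hthree (by omega)]
        omega
end

section
/- Let pp_2(n) denote the number of pairs (α,β) where α is a partition into parts equal to 2 and β is a partition into parts from {2,3}, with |α|+|β| = n. Then pp_2(n) ≥ pp_2(n-1) whenever n ≥ 2 is even, and pp_2(n) - pp_2(n-1) = -⌈n/6⌉ whenever n is odd. -/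
/-- `ppCount k n` is the number of pairs `(α, β)` of partitions with `|α| + |β| = n`,
where every part of `α` lies in `{2, …, k}` and every part of `β` lies in `{2, …, k+1}`. -/
noncomputable def ppCount (k n : ℕ) : ℕ :=
  ∑ i ∈ Finset.range (n + 1), pCount k i * pCount (k + 1) (n - i)

lemma pCount_two (n : ℕ) : pCount 2 n = if n % 2 = 0 then 1 else 0 := by
  have e : {p : n.Partition // ∀ i ∈ p.parts, 2 ≤ i ∧ i ≤ 2} ≃ {a : ℕ // 2 * a = n} :=
  { toFun := fun p => ⟨Multiset.card p.1.parts, by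
      have h : p.1.parts = Multiset.replicate (Multiset.card p.1.parts) 2 := by
        rw [Multiset.eq_replicate_card]
        intro b hb; have := p.2 b hb; omega
      have hs := p.1.parts_sum
      have hc := congrArg Multiset.sum h
      rw [hs, Multiset.sum_replicate, smul_eq_mul] at hc
      omega⟩
    invFun := fun a => ⟨⟨Multiset.replicate a.1 2,
      fun hi => by rw [Multiset.eq_of_mem_replicate hi]; omega,
      by have := a.2; rw [Multiset.sum_replicate, smul_eq_mul]; omega⟩,
      fun i hi => by rw [Multiset.eq_of_mem_replicate hi]; omega⟩
    left_inv := fun p => by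
      apply Subtype.ext; apply Nat.Partition.ext
      symm
      rw [Multiset.eq_replicate_card]
      intro b hb; have := p.2 b hb; omega
    right_inv := fun a => by
      apply Subtype.ext; simp }
  rw [pCount, Nat.card_congr e]
  by_cases h : n % 2 = 0
  · haveI : Unique {a : ℕ // 2 * a = n} :=
      ⟨⟨⟨n / 2, by omega⟩⟩, fun b => Subtype.ext (by have := b.2; simp only; omega)⟩
    simp [h, Nat.card_unique]
  · haveI : IsEmpty {a : ℕ // 2 * a = n} := ⟨fun a => by have := a.2; omega⟩
    simp [h, Nat.card_of_isEmpty]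

lemma parts_decomp {n : ℕ} (p : n.Partition) (h : ∀ i ∈ p.parts, 2 ≤ i ∧ i ≤ 3) :
    p.parts = Multiset.replicate (p.parts.count 2) 2 + Multiset.replicate (p.parts.count 3) 3 := by
  ext a
  rw [Multiset.count_add, Multiset.count_replicate, Multiset.count_replicate]
  by_cases h2 : a = 2
  · subst h2; simp
  by_cases h3 : a = 3
  · subst h3; simp
  have : a ∉ p.parts := fun ha => by have := h a ha; omega
  simp [h2, h3, Ne.symm h2, Ne.symm h3, Multiset.count_eq_zero.2 this]

lemma pCount_three (n : ℕ) : pCount 3 n = if n = 1 then 0 else (n / 3 - n % 2) / 2 + 1 := by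
  have e1 : {p : n.Partition // ∀ i ∈ p.parts, 2 ≤ i ∧ i ≤ 3} ≃
      {x : ℕ × ℕ // 2 * x.1 + 3 * x.2 = n} :=
  { toFun := fun p => ⟨(p.1.parts.count 2, p.1.parts.count 3), by
      have hc := congrArg Multiset.sum (parts_decomp p.1 p.2)
      rw [p.1.parts_sum, Multiset.sum_add, Multiset.sum_replicate, Multiset.sum_replicate,
        smul_eq_mul, smul_eq_mul] at hc
      omega⟩
    invFun := fun x => ⟨⟨Multiset.replicate x.1.1 2 + Multiset.replicate x.1.2 3,
      fun hi => by
        rcases Multiset.mem_add.1 hi with h' | h' <;>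
          rw [Multiset.eq_of_mem_replicate h'] <;> omega,
      by
        rw [Multiset.sum_add, Multiset.sum_replicate, Multiset.sum_replicate,
          smul_eq_mul, smul_eq_mul]
        have := x.2; omega⟩,
      fun i hi => by
        rcases Multiset.mem_add.1 hi with h' | h' <;>
          rw [Multiset.eq_of_mem_replicate h'] <;> omega⟩
    left_inv := fun p => by
      apply Subtype.ext; apply Nat.Partition.ext
      exact (parts_decomp p.1 p.2).symm
    right_inv := fun x => by
      apply Subtype.ext
      simp [Multiset.count_replicate] }
  rw [pCount, Nat.card_congr e1]
  by_cases h1 : n = 1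
  · haveI : IsEmpty {x : ℕ × ℕ // 2 * x.1 + 3 * x.2 = n} :=
      ⟨fun x => by have := x.2; omega⟩
    rw [if_pos h1]
    exact Nat.card_of_isEmpty
  · have e2 : {x : ℕ × ℕ // 2 * x.1 + 3 * x.2 = n} ≃ Fin ((n / 3 - n % 2) / 2 + 1) :=
    { toFun := fun x => ⟨(x.1.2 - n % 2) / 2, by have := x.2; omega⟩
      invFun := fun j => ⟨((n - 3 * (n % 2 + 2 * j.1)) / 2, n % 2 + 2 * j.1),
        by have := j.2; omega⟩
      left_inv := fun x => by
        apply Subtype.ext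
        have := x.2
        dsimp only
        exact Prod.ext (by omega) (by omega)
      right_inv := fun j => by
        apply Fin.ext
        have := j.2
        simp only
        omega }
    rw [Nat.card_congr e2, Nat.card_eq_fintype_card, Fintype.card_fin]
    simp [h1]

lemma ppCount_rec (n : ℕ) : ppCount 2 (n + 2) = ppCount 2 n + pCount 3 (n + 2) := by
  rw [ppCount, ppCount]
  rw [Finset.sum_range_succ' _ (n + 2), Finset.sum_range_succ' _ (n + 1)]
  have h0 : pCount 2 0 = 1 := by rw [pCount_two]; norm_num
  have h1 : pCount 2 1 = 0 := by rw [pCount_two]; norm_num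
  have hstep : ∀ i, pCount 2 (i + 1 + 1) = pCount 2 i := by
    intro i
    rw [pCount_two, pCount_two]
    have : (i + 1 + 1) % 2 = i % 2 := by omega
    rw [this]
  simp only [h0, h1, hstep, Nat.sub_zero, one_mul, zero_mul, add_zero]
  have h3 : (2 : ℕ) + 1 = 3 := rfl
  rw [h3]
  have hc : ∀ i ∈ Finset.range (n + 1), pCount 2 i * pCount 3 (n + 2 - (i + 1 + 1))
      = pCount 2 i * pCount 3 (n - i) := by
    intro i hi
    congr 2
    omega
  rw [Finset.sum_congr rfl hc]

lemma ppCount_vals : ppCount 2 0 = 1 ∧ ppCount 2 1 = 0 ∧ ppCount 2 2 = 2 := by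
  have h3 : (2 : ℕ) + 1 = 3 := rfl
  refine ⟨?_, ?_, ?_⟩ <;>
    · rw [ppCount]
      simp only [Finset.sum_range_succ, Finset.sum_range_zero, h3]
      norm_num [pCount_two, pCount_three]

lemma key : ∀ m : ℕ,
    ((m % 2 = 0 → (ppCount 2 (m + 1) : ℤ) - ppCount 2 m = -((m / 6 : ℕ) + 1 : ℤ)) ∧
      (m % 2 = 1 → ppCount 2 m ≤ ppCount 2 (m + 1))) ∧
    (((m + 1) % 2 = 0 → (ppCount 2 (m + 2) : ℤ) - ppCount 2 (m + 1) = -(((m + 1) / 6 : ℕ) + 1 : ℤ)) ∧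
      ((m + 1) % 2 = 1 → ppCount 2 (m + 1) ≤ ppCount 2 (m + 2))) := by
  intro m
  induction m with
  | zero =>
    obtain ⟨v0, v1, v2⟩ := ppCount_vals
    refine ⟨⟨fun _ => ?_, fun h => by omega⟩, ⟨fun h => by omega, fun _ => ?_⟩⟩
    · rw [v0, v1]; norm_num
    · rw [v1, v2]; omega
  | succ k ih =>
    refine ⟨ih.2, ?_⟩
    have r1 : ppCount 2 (k + 3) = ppCount 2 (k + 1) + pCount 3 (k + 3) := ppCount_rec (k + 1)
    have r2 : ppCount 2 (k + 2) = ppCount 2 k + pCount 3 (k + 2) := ppCount_rec k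
    have p2 : pCount 3 (k + 2) = ((k + 2) / 3 - (k + 2) % 2) / 2 + 1 := by
      rw [pCount_three, if_neg (by omega)]
    have p3 : pCount 3 (k + 3) = ((k + 3) / 3 - (k + 3) % 2) / 2 + 1 := by
      rw [pCount_three, if_neg (by omega)]
    constructor
    · intro hpar
      have hk : k % 2 = 0 := by omega
      have ih1 := ih.1.1 hk
      have e1 : ((k + 2) / 3 - (k + 2) % 2) / 2 = (k + 2) / 6 := by omega
      have e2 : ((k + 3) / 3 - (k + 3) % 2) / 2 = k / 6 := by omega
      rw [e1] at p2
      rw [e2] at p3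
      rw [show k + 1 + 1 = k + 2 from rfl, show k + 2 + 1 = k + 3 from rfl, r1, r2, p2, p3]
      omega
    · intro hpar
      have hk : k % 2 = 1 := by omega
      have ih2 := ih.1.2 hk
      have e1 : ((k + 2) / 3 - (k + 2) % 2) / 2 ≤ ((k + 3) / 3 - (k + 3) % 2) / 2 := by omega
      rw [show k + 1 + 1 = k + 2 from rfl, show k + 2 + 1 = k + 3 from rfl, r1, r2, p2, p3]
      omega

/-- `pp₂(n) ≥ pp₂(n-1)` whenever `n ≥ 2` is even, and
`pp₂(n) - pp₂(n-1) = -⌈n/6⌉` whenever `n` is odd. -/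
theorem pp2_difference :
    (∀ n : ℕ, 2 ≤ n → Even n → ppCount 2 (n - 1) ≤ ppCount 2 n) ∧
    (∀ n : ℕ, Odd n →
      (ppCount 2 n : ℤ) - (ppCount 2 (n - 1) : ℤ) = -(((n + 5) / 6 : ℕ) : ℤ)) := by
  constructor
  · intro n hn he
    have h2 : n % 2 = 0 := Nat.even_iff.mp he
    have h := (key (n - 1)).1.2 (by omega)
    rwa [show n - 1 + 1 = n from by omega] at h
  · intro n ho
    have h1 : n % 2 = 1 := Nat.odd_iff.mp ho
    have h := (key (n - 1)).1.1 (by omega)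
    rw [show n - 1 + 1 = n from by omega] at h
    rw [h]
    have : (n + 5) / 6 = (n - 1) / 6 + 1 := by omega
    rw [this]
    push_cast
    ring
end

section
/- Let pp_3(n) be the number of pairs (α,β) of partitions with |α|+|β|=n where the parts of α lie in {2,3} and the parts of β lie in {2,3,4}. Then pp_3(n) ≥ pp_3(n-1) for all n ≥ 2 with n ≠ 7, and pp_3(n) - pp_3(n-1) ≥ (n-15)/2 for all odd n ≥ 17. -/
open PowerSeries

theorem PowerSeries.one_sub_X_pow_mul_mk {R : Type*} [Ring R] {k : ℕ} {f g : ℕ → R}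
    (hlt : ∀ n < k, f n = g n) (hadd : ∀ n, f (n + k) = f n + g (n + k)) :
    (1 - X ^ k) * mk f = mk g := by
  ext n
  rw [sub_mul, one_mul, map_sub, coeff_X_pow_mul', coeff_mk, coeff_mk]
  split_ifs with hkn
  · obtain ⟨m, rfl⟩ := Nat.exists_eq_add_of_le' hkn
    rw [Nat.add_sub_cancel, coeff_mk, hadd, add_sub_cancel_left]
  · rw [sub_zero, hlt n (by omega), coeff_mk]

theorem pCount_one (n : ℕ) : pCount 1 n = if n = 0 then 1 else 0 := by
  split_ifs with hn
  · subst hn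
    exact Nat.card_eq_one_iff_unique.mpr ⟨inferInstance, ⟨⟨default, by simp⟩⟩⟩
  · refine @Nat.card_of_isEmpty _ ⟨fun ⟨p, hp⟩ => ?_⟩
    obtain ⟨i, hi⟩ := Multiset.exists_mem_of_ne_zero (s := p.parts) fun h0 =>
      hn (by rw [← p.parts_sum, h0, Multiset.sum_zero])
    have := hp i hi
    omega

theorem pCount_succ_of_lt {k n : ℕ} (hn : n < k + 1) : pCount (k + 1) n = pCount k n :=
  Nat.card_congr <| Equiv.subtypeEquivRight fun p =>
    forall₂_congr fun i hi => by have := p.le_of_mem_parts hi; omega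

theorem pCount_succ_add {k : ℕ} (hk : 1 ≤ k) (n : ℕ) :
    pCount (k + 1) (n + (k + 1)) = pCount (k + 1) n + pCount k (n + (k + 1)) := by
  set m := n + (k + 1)
  have hpart : ∀ q : (m - (k + 1)).Partition, (∀ i ∈ q.parts, 2 ≤ i ∧ i ≤ k + 1) ↔
      ∀ i ∈ ((Nat.Partition.partitionWithPartEquiv (by omega) (by omega)).symm q).1.parts,
        2 ≤ i ∧ i ≤ k + 1 := fun q => by
    simp only [Nat.Partition.partitionWithPartEquiv_symm_apply_parts, Multiset.forall_mem_cons]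
    exact (and_iff_right (by omega)).symm
  have withPart : {x : {p : m.Partition // ∀ i ∈ p.parts, 2 ≤ i ∧ i ≤ k + 1} // k + 1 ∈ x.1.parts}
      ≃ {q : (m - (k + 1)).Partition // ∀ i ∈ q.parts, 2 ≤ i ∧ i ≤ k + 1} :=
    ((Equiv.subtypeSubtypeEquivSubtypeInter _ _).trans
      ((Equiv.subtypeEquivRight fun _ => and_comm).trans
        (Equiv.subtypeSubtypeEquivSubtypeInter _ _).symm)).trans
      (Equiv.subtypeEquiv (Nat.Partition.partitionWithPartEquiv (by omega) (by omega)).symm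
        hpart).symm
  have withoutPart :
      {x : {p : m.Partition // ∀ i ∈ p.parts, 2 ≤ i ∧ i ≤ k + 1} // k + 1 ∉ x.1.parts}
      ≃ {p : m.Partition // ∀ i ∈ p.parts, 2 ≤ i ∧ i ≤ k} :=
    (Equiv.subtypeSubtypeEquivSubtypeInter (fun p : m.Partition => ∀ i ∈ p.parts, 2 ≤ i ∧ i ≤ k + 1)
      fun p => k + 1 ∉ p.parts).trans <| Equiv.subtypeEquivRight fun p => by
      constructor
      · rintro ⟨hp, hnot⟩ i hi
        have : i ≠ k + 1 := fun e => hnot (e ▸ hi)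
        have := hp i hi
        omega
      · intro hp
        exact ⟨fun i hi => by have := hp i hi; omega, fun hk1 => by have := hp _ hk1; omega⟩
  rw [pCount, ← Nat.card_congr (Equiv.sumCompl fun x => k + 1 ∈ x.1.parts), Nat.card_sum,
    Nat.card_congr withPart, Nat.card_congr withoutPart, Nat.add_sub_cancel]
  rfl

noncomputable def pGenFun (k : ℕ) : ℤ⟦X⟧ := mk fun n => (pCount k n : ℤ)

theorem pGenFun_one : pGenFun 1 = 1 := by
  ext n
  simp [pGenFun, pCount_one, coeff_one]

theorem one_sub_X_pow_mul_pGenFun {k : ℕ} (hk : 1 ≤ k) :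
    (1 - X ^ (k + 1)) * pGenFun (k + 1) = pGenFun k :=
  one_sub_X_pow_mul_mk (fun _ hn => by rw [pCount_succ_of_lt hn])
    fun n => by rw [pCount_succ_add hk]; push_cast; ring

theorem ppCount_eq_coeff_mul (k n : ℕ) :
    (ppCount k n : ℤ) = coeff n (pGenFun k * pGenFun (k + 1)) := by
  rw [coeff_mul, Finset.Nat.sum_antidiagonal_eq_sum_range_succ_mk, ppCount]
  push_cast
  simp [pGenFun]

namespace PP3

def c (n : ℕ) : ℤ := if n % 3 = 1 then -1 else 1

def h : ℕ → ℤ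
  | n + 4 => h n + c (n + 4)
  | n => c n

def v : ℕ → ℤ
  | n + 6 => v n + h (n + 6)
  | n => h n

def d : ℕ → ℤ
  | n + 2 => d n + v (n + 2)
  | n => v n

theorem one_sub_X_pow_mul_mk_c : (1 - X ^ 3) * mk c = 1 - X + X ^ 2 := by
  refine (one_sub_X_pow_mul_mk (g := fun n => coeff n (1 - X + X ^ 2 : ℤ⟦X⟧)) ?_ ?_).trans
    (by ext; simp)
  · intro n hn
    interval_cases n <;> simp [c, coeff_X, coeff_one, coeff_X_pow]
  · intro n
    simp [c, coeff_X, coeff_one, coeff_X_pow]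

theorem one_sub_X_pow_mul_mk_h : (1 - X ^ 4) * mk h = mk c :=
  one_sub_X_pow_mul_mk (by decide) fun _ => rfl

theorem one_sub_X_pow_mul_mk_v : (1 - X ^ 6) * mk v = mk h :=
  one_sub_X_pow_mul_mk (by decide) fun _ => rfl

theorem one_sub_X_pow_mul_mk_d : (1 - X ^ 2) * mk d = mk v :=
  one_sub_X_pow_mul_mk (by decide) fun _ => rfl

theorem mk_d_eq_one_sub_X_mul : mk d = (1 - X) * (pGenFun 3 * pGenFun 4) := by
  have hd : (1 - X ^ 3) * (1 - X ^ 4) * (1 - X ^ 6) * (1 - X ^ 2) * mk d = 1 - X + X ^ 2 := by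
    rw [mul_assoc, mul_assoc, mul_assoc, one_sub_X_pow_mul_mk_d, one_sub_X_pow_mul_mk_v,
      one_sub_X_pow_mul_mk_h, one_sub_X_pow_mul_mk_c]
  have e2 : (1 - X ^ 2) * pGenFun 2 = 1 := pGenFun_one ▸ one_sub_X_pow_mul_pGenFun le_rfl
  have e3 := one_sub_X_pow_mul_pGenFun (k := 2) (by norm_num)
  have e4 := one_sub_X_pow_mul_pGenFun (k := 3) (by norm_num)
  set P₃ := pGenFun 3
  have hG : (1 - X ^ 3) * (1 - X ^ 4) * (1 - X ^ 6) * (1 - X ^ 2) * ((1 - X) * (P₃ * pGenFun 4))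
      = 1 - X + X ^ 2 := by
    linear_combination ((1 - X ^ 3) * (1 - X ^ 6) * (1 - X ^ 2) * (1 - X) * P₃) * e4
      + ((1 - X ^ 6) * (1 - X ^ 2) * (1 - X) * P₃ + (1 + X ^ 3) * (1 - X)) * e3
      + ((1 - X ^ 6) * (1 - X) * P₃ + (1 - X + X ^ 2)) * e2
  refine mul_left_cancel₀ (fun h0 => ?_) (hd.trans hG.symm)
  simpa using congrArg constantCoeff h0

theorem ppCount_succ_sub_ppCount (n : ℕ) :
    (ppCount 3 (n + 1) : ℤ) - ppCount 3 n = d (n + 1) := by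
  rw [ppCount_eq_coeff_mul, ppCount_eq_coeff_mul, ← coeff_mk (n + 1) d, mk_d_eq_one_sub_X_mul,
    sub_mul, one_mul, map_sub, coeff_succ_X_mul]

theorem h_add_twelve_mul (r q : ℕ) : h (r + 12 * q) = h r + q := by
  induction q with
  | zero => simp
  | succ q ih =>
    have step : ∀ m, h (m + 4) = h m + c (m + 4) := fun _ => rfl
    rw [show r + 12 * (q + 1) = r + 12 * q + 8 + 4 by ring, step, step (r + 12 * q + 4), step, ih]
    simp only [c]
    push_cast
    split_ifs <;> omega

theorem div_twelve_sub_le_h (n : ℕ) :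
    ((n / 12 : ℕ) : ℤ) - (if n % 12 = 1 then 1 else 0) ≤ h n := by
  have table : ∀ r < 12, (if r = 1 then -1 else 0) ≤ h r := by decide
  have := table (n % 12) (Nat.mod_lt _ (by norm_num))
  rw [← Nat.mod_add_div n 12, h_add_twelve_mul]
  simp only [Nat.mod_add_div]
  split_ifs at * <;> omega

theorem h_nonneg {n : ℕ} (hn : n ≠ 1) : 0 ≤ h n := by
  have := div_twelve_sub_le_h n
  split_ifs at this <;> omega

theorem one_le_h {n : ℕ} (hn : 19 ≤ n) : 1 ≤ h n := by
  have := div_twelve_sub_le_h n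
  split_ifs at this <;> omega

theorem v_nonneg {n : ℕ} (h1 : n ≠ 1) (h7 : n ≠ 7) (h13 : n ≠ 13) : 0 ≤ v n := by
  induction n using Nat.strong_induction_on with
  | _ n ih =>
    rcases lt_or_ge n 24 with hn | hn
    · have table : ∀ n < 24, n ≠ 1 → n ≠ 7 → n ≠ 13 → 0 ≤ v n := by decide
      exact table n hn h1 h7 h13
    · obtain ⟨m, rfl⟩ := Nat.exists_eq_add_of_le' (show 6 ≤ n by omega)
      rw [show v (m + 6) = v m + h (m + 6) from rfl]
      have := ih m (by omega) (by omega) (by omega) (by omega)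
      have := h_nonneg (n := m + 6) (by omega)
      omega

theorem one_le_v {n : ℕ} (hn : 20 ≤ n) : 1 ≤ v n := by
  obtain ⟨m, rfl⟩ := Nat.exists_eq_add_of_le' (show 6 ≤ n by omega)
  rw [show v (m + 6) = v m + h (m + 6) from rfl]
  have := v_nonneg (n := m) (by omega) (by omega) (by omega)
  have := one_le_h (n := m + 6) (by omega)
  omega

theorem d_nonneg {n : ℕ} (h1 : n ≠ 1) (h7 : n ≠ 7) : 0 ≤ d n := by
  induction n using Nat.strong_induction_on with
  | _ n ih =>
    rcases lt_or_ge n 15 with hn | hn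
    · have table : ∀ n < 15, n ≠ 1 → n ≠ 7 → 0 ≤ d n := by decide
      exact table n hn h1 h7
    · obtain ⟨m, rfl⟩ := Nat.exists_eq_add_of_le' (show 2 ≤ n by omega)
      rw [show d (m + 2) = d m + v (m + 2) from rfl]
      have := ih m (by omega) (by omega) (by omega)
      have := v_nonneg (n := m + 2) (by omega) (by omega) (by omega)
      omega

theorem sub_div_two_le_d {n : ℕ} (hn : 17 ≤ n) : (((n - 15) / 2 : ℕ) : ℤ) ≤ d n := by
  induction n using Nat.strong_induction_on with
  | _ n ih =>
    rcases lt_or_ge n 22 with hn' | hn'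
    · have table : ∀ n < 22, 17 ≤ n → (((n - 15) / 2 : ℕ) : ℤ) ≤ d n := by decide
      exact table n hn' hn
    · obtain ⟨m, rfl⟩ := Nat.exists_eq_add_of_le' (show 2 ≤ n by omega)
      rw [show d (m + 2) = d m + v (m + 2) from rfl]
      have := ih m (by omega) (by omega)
      have := one_le_v (n := m + 2) (by omega)
      omega

end PP3

/-- `pp₃(n) ≥ pp₃(n-1)` for all `n ≥ 2` with `n ≠ 7`, and
`pp₃(n) - pp₃(n-1) ≥ (n-15)/2` for all odd `n ≥ 17`. -/
theorem pp3_difference :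
    (∀ n : ℕ, 2 ≤ n → n ≠ 7 → ppCount 3 (n - 1) ≤ ppCount 3 n) ∧
    (∀ n : ℕ, 17 ≤ n → Odd n →
      (((n - 15) / 2 : ℕ) : ℤ) ≤ (ppCount 3 n : ℤ) - (ppCount 3 (n - 1) : ℤ)) := by
  constructor
  · intro n h2 h7
    obtain ⟨m, rfl⟩ := Nat.exists_eq_add_of_le' (show 1 ≤ n by omega)
    have := PP3.ppCount_succ_sub_ppCount m
    have := PP3.d_nonneg (n := m + 1) (by omega) h7
    rw [Nat.add_sub_cancel]
    omega
  · intro n h17 _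
    obtain ⟨m, rfl⟩ := Nat.exists_eq_add_of_le' (show 1 ≤ n by omega)
    rw [Nat.add_sub_cancel, PP3.ppCount_succ_sub_ppCount]
    exact PP3.sub_div_two_le_d h17
end

section
/- For all k ≥ 4 and n ≥ 2, pp_k(n) ≥ pp_k(n-1); in particular pp_k(2k+7) ≥ pp_k(2k+6) + 1. -/
/-!
Write `c_L(n)` for the number of partitions of `n` into parts drawn from a list `L` of sizes
(repeated entries giving distinct colours) and `Δ_L(n) = c_L(n+1) - c_L(n)`. Generating functions
identify `pp_k` with `c_L` for `L = [2..k] ++ [2..k+1]`. Adding a part `a ≥ 2` gives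
`Δ_{a::L}(n) = Δ_L(n) + Δ_{a::L}(n-a)` with `Δ(-1) = 1` and `Δ(0) = -1`, so nonnegativity of `Δ`
on `n ≥ 1` survives as long as `Δ_L(a) ≥ 1`. Starting from `{2,3,5}`, whose jumps satisfy
`Δ(n+30) = Δ(n) + 1` and are checked on one period, the parts `4, 3, 4, 2` lead to `k = 4`, and
`k → k+1` adds `k+2` and then `k+1`. Throughout, `Δ(n) ≥ 1` for every `n ≥ 1` other than `2` and
`4`, which gives the strict inequality at `n = 2k+6`.
-/

open Finset PowerSeries

/-- Entries of `L` are colours: a value occurring twice in `L` gives two kinds of parts of that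
size. The sum runs over the multiplicity `t` of the head part. -/
def numPartitions : List ℕ → ℕ → ℕ
  | [], n => if n = 0 then 1 else 0
  | a :: L, n => ∑ t ∈ range (n / a + 1), numPartitions L (n - a * t)

section Basic

variable {L : List ℕ} {a n : ℕ}

theorem numPartitions_zero : numPartitions L 0 = 1 := by
  induction L with
  | nil => rfl
  | cons a L ih => simp [numPartitions, ih]

theorem numPartitions_cons_of_lt (h : n < a) : numPartitions (a :: L) n = numPartitions L n := by
  simp [numPartitions, Nat.div_eq_of_lt h]

theorem numPartitions_cons_add (ha : 0 < a) :
    numPartitions (a :: L) (n + a) = numPartitions L (n + a) + numPartitions (a :: L) n := by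
  rw [numPartitions, numPartitions, Nat.add_div_right n ha, Finset.sum_range_succ', mul_zero,
    Nat.sub_zero, add_comm]
  congr 1
  refine Finset.sum_congr rfl fun t _ => ?_
  rw [mul_add_one, Nat.add_sub_add_right]

theorem numPartitions_cons_add_mul (ha : 0 < a) (m : ℕ) : numPartitions (a :: L) (n + a * m) =
    numPartitions (a :: L) n + ∑ i ∈ range m, numPartitions L (n + a * (i + 1)) := by
  induction m with
  | zero => simp
  | succ m ih =>
    rw [Finset.sum_range_succ, ← add_assoc, ← ih, mul_add_one, ← add_assoc,
      numPartitions_cons_add ha, add_comm]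

theorem numPartitions_cons (ha : 0 < a) : numPartitions (a :: L) n =
    numPartitions L n + if a ≤ n then numPartitions (a :: L) (n - a) else 0 := by
  split_ifs with h
  · obtain ⟨m, rfl⟩ := Nat.exists_eq_add_of_le' h
    rw [numPartitions_cons_add ha, Nat.add_sub_cancel]
  · rw [numPartitions_cons_of_lt (not_le.mp h), add_zero]

theorem numPartitions_one (hL : ∀ x ∈ L, 2 ≤ x) : numPartitions L 1 = 0 := by
  induction L with
  | nil => rfl
  | cons a L ih =>
    simp only [List.mem_cons, forall_eq_or_imp] at hL
    rw [numPartitions_cons_of_lt hL.1, ih hL.2]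

end Basic

def partitionSeries (L : List ℕ) : ℤ⟦X⟧ := PowerSeries.mk fun n => (numPartitions L n : ℤ)

theorem partitionSeries_cons_mul {L : List ℕ} {a : ℕ} (ha : 0 < a) :
    partitionSeries (a :: L) * (1 - X ^ a) = partitionSeries L := by
  ext n
  simp only [partitionSeries, mul_sub, mul_one, map_sub, coeff_mk, coeff_mul_X_pow',
    numPartitions_cons ha (n := n)]
  split_ifs <;> push_cast <;> ring

theorem partitionSeries_mul_prod {L : List ℕ} (hL : ∀ x ∈ L, 0 < x) :
    partitionSeries L * (L.map fun a => 1 - X ^ a).prod = 1 := by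
  induction L with
  | nil =>
    ext n
    simp [partitionSeries, numPartitions, coeff_one]
  | cons a L ih =>
    simp only [List.mem_cons, forall_eq_or_imp] at hL
    rw [List.map_cons, List.prod_cons, ← mul_assoc, partitionSeries_cons_mul hL.1, ih hL.2]

theorem eq_partitionSeries {L : List ℕ} (hL : ∀ x ∈ L, 0 < x) {F : ℤ⟦X⟧}
    (hF : F * (L.map fun a => 1 - X ^ a).prod = 1) : F = partitionSeries L :=
  left_inv_eq_right_inv hF (by rw [mul_comm, partitionSeries_mul_prod hL])

theorem partitionSeries_perm {L₁ L₂ : List ℕ} (h : L₁.Perm L₂) (hL : ∀ x ∈ L₁, 0 < x) :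
    partitionSeries L₁ = partitionSeries L₂ :=
  eq_partitionSeries (fun x hx => hL x (h.mem_iff.mpr hx))
    ((h.map fun a => (1 : ℤ⟦X⟧) - X ^ a).prod_eq ▸ partitionSeries_mul_prod hL)

theorem partitionSeries_append {L₁ L₂ : List ℕ} (hL₁ : ∀ x ∈ L₁, 0 < x) (hL₂ : ∀ x ∈ L₂, 0 < x) :
    partitionSeries (L₁ ++ L₂) = partitionSeries L₁ * partitionSeries L₂ := by
  refine (eq_partitionSeries (by simpa [or_imp, forall_and] using ⟨hL₁, hL₂⟩) ?_).symm
  rw [List.map_append, List.prod_append, mul_mul_mul_comm, partitionSeries_mul_prod hL₁,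
    partitionSeries_mul_prod hL₂, one_mul]

theorem numPartitions_perm {L₁ L₂ : List ℕ} (h : L₁.Perm L₂) (hL : ∀ x ∈ L₁, 0 < x) (n : ℕ) :
    numPartitions L₁ n = numPartitions L₂ n := by
  have := congrArg (coeff n) (partitionSeries_perm h hL)
  simpa [partitionSeries] using this

theorem numPartitions_append {L₁ L₂ : List ℕ} (hL₁ : ∀ x ∈ L₁, 0 < x) (hL₂ : ∀ x ∈ L₂, 0 < x)
    (n : ℕ) : numPartitions (L₁ ++ L₂) n =
      ∑ i ∈ range (n + 1), numPartitions L₁ i * numPartitions L₂ (n - i) := by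
  have := congrArg (coeff n) (partitionSeries_append hL₁ hL₂)
  simp only [partitionSeries, coeff_mk, coeff_mul, Nat.sum_antidiagonal_eq_sum_range_succ
    (fun i j => (numPartitions L₁ i : ℤ) * numPartitions L₂ j)] at this
  exact_mod_cast this

section Restricted

open PowerSeries.WithPiTopology

theorem tsum_X_pow_mul_mul_one_sub {m : ℕ} (hm : 0 < m) :
    (∑' j : ℕ, (X : ℤ⟦X⟧) ^ (m * j)) * (1 - X ^ m) = 1 := by
  simp_rw [pow_mul]
  exact tsum_pow_mul_one_sub_of_constantCoeff_eq_zero (by simp [hm.ne'])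

theorem mk_card_restricted_eq_partitionSeries {L : List ℕ} (hnd : L.Nodup) (hL : ∀ x ∈ L, 0 < x) :
    PowerSeries.mk (fun n => (#(Nat.Partition.restricted n (· ∈ L)) : ℤ)) = partitionSeries L := by
  apply eq_partitionSeries hL
  set g : ℕ → ℤ⟦X⟧ := fun m => ∑' j : ℕ, X ^ (m * j)
  have hshift : ∏' i, (if i + 1 ∈ L then g (i + 1) else 1) = ∏' m, if m ∈ L then g m else 1 := by
    refine (add_left_injective 1).tprod_eq (f := fun m => if m ∈ L then g m else 1)
      fun m hm => ⟨m - 1, Nat.sub_add_cancel (hL m (by by_contra h; exact hm (if_neg h)))⟩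
  rw [Nat.Partition.powerSeriesMk_card_restricted_eq_tprod ℤ (· ∈ L), hshift,
    tprod_eq_prod (s := L.toFinset) fun m hm => if_neg (by simpa using hm),
    Finset.prod_congr rfl fun m hm => if_pos (List.mem_toFinset.mp hm), List.prod_toFinset g hnd,
    ← List.prod_map_mul, List.map_congr_left fun m hm => tsum_X_pow_mul_mul_one_sub (hL m hm)]
  simp

end Restricted

theorem pos_of_mem_range'_two {m x : ℕ} (hx : x ∈ List.range' 2 m) : 0 < x := by
  rw [List.mem_range'_1] at hx
  omega

theorem pCount_eq_numPartitions (k n : ℕ) :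
    pCount k n = numPartitions (List.range' 2 (k - 1)) n := by
  have h := congrArg (coeff n)
    (mk_card_restricted_eq_partitionSeries (L := List.range' 2 (k - 1)) List.nodup_range'
      fun _ => pos_of_mem_range'_two)
  simp only [coeff_mk, partitionSeries, Nat.cast_inj] at h
  rw [← h, pCount, Nat.card_eq_fintype_card, Fintype.card_subtype, Nat.Partition.restricted]
  congr! 4 with p i
  rw [List.mem_range'_1]
  omega

def pairParts (k : ℕ) : List ℕ := List.range' 2 (k - 1) ++ List.range' 2 k

theorem two_le_of_mem_pairParts {k x : ℕ} (hx : x ∈ pairParts k) : 2 ≤ x := by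
  simp only [pairParts, List.mem_append, List.mem_range'_1] at hx
  omega

theorem ppCount_eq_numPartitions (k n : ℕ) : ppCount k n = numPartitions (pairParts k) n := by
  rw [pairParts, numPartitions_append (fun _ => pos_of_mem_range'_two)
    (fun _ => pos_of_mem_range'_two)]
  simp only [ppCount, pCount_eq_numPartitions, Nat.add_sub_cancel]

def delta (L : List ℕ) (n : ℕ) : ℤ := numPartitions L (n + 1) - numPartitions L n

section Delta

variable {L : List ℕ} {a n : ℕ}

theorem delta_cons_of_succ_lt (h : n + 1 < a) : delta (a :: L) n = delta L n := by
  rw [delta, delta, numPartitions_cons_of_lt h, numPartitions_cons_of_lt (by omega)]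

theorem delta_cons_succ (b : ℕ) : delta ((b + 1) :: L) b = delta L b + 1 := by
  have h := numPartitions_cons_add (L := L) (n := 0) b.succ_pos
  rw [zero_add, numPartitions_zero] at h
  rw [delta, delta, h, numPartitions_cons_of_lt b.lt_succ_self]
  push_cast
  ring

theorem delta_cons_add (ha : 0 < a) :
    delta (a :: L) (n + a) = delta L (n + a) + delta (a :: L) n := by
  have h₁ := numPartitions_cons_add (L := L) (n := n + 1) ha
  rw [add_right_comm] at h₁
  rw [delta, delta, delta, h₁, numPartitions_cons_add ha]
  push_cast
  ring

theorem delta_zero (hL : ∀ x ∈ L, 2 ≤ x) : delta L 0 = -1 := by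
  simp [delta, numPartitions_zero, numPartitions_one hL]

theorem delta_cons_self (hL : ∀ x ∈ a :: L, 2 ≤ x) : delta (a :: L) a = delta L a - 1 := by
  have h := delta_cons_add (L := L) (n := 0) (zero_lt_two.trans_le (hL a List.mem_cons_self))
  rw [zero_add, delta_zero hL] at h
  linarith

theorem delta_le_delta_cons_of_lt (h : n < a) : delta L n ≤ delta (a :: L) n := by
  rcases (Nat.succ_le_of_lt h).eq_or_lt with rfl | h'
  · rw [delta_cons_succ]
    linarith
  · rw [delta_cons_of_succ_lt h']

theorem delta_le_delta_cons (ha : 0 < a) (h : ∀ n, 1 ≤ n → 0 ≤ delta (a :: L) n) (hna : n ≠ a) :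
    delta L n ≤ delta (a :: L) n := by
  rcases Nat.lt_or_gt_of_ne hna with hlt | hgt
  · exact delta_le_delta_cons_of_lt hlt
  · obtain ⟨m, rfl⟩ := Nat.exists_eq_add_of_lt hgt
    rw [add_assoc, add_comm, delta_cons_add ha]
    linarith [h (m + 1) (by omega)]

/-- The only new drop is the `-1` at `n = a`, inherited from `delta (a :: L) 0 = -1`. -/
theorem delta_cons_nonneg (hL : ∀ x ∈ a :: L, 2 ≤ x) (h : ∀ n, 1 ≤ n → 0 ≤ delta L n)
    (ha : 1 ≤ delta L a) : ∀ n, 1 ≤ n → 0 ≤ delta (a :: L) n := by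
  have ha₀ : 0 < a := zero_lt_two.trans_le (hL a List.mem_cons_self)
  intro n
  induction n using Nat.strong_induction_on with
  | _ n ih =>
    intro hn
    rcases lt_trichotomy n a with hlt | rfl | hgt
    · exact (h n hn).trans (delta_le_delta_cons_of_lt hlt)
    · rw [delta_cons_self hL]
      linarith
    · obtain ⟨m, rfl⟩ := Nat.exists_eq_add_of_lt hgt
      rw [add_assoc, add_comm, delta_cons_add ha₀]
      linarith [h (m + 1 + a) (by omega), ih (m + 1) (by omega) (by omega)]

end Delta

theorem numPartitions_singleton {a : ℕ} (ha : 0 < a) (n : ℕ) :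
    numPartitions [a] n = if a ∣ n then 1 else 0 := by
  induction n using Nat.strong_induction_on with
  | _ n ih =>
    rcases lt_or_ge n a with hlt | hge
    · rw [numPartitions_cons_of_lt hlt, numPartitions]
      congr 1
      exact propext ⟨fun h => h ▸ dvd_zero a, fun h => Nat.eq_zero_of_dvd_of_lt h hlt⟩
    · obtain ⟨m, rfl⟩ := Nat.exists_eq_add_of_le' hge
      rw [numPartitions_cons_add ha, ih m (by omega)]
      simp [numPartitions, ha.ne', Nat.dvd_add_self_right]

theorem numPartitions_two_three (n : ℕ) : numPartitions [2, 3] n + (n + 2) / 3 = (n + 2) / 2 := by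
  induction n using Nat.strong_induction_on with
  | _ n ih =>
    rcases lt_or_ge n 2 with hlt | hge
    · interval_cases n <;> decide
    · obtain ⟨m, rfl⟩ := Nat.exists_eq_add_of_le' hge
      have := ih m (by omega)
      rw [numPartitions_cons_add two_pos, numPartitions_singleton three_pos]
      split_ifs <;> omega

theorem numPartitions_five_two_three (n : ℕ) :
    numPartitions [5, 2, 3] (n + 30) = numPartitions [5, 2, 3] n + n + 20 := by
  have h := numPartitions_cons_add_mul (L := [2, 3]) (n := n) (by norm_num : 0 < 5) 6
  simp only [Finset.sum_range_succ, Finset.sum_range_zero] at h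
  norm_num at h
  have := numPartitions_two_three (n + 5)
  have := numPartitions_two_three (n + 10)
  have := numPartitions_two_three (n + 15)
  have := numPartitions_two_three (n + 20)
  have := numPartitions_two_three (n + 25)
  have := numPartitions_two_three (n + 30)
  obtain ⟨q, r, hr, rfl⟩ : ∃ q r, r < 6 ∧ n = 6 * q + r :=
    ⟨n / 6, n % 6, n.mod_lt (by norm_num), (n.div_add_mod 6).symm⟩
  interval_cases r <;> omega

theorem delta_five_two_three_add_thirty (n : ℕ) :
    delta [5, 2, 3] (n + 30) = delta [5, 2, 3] n + 1 := by
  rw [delta, delta, add_right_comm, numPartitions_five_two_three, numPartitions_five_two_three]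
  push_cast
  ring

theorem delta_five_two_three_nonneg : ∀ n, 1 ≤ n → 0 ≤ delta [5, 2, 3] n := by
  intro n
  induction n using Nat.strong_induction_on with
  | _ n ih =>
    intro hn
    rcases lt_or_ge n 31 with hlt | hge
    · have : ∀ n < 31, 1 ≤ n → 0 ≤ delta [5, 2, 3] n := by decide
      exact this n hlt hn
    · obtain ⟨m, rfl⟩ := Nat.exists_eq_add_of_le' (by omega : 30 ≤ n)
      rw [delta_five_two_three_add_thirty]
      linarith [ih m (by omega) (by omega)]

structure GrowsFromOne (L : List ℕ) : Prop where
  nonneg : ∀ n, 1 ≤ n → 0 ≤ delta L n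
  pos : ∀ n, 1 ≤ n → n ≠ 2 → n ≠ 4 → 1 ≤ delta L n

theorem GrowsFromOne.perm {L₁ L₂ : List ℕ} (h : L₁.Perm L₂) (hL : ∀ x ∈ L₁, 0 < x)
    (hg : GrowsFromOne L₁) : GrowsFromOne L₂ := by
  have hδ (n : ℕ) : delta L₁ n = delta L₂ n := by
    rw [delta, delta, numPartitions_perm h hL, numPartitions_perm h hL]
  exact ⟨fun n hn => hδ n ▸ hg.nonneg n hn, fun n hn h2 h4 => hδ n ▸ hg.pos n hn h2 h4⟩

theorem GrowsFromOne.cons_cons {L : List ℕ} {b : ℕ} (hL : ∀ x ∈ L, 2 ≤ x) (hb : 5 ≤ b)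
    (hg : GrowsFromOne L) : GrowsFromOne (b :: (b + 1) :: L) := by
  set U := (b + 1) :: L
  have hU : ∀ x ∈ U, 2 ≤ x := by simpa [U] using ⟨by omega, hL⟩
  have hbU : ∀ x ∈ b :: U, 2 ≤ x := by simpa using ⟨by omega, hU⟩
  have hU₀ := delta_cons_nonneg hU hg.nonneg (hg.pos (b + 1) (by omega) (by omega) (by omega))
  have hUb : delta U b = delta L b + 1 := delta_cons_succ b
  have hbU₀ := delta_cons_nonneg hbU hU₀ (by linarith [hg.pos b (by omega) (by omega) (by omega)])
  refine ⟨hbU₀, fun n hn h2 h4 => ?_⟩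
  have hLn := hg.pos n hn h2 h4
  by_cases hnb : n = b
  · subst hnb
    rw [delta_cons_self hbU]
    linarith
  by_cases hnb' : n = b + 1
  · subst hnb'
    -- `delta U` may vanish at `b + 1`; the increase comes from `delta _ 1 ≥ 1`
    have h₁ := delta_le_delta_cons (by omega) hbU₀ (show 1 ≠ b by omega)
    have h₂ := delta_le_delta_cons (by omega) hU₀ (show 1 ≠ b + 1 by omega)
    rw [add_comm, delta_cons_add (by omega)]
    linarith [hU₀ (1 + b) (by omega), hg.pos 1 le_rfl (by omega) (by omega)]
  linarith [delta_le_delta_cons (by omega) hbU₀ hnb, delta_le_delta_cons (by omega) hU₀ hnb']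

theorem append_concat_perm {α : Type*} (A B : List α) (x y : α) :
    ((A ++ [x]) ++ (B ++ [y])).Perm (x :: y :: (A ++ B)) :=
  ((List.perm_append_singleton _ _).append (List.perm_append_singleton _ _)).trans
    (List.perm_middle.cons _)

theorem range'_two_succ (j : ℕ) : List.range' 2 (j + 1) = List.range' 2 j ++ [j + 2] := by
  rw [List.range'_concat, one_mul, add_comm]

theorem pairParts_succ_perm (k : ℕ) (hk : 1 ≤ k) :
    (pairParts (k + 1)).Perm ((k + 1) :: (k + 2) :: pairParts k) := by
  obtain ⟨j, rfl⟩ := Nat.exists_eq_add_of_le' hk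
  have h : pairParts (j + 1 + 1) =
      (List.range' 2 j ++ [j + 2]) ++ (List.range' 2 (j + 1) ++ [j + 1 + 2]) := by
    rw [pairParts, Nat.add_sub_cancel, ← range'_two_succ, ← range'_two_succ]
  rw [h, pairParts, Nat.add_sub_cancel]
  exact append_concat_perm _ _ _ _

theorem growsFromOne_two_four_three_four_five_two_three : GrowsFromOne [2, 4, 3, 4, 5, 2, 3] := by
  have hL : ∀ n, 1 ≤ n → 0 ≤ delta [4, 3, 4, 5, 2, 3] n :=
    delta_cons_nonneg (by decide) (delta_cons_nonneg (by decide)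
      (delta_cons_nonneg (by decide) delta_five_two_three_nonneg (by decide)) (by decide))
      (by decide)
  refine ⟨delta_cons_nonneg (by decide) hL (by decide), fun n => ?_⟩
  induction n using Nat.strong_induction_on with
  | _ n ih =>
    intro hn h2 h4
    rcases lt_or_ge n 7 with hlt | hge
    · have : ∀ n < 7, 1 ≤ n → n ≠ 2 → n ≠ 4 → 1 ≤ delta [2, 4, 3, 4, 5, 2, 3] n := by decide
      exact this n hlt hn h2 h4
    · obtain ⟨m, rfl⟩ := Nat.exists_eq_add_of_le' (by omega : 2 ≤ n)
      rw [delta_cons_add two_pos]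
      linarith [hL (m + 2) hn, ih m (by omega) (by omega) (by omega) (by omega)]

theorem growsFromOne_pairParts {k : ℕ} (hk : 4 ≤ k) : GrowsFromOne (pairParts k) := by
  induction k, hk using Nat.le_induction with
  | base => exact growsFromOne_two_four_three_four_five_two_three.perm (by decide) (by decide)
  | succ k hk ih =>
    refine (ih.cons_cons (fun _ => two_le_of_mem_pairParts) (by omega)).perm
      (pairParts_succ_perm k (by omega)).symm fun x hx => ?_
    simp only [List.mem_cons] at hx
    rcases hx with rfl | rfl | hx
    · omega
    · omega
    · exact zero_lt_two.trans_le (two_le_of_mem_pairParts hx)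

/-- For `k ≥ 4` and `n ≥ 2`, `pp_k(n) ≥ pp_k(n-1)`; in particular
`pp_k(2k+7) ≥ pp_k(2k+6) + 1`. -/
theorem ppk_monotone (k : ℕ) (hk : 4 ≤ k) :
    (∀ n : ℕ, 2 ≤ n → ppCount k (n - 1) ≤ ppCount k n) ∧
    ppCount k (2 * k + 6) + 1 ≤ ppCount k (2 * k + 7) := by
  have hg := growsFromOne_pairParts hk
  simp only [ppCount_eq_numPartitions]
  refine ⟨fun n hn => ?_, ?_⟩
  · have := hg.nonneg (n - 1) (by omega)
    rw [delta, Nat.sub_add_cancel (by omega)] at this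
    omega
  · have : (1 : ℤ) ≤ numPartitions (pairParts k) (2 * k + 7) -
        numPartitions (pairParts k) (2 * k + 6) :=
      hg.pos (2 * k + 6) (by omega) (by omega) (by omega)
    omega
end

section
/- For k ≥ 2 and n ≥ 0, h_k(n) = Σ_{i=0}^{⌊n/k⌋-2} (i+1)·h_{k-1}(n - k·i - 2), where h_k(n) is the number of pairs (α,β) of partitions with |α|+|β|=n, α and β each having exactly k parts, and the largest part of β appearing at least twice. -/
/-- The number of partitions of `n` with at most `k` parts. -/
noncomputable def atMostParts (k n : ℕ) : ℕ :=
  Nat.card {p : n.Partition // p.parts.card ≤ k}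

/-- `gCount k n` is the number of pairs `(α, β)` of partitions, each with at most `k`
parts, with `|α| + |β| = n`. -/
noncomputable def gCount (k n : ℕ) : ℕ :=
  ∑ i ∈ Finset.range (n + 1), atMostParts k i * atMostParts k (n - i)

/-- The number of partitions of `n` with exactly `k` parts. -/
noncomputable def exactParts (k n : ℕ) : ℕ :=
  Nat.card {p : n.Partition // p.parts.card = k}

/-- The number of partitions of `n` with exactly `k` parts whose largest part appears
at least twice. -/
noncomputable def exactPartsTopTwice (k n : ℕ) : ℕ :=
  Nat.card {p : n.Partition // p.parts.card = k ∧ 2 ≤ p.parts.count p.parts.sup}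

/-- `hCount k n`: for `k ≥ 2`, the number of pairs `(α, β)` of partitions with
`|α| + |β| = n` such that `α` and `β` each have exactly `k` parts and the largest part
of `β` appears at least twice; for `k = 1` it is `1` for `n ≥ 2` and `0` otherwise. -/
noncomputable def hCount (k n : ℕ) : ℕ :=
  if k = 1 then (if 2 ≤ n then 1 else 0)
  else ∑ i ∈ Finset.range (n + 1), exactParts k i * exactPartsTopTwice k (n - i)


namespace HAux
open Multiset Finset

lemma ms_card_le_sum {s : Multiset ℕ} (h : ∀ x ∈ s, 1 ≤ x) : Multiset.card s ≤ s.sum := by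
  induction s using Multiset.induction with
  | empty => simp
  | cons a t ih =>
    simp only [Multiset.card_cons, Multiset.sum_cons]
    have h1 : 1 ≤ a := h a (Multiset.mem_cons_self a t)
    have := ih (fun x hx => h x (Multiset.mem_cons_of_mem hx))
    omega

lemma part_card_le {n : ℕ} (p : n.Partition) : Multiset.card p.parts ≤ n :=
  le_trans (ms_card_le_sum (fun _ hx => p.parts_pos hx)) (le_of_eq p.parts_sum)

lemma exactParts_zero {k m : ℕ} (h : m < k) : exactParts k m = 0 := by
  rw [exactParts, Nat.card_eq_zero]
  refine Or.inl ⟨?_⟩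
  rintro ⟨p, hp⟩
  have := part_card_le p
  omega

lemma exactPartsTopTwice_zero {k m : ℕ} (h : m < k) : exactPartsTopTwice k m = 0 := by
  rw [exactPartsTopTwice, Nat.card_eq_zero]
  refine Or.inl ⟨?_⟩
  rintro ⟨p, hp, _⟩
  have := part_card_le p
  omega

lemma exactParts_one {m : ℕ} (h : 1 ≤ m) : exactParts 1 m = 1 := by
  rw [exactParts, Nat.card_eq_one_iff_unique]
  constructor
  · constructor
    rintro ⟨p, hp⟩ ⟨q, hq⟩
    obtain ⟨a, ha⟩ := Multiset.card_eq_one.1 hp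
    obtain ⟨b, hb⟩ := Multiset.card_eq_one.1 hq
    have h1 : a = m := by have := p.parts_sum; rw [ha] at this; simpa using this
    have h2 : b = m := by have := q.parts_sum; rw [hb] at this; simpa using this
    ext1; ext1
    rw [ha, hb, h1, h2]
  · exact ⟨⟨⟨{m}, by intro i hi; simp at hi; omega, by simp⟩, by simp⟩⟩

lemma pair_count_sup {a b : ℕ}
    (h : 2 ≤ Multiset.count (({a,b} : Multiset ℕ).sup) ({a,b} : Multiset ℕ)) : a = b := by
  by_contra hne
  simp [Multiset.insert_eq_cons, Multiset.count_cons, Multiset.count_singleton] at h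
  split_ifs at h <;> omega

lemma t2_closed (m : ℕ) :
    exactPartsTopTwice 2 m = if m % 2 = 0 ∧ 2 ≤ m then 1 else 0 := by
  split_ifs with hc
  · rw [exactPartsTopTwice, Nat.card_eq_one_iff_unique]
    constructor
    · constructor
      rintro ⟨p, hp, hp2⟩ ⟨q, hq, hq2⟩
      obtain ⟨a, b, hab⟩ := Multiset.card_eq_two.1 hp
      obtain ⟨c, d, hcd⟩ := Multiset.card_eq_two.1 hq
      rw [hab] at hp2
      rw [hcd] at hq2
      have hab' : a = b := pair_count_sup hp2
      have hcd' : c = d := pair_count_sup hq2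
      subst hab' hcd'
      have h1 : a + a = m := by have := p.parts_sum; rw [hab] at this; simpa using this
      have h2 : c + c = m := by have := q.parts_sum; rw [hcd] at this; simpa using this
      have : a = c := by omega
      subst this
      ext1; ext1
      rw [hab, hcd]
    · refine ⟨⟨⟨{m / 2, m / 2}, ?_, ?_⟩, ?_, ?_⟩⟩
      · intro i hi
        simp [Multiset.insert_eq_cons] at hi
        rcases hi with rfl | rfl <;> omega
      · simp [Multiset.insert_eq_cons]; omega
      · simp [Multiset.insert_eq_cons]
      · have hsup : ({m / 2, m / 2} : Multiset ℕ).sup = m / 2 := by simp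
        show 2 ≤ Multiset.count (({m / 2, m / 2} : Multiset ℕ).sup) _
        rw [hsup]
        simp [Multiset.insert_eq_cons, Multiset.count_cons, Multiset.count_singleton]
  · rw [exactPartsTopTwice, Nat.card_eq_zero]
    refine Or.inl ⟨?_⟩
    rintro ⟨p, hp, hp2⟩
    obtain ⟨a, b, hab⟩ := Multiset.card_eq_two.1 hp
    rw [hab] at hp2
    have hab' : a = b := pair_count_sup hp2
    subst hab'
    have h1 : a + a = m := by have := p.parts_sum; rw [hab] at this; simpa using this
    have ha : 0 < a := p.parts_pos (by rw [hab]; simp [Multiset.insert_eq_cons])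
    omega



lemma ms_sum_map_pred {s : Multiset ℕ} (h : ∀ x ∈ s, 1 ≤ x) :
    (s.map (fun x => x - 1)).sum + Multiset.card s = s.sum := by
  induction s using Multiset.induction with
  | empty => simp
  | cons a t ih =>
    simp only [Multiset.map_cons, Multiset.sum_cons, Multiset.card_cons]
    have h1 : 1 ≤ a := h a (Multiset.mem_cons_self a t)
    have := ih (fun x hx => h x (Multiset.mem_cons_of_mem hx))
    omega

lemma ms_card_le_sum' {s : Multiset ℕ} (h : ∀ x ∈ s, 1 ≤ x) : Multiset.card s ≤ s.sum := by
  induction s using Multiset.induction with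
  | empty => simp
  | cons a t ih =>
    simp only [Multiset.card_cons, Multiset.sum_cons]
    have h1 : 1 ≤ a := h a (Multiset.mem_cons_self a t)
    have := ih (fun x hx => h x (Multiset.mem_cons_of_mem hx))
    omega

lemma ms_sum_map_succ (s : Multiset ℕ) :
    (s.map (fun x => x + 1)).sum = s.sum + Multiset.card s := by
  induction s using Multiset.induction with
  | empty => simp
  | cons a t ih =>
    simp only [Multiset.map_cons, Multiset.sum_cons, Multiset.card_cons, ih]
    ring

lemma card_split {α : Type*} [Fintype α] (P Q : α → Prop) :
    Nat.card {x // P x} = Nat.card {x // P x ∧ Q x} + Nat.card {x // P x ∧ ¬ Q x} := by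
  classical
  simp only [Nat.card_eq_fintype_card, Fintype.card_subtype]
  rw [← Finset.card_filter_add_card_filter_not (s := univ.filter P) Q]
  congr 1 <;> rw [Finset.filter_filter]

lemma card_one_mem (m : ℕ) (D : Multiset ℕ → Prop) :
    Nat.card {p : Nat.Partition (m+1) // D (p.parts.erase 1) ∧ 1 ∈ p.parts}
      = Nat.card {q : Nat.Partition m // D q.parts} := by
  apply Nat.card_congr
  refine ⟨fun ⟨p, hD, h1⟩ => ⟨⟨p.parts.erase 1,
      fun hi => p.parts_pos (Multiset.mem_of_mem_erase hi), ?_⟩, hD⟩,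
    fun ⟨q, hD⟩ => ⟨⟨1 ::ₘ q.parts,
      fun hi => ?_, by rw [Multiset.sum_cons, q.parts_sum, Nat.add_comm]⟩,
      by simpa [Multiset.erase_cons_head] using hD, Multiset.mem_cons_self 1 _⟩, ?_, ?_⟩
  · have hc : 1 ::ₘ p.parts.erase 1 = p.parts := Multiset.cons_erase h1
    have := p.parts_sum
    rw [← hc, Multiset.sum_cons] at this
    omega
  · rcases Multiset.mem_cons.1 hi with rfl | hi
    · norm_num
    · exact q.parts_pos hi
  · rintro ⟨p, hD, h1⟩
    apply Subtype.ext
    apply Nat.Partition.ext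
    exact Multiset.cons_erase h1
  · rintro ⟨q, hD⟩
    apply Subtype.ext
    apply Nat.Partition.ext
    exact Multiset.erase_cons_head 1 q.parts

lemma card_map_shift (m k : ℕ) (hk : 1 ≤ k) (D : Multiset ℕ → Prop) :
    Nat.card {p : Nat.Partition m //
        (Multiset.card p.parts = k ∧ D (p.parts.map (fun x => x - 1))) ∧ 1 ∉ p.parts}
      = Nat.card {q : Nat.Partition (m - k) // Multiset.card q.parts = k ∧ D q.parts} := by
  apply Nat.card_congr
  have pos' : ∀ (p : Nat.Partition m), 1 ∉ p.parts → ∀ x ∈ p.parts, 2 ≤ x := by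
    intro p h1 x hx
    have h2 := p.parts_pos hx
    have h3 : x ≠ 1 := fun hx1 => h1 (hx1 ▸ hx)
    omega
  refine ⟨fun ⟨p, ⟨hcard, hD⟩, h1⟩ => ⟨⟨p.parts.map (fun x => x - 1),
      fun hi => ?pos1, ?sum1⟩, by simpa using hcard, hD⟩,
    fun ⟨q, hcard, hD⟩ => ⟨⟨q.parts.map (fun x => x + 1), fun hi => ?pos2, ?sum2⟩,
      ⟨by simpa using hcard, ?D2⟩, ?notmem⟩, ?linv, ?rinv⟩
  case pos1 =>
    obtain ⟨y, hy, rfl⟩ := Multiset.mem_map.1 hi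
    have := pos' p h1 y hy
    omega
  case sum1 =>
    have hs := ms_sum_map_pred (s := p.parts) (fun x hx => p.parts_pos hx)
    rw [hcard, p.parts_sum] at hs
    omega
  case pos2 =>
    obtain ⟨y, hy, rfl⟩ := Multiset.mem_map.1 hi
    omega
  case sum2 =>
    rw [ms_sum_map_succ, q.parts_sum, hcard]
    have h1 : Multiset.card q.parts ≤ q.parts.sum :=
      ms_card_le_sum' (fun x hx => q.parts_pos hx)
    rw [hcard, q.parts_sum] at h1
    omega
  case D2 =>
    rw [Multiset.map_map]
    have : q.parts.map ((fun x => x - 1) ∘ (fun x => x + 1)) = q.parts.map id :=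
      Multiset.map_congr rfl (fun x _ => by simp)
    rw [this, Multiset.map_id]
    exact hD
  case notmem =>
    intro hmem
    obtain ⟨y, hy, hy1⟩ := Multiset.mem_map.1 hmem
    have := q.parts_pos hy
    omega
  case linv =>
    rintro ⟨p, ⟨hcard, hD⟩, h1⟩
    apply Subtype.ext
    apply Nat.Partition.ext
    show (p.parts.map (fun x => x - 1)).map (fun x => x + 1) = p.parts
    rw [Multiset.map_map]
    have : p.parts.map ((fun x => x + 1) ∘ (fun x => x - 1)) = p.parts.map id :=
      Multiset.map_congr rfl (fun x hx => by have := pos' p h1 x hx; simp; omega)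
    rw [this, Multiset.map_id]
  case rinv =>
    rintro ⟨q, hcard, hD⟩
    apply Subtype.ext
    apply Nat.Partition.ext
    show (q.parts.map (fun x => x + 1)).map (fun x => x - 1) = q.parts
    rw [Multiset.map_map]
    have : q.parts.map ((fun x => x - 1) ∘ (fun x => x + 1)) = q.parts.map id :=
      Multiset.map_congr rfl (fun x _ => by simp)
    rw [this, Multiset.map_id]



lemma ms_sup_mem {s : Multiset ℕ} (h : s ≠ 0) : s.sup ∈ s := by
  induction s using Multiset.induction with
  | empty => simp at h
  | cons a t ih =>
    rcases eq_or_ne t 0 with rfl | ht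
    · simp
    · rw [Multiset.sup_cons]
      rcases le_total a t.sup with hle | hle
      · rw [sup_eq_right.2 hle]
        exact Multiset.mem_cons_of_mem (ih ht)
      · rw [sup_eq_left.2 hle]
        exact Multiset.mem_cons_self a t

lemma ms_sup_map_succ {s : Multiset ℕ} (h : s ≠ 0) :
    (s.map (fun x => x + 1)).sup = s.sup + 1 := by
  apply le_antisymm
  · rw [Multiset.sup_le]
    intro b hb
    obtain ⟨x, hx, rfl⟩ := Multiset.mem_map.1 hb
    exact Nat.add_le_add_right (Multiset.le_sup hx) 1
  · exact Multiset.le_sup (Multiset.mem_map_of_mem _ (ms_sup_mem h))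

lemma ms_count_map_succ (s : Multiset ℕ) (v : ℕ) :
    (s.map (fun x => x + 1)).count (v + 1) = s.count v :=
  Multiset.count_map_eq_count' _ s (fun a b hab => by omega) v

lemma count_sup_erase_one {s : Multiset ℕ} (hpos : ∀ x ∈ s, 0 < x) (h1 : 1 ∈ s)
    (hcard : 3 ≤ Multiset.card s) :
    (2 ≤ (s.erase 1).count (s.erase 1).sup ↔ 2 ≤ s.count s.sup) := by
  have hs0 : s ≠ 0 := fun h => by simp [h] at h1
  have ht0 : s.erase 1 ≠ 0 := by
    intro h
    have h3 := Multiset.card_erase_of_mem h1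
    rw [h, Nat.pred_eq_sub_one] at h3
    simp at h3
    omega
  rcases Nat.lt_or_ge s.sup 2 with hsup | hsup
  · -- all elements are 1
    have hall : ∀ x ∈ s, x = 1 := by
      intro x hx
      have := Multiset.le_sup hx
      have := hpos x hx
      omega
    have hsup1 : s.sup = 1 := le_antisymm (by omega) (Multiset.le_sup h1)
    have htall : ∀ x ∈ s.erase 1, x = 1 := fun x hx => hall x (Multiset.mem_of_mem_erase hx)
    have h1t : (1 : ℕ) ∈ s.erase 1 := by
      obtain ⟨a, ha⟩ := Multiset.exists_mem_of_ne_zero ht0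
      exact (htall a ha) ▸ ha
    have htsup : (s.erase 1).sup = 1 :=
      le_antisymm (Multiset.sup_le.2 (fun x hx => le_of_eq (htall x hx))) (Multiset.le_sup h1t)
    rw [hsup1, htsup]
    rw [Multiset.count_eq_card.2 (fun b hb => (hall b hb).symm)]
    rw [Multiset.count_eq_card.2 (fun b hb => (htall b hb).symm)]
    rw [Multiset.card_erase_of_mem h1, Nat.pred_eq_sub_one]
    omega
  · have hmem : s.sup ∈ s := ms_sup_mem hs0
    have hne : s.sup ≠ 1 := by omega
    have hmemt : s.sup ∈ s.erase 1 := (Multiset.mem_erase_of_ne hne).2 hmem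
    have htsup : (s.erase 1).sup = s.sup :=
      le_antisymm (Multiset.sup_le.2 (fun x hx => Multiset.le_sup (Multiset.mem_of_mem_erase hx)))
        (Multiset.le_sup hmemt)
    rw [htsup, Multiset.count_erase_of_ne hne]

lemma count_sup_map_pred {s : Multiset ℕ} (hs : s ≠ 0) (h2 : ∀ x ∈ s, 2 ≤ x) :
    (s.map (fun x => x - 1)).count (s.map (fun x => x - 1)).sup = s.count s.sup := by
  set t := s.map (fun x => x - 1) with ht
  have hts : t.map (fun x => x + 1) = s := by
    rw [ht, Multiset.map_map]
    have : s.map ((fun x => x + 1) ∘ (fun x => x - 1)) = s.map id :=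
      Multiset.map_congr rfl (fun x hx => by have := h2 x hx; simp; omega)
    rw [this, Multiset.map_id]
  have ht0 : t ≠ 0 := by
    intro h
    rw [h] at hts
    simp at hts
    exact hs hts.symm
  have hsup : s.sup = t.sup + 1 := by rw [← hts, ms_sup_map_succ ht0]
  rw [hsup, ← hts, ms_count_map_succ]



lemma exactParts_rec {k m : ℕ} (hk : 2 ≤ k) :
    exactParts k (m + 1) = exactParts (k-1) m + exactParts k (m + 1 - k) := by
  rw [exactParts]
  rw [card_split (fun p : Nat.Partition (m+1) => Multiset.card p.parts = k)
    (fun p => 1 ∈ p.parts)]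
  congr 1
  · have h1 : Nat.card {p : Nat.Partition (m+1) // Multiset.card p.parts = k ∧ 1 ∈ p.parts}
        = Nat.card {p : Nat.Partition (m+1) //
            (Multiset.card (p.parts.erase 1) = k - 1) ∧ 1 ∈ p.parts} := by
      apply Nat.card_congr
      apply Equiv.subtypeEquivRight
      intro p
      constructor
      · rintro ⟨hc, h1⟩
        refine ⟨?_, h1⟩
        rw [Multiset.card_erase_of_mem h1, Nat.pred_eq_sub_one, hc]
      · rintro ⟨hc, h1⟩
        refine ⟨?_, h1⟩
        rw [Multiset.card_erase_of_mem h1, Nat.pred_eq_sub_one] at hc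
        have : 1 ≤ Multiset.card p.parts := by
          rw [Nat.one_le_iff_ne_zero, Ne, Multiset.card_eq_zero]
          intro h0
          rw [h0] at h1
          simp at h1
        omega
    rw [h1, card_one_mem m (fun t => Multiset.card t = k - 1)]
    rfl
  · have h1 : Nat.card {p : Nat.Partition (m+1) // Multiset.card p.parts = k ∧ 1 ∉ p.parts}
        = Nat.card {p : Nat.Partition (m+1) //
            (Multiset.card p.parts = k ∧ True) ∧ 1 ∉ p.parts} := by
      apply Nat.card_congr
      apply Equiv.subtypeEquivRight
      intro p
      tauto
    rw [h1, card_map_shift (m+1) k (by omega) (fun _ => True)]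
    rw [exactParts]
    apply Nat.card_congr
    apply Equiv.subtypeEquivRight
    intro p
    tauto

lemma exactPartsTopTwice_rec {k m : ℕ} (hk : 3 ≤ k) :
    exactPartsTopTwice k (m + 1)
      = exactPartsTopTwice (k-1) m + exactPartsTopTwice k (m + 1 - k) := by
  rw [exactPartsTopTwice]
  rw [card_split (fun p : Nat.Partition (m+1) =>
    Multiset.card p.parts = k ∧ 2 ≤ p.parts.count p.parts.sup) (fun p => 1 ∈ p.parts)]
  congr 1
  · have h1 : Nat.card {p : Nat.Partition (m+1) //
          (Multiset.card p.parts = k ∧ 2 ≤ p.parts.count p.parts.sup) ∧ 1 ∈ p.parts}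
        = Nat.card {p : Nat.Partition (m+1) //
            (Multiset.card (p.parts.erase 1) = k - 1 ∧
              2 ≤ (p.parts.erase 1).count (p.parts.erase 1).sup) ∧ 1 ∈ p.parts} := by
      apply Nat.card_congr
      apply Equiv.subtypeEquivRight
      intro p
      constructor
      · rintro ⟨⟨hc, hs⟩, h1⟩
        have hcard3 : 3 ≤ Multiset.card p.parts := by omega
        refine ⟨⟨?_, ?_⟩, h1⟩
        · rw [Multiset.card_erase_of_mem h1, Nat.pred_eq_sub_one, hc]
        · exact (count_sup_erase_one (fun x hx => p.parts_pos hx) h1 hcard3).2 hs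
      · rintro ⟨⟨hc, hs⟩, h1⟩
        rw [Multiset.card_erase_of_mem h1, Nat.pred_eq_sub_one] at hc
        have hpos : 1 ≤ Multiset.card p.parts := by
          rw [Nat.one_le_iff_ne_zero, Ne, Multiset.card_eq_zero]
          intro h0
          rw [h0] at h1
          simp at h1
        have hck : Multiset.card p.parts = k := by omega
        have hcard3 : 3 ≤ Multiset.card p.parts := by omega
        refine ⟨⟨hck, ?_⟩, h1⟩
        exact (count_sup_erase_one (fun x hx => p.parts_pos hx) h1 hcard3).1 hs
    rw [h1, card_one_mem m (fun t => Multiset.card t = k - 1 ∧ 2 ≤ t.count t.sup)]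
    rfl
  · have h1 : Nat.card {p : Nat.Partition (m+1) //
          (Multiset.card p.parts = k ∧ 2 ≤ p.parts.count p.parts.sup) ∧ 1 ∉ p.parts}
        = Nat.card {p : Nat.Partition (m+1) //
            (Multiset.card p.parts = k ∧
              2 ≤ (p.parts.map (fun x => x - 1)).count (p.parts.map (fun x => x - 1)).sup)
              ∧ 1 ∉ p.parts} := by
      apply Nat.card_congr
      apply Equiv.subtypeEquivRight
      intro p
      have h2 : 1 ∉ p.parts → ∀ x ∈ p.parts, 2 ≤ x := by
        intro h1 x hx
        have := p.parts_pos hx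
        have : x ≠ 1 := fun hx1 => h1 (hx1 ▸ hx)
        omega
      constructor
      · rintro ⟨⟨hc, hs⟩, h1⟩
        have hs0 : p.parts ≠ 0 := by
          rw [Ne, ← Multiset.card_eq_zero, hc]
          omega
        refine ⟨⟨hc, ?_⟩, h1⟩
        rw [count_sup_map_pred hs0 (h2 h1)]
        exact hs
      · rintro ⟨⟨hc, hs⟩, h1⟩
        have hs0 : p.parts ≠ 0 := by
          rw [Ne, ← Multiset.card_eq_zero, hc]
          omega
        rw [count_sup_map_pred hs0 (h2 h1)] at hs
        exact ⟨⟨hc, hs⟩, h1⟩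
    rw [h1, card_map_shift (m+1) k (by omega) (fun t => 2 ≤ t.count t.sup)]
    rfl



lemma sum_shift {k : ℕ} (hk : 2 ≤ k) (g g' : ℕ → ℕ)
    (hrec : ∀ m, g (m + 1) = g' m + g (m + 1 - k)) (hg0 : g 0 = 0) (hg'0 : g' 0 = 0) :
    ∀ m, g m = ∑ a ∈ Finset.range (m + 1), g' (m - (1 + k * a)) := by
  intro m
  induction m using Nat.strong_induction_on with
  | _ m ih =>
    match m with
    | 0 => simpa using hg0.trans hg'0.symm
    | (m + 1) =>
      rw [hrec m, ih (m + 1 - k) (by omega)]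
      conv_rhs => rw [Finset.sum_range_succ']
      have h0 : g' (m + 1 - (1 + k * 0)) = g' m := by norm_num
      rw [h0, Nat.add_comm _ (g' m)]
      congr 1
      have hsub : Finset.range (m + 1 - k + 1) ⊆ Finset.range (m + 1) := by
        intro a ha
        exact Finset.mem_range.2 (by have := Finset.mem_range.1 ha; omega)
      rw [← Finset.sum_subset hsub]
      · apply Finset.sum_congr rfl
        intro a _
        congr 1
        have : k * (a + 1) = k * a + k := by ring
        omega
      · intro a ha hna
        have h1 := Finset.mem_range.1 ha
        have h2 : ¬ a < m + 1 - k + 1 := fun h => hna (Finset.mem_range.2 h)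
        have hka : a ≤ k * a := Nat.le_mul_of_pos_left a (by omega)
        have harg : m + 1 - (1 + k * (a + 1)) = 0 := by
          have : k * (a + 1) = k * a + k := by ring
          omega
        rw [harg, hg'0]

lemma pair_sum (N : ℕ) (g : ℕ → ℕ) (hg : ∀ i, N ≤ i → g i = 0) :
    ∑ a ∈ Finset.range N, ∑ b ∈ Finset.range N, g (a + b)
      = ∑ i ∈ Finset.range N, (i + 1) * g i := by
  have step1 : ∀ a ∈ Finset.range N, ∑ b ∈ Finset.range N, g (a + b)
      = ∑ i ∈ Finset.Ico a N, g i := by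
    intro a ha
    have ha' := Finset.mem_range.1 ha
    rw [Finset.sum_Ico_eq_sum_range]
    have hsub : Finset.range (N - a) ⊆ Finset.range N := by
      intro b hb
      exact Finset.mem_range.2 (by have := Finset.mem_range.1 hb; omega)
    rw [← Finset.sum_subset hsub]
    intro b hb hnb
    have h1 := Finset.mem_range.1 hb
    have h2 : ¬ b < N - a := fun h => hnb (Finset.mem_range.2 h)
    exact hg _ (by omega)
  rw [Finset.sum_congr rfl step1]
  clear step1 hg
  induction N with
  | zero => simp
  | succ N ih =>
    rw [Finset.sum_range_succ (f := fun i => (i + 1) * g i), ← ih]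
    have h1 : ∀ a ∈ Finset.range (N + 1), ∑ i ∈ Finset.Ico a (N + 1), g i
        = (∑ i ∈ Finset.Ico a N, g i) + g N := by
      intro a ha
      exact Finset.sum_Ico_succ_top (by have := Finset.mem_range.1 ha; omega) g
    rw [Finset.sum_congr rfl h1, Finset.sum_add_distrib]
    simp only [Finset.sum_const, Finset.card_range, smul_eq_mul]
    rw [Finset.sum_range_succ (f := fun a => ∑ i ∈ Finset.Ico a N, g i)]
    simp [Nat.add_comm, Nat.mul_comm]



noncomputable def FF (j m : ℕ) : ℕ :=
  if j = 1 then (if m = 1 then 1 else 0) else exactPartsTopTwice j m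

lemma FF_small {j m : ℕ} (hm : m < j) : FF j m = 0 := by
  rw [FF]
  split_ifs with h1 h2
  · omega
  · rfl
  · exact exactPartsTopTwice_zero hm

lemma exactParts_small {j m : ℕ} (hm : m < j) : exactParts j m = 0 := exactParts_zero hm

lemma exactParts_one' (m : ℕ) : exactParts 1 m = if 1 ≤ m then 1 else 0 := by
  split_ifs with h
  · exact exactParts_one h
  · exact exactParts_zero (by omega)

lemma hCount_conv {j : ℕ} (hj : 1 ≤ j) (n : ℕ) :
    hCount j n = ∑ s ∈ Finset.range (n + 1), exactParts j s * FF j (n - s) := by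
  rcases eq_or_ne j 1 with rfl | hj1
  · rw [hCount, if_pos rfl]
    simp only [FF, reduceIte]
    rcases Nat.lt_or_ge n 2 with hn | hn
    · rw [if_neg (by omega)]
      symm
      apply Finset.sum_eq_zero
      intro s hs
      have hs' := Finset.mem_range.1 hs
      rcases Nat.eq_or_lt_of_le (Nat.zero_le s) with h0 | h0
      · rw [← h0, exactParts_zero (by omega), Nat.zero_mul]
      · rw [if_neg (by omega), Nat.mul_zero]
    · rw [if_pos hn]
      symm
      rw [Finset.sum_eq_single (n - 1)]
      · rw [exactParts_one (by omega), if_pos (by omega)]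
      · intro s hs hne
        have hs' := Finset.mem_range.1 hs
        rw [if_neg (by omega), Nat.mul_zero]
      · intro h
        exact absurd (Finset.mem_range.2 (by omega)) h
  · rw [hCount, if_neg hj1]
    apply Finset.sum_congr rfl
    intro s _
    rw [FF, if_neg hj1]

lemma sumE {k : ℕ} (hk : 2 ≤ k) (m : ℕ) :
    exactParts k m = ∑ a ∈ Finset.range (m + 1), exactParts (k-1) (m - (1 + k * a)) :=
  sum_shift hk (exactParts k) (exactParts (k-1))
    (fun m => exactParts_rec hk) (exactParts_zero (by omega)) (exactParts_zero (by omega)) m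

lemma sumF {k : ℕ} (hk : 2 ≤ k) (m : ℕ) :
    FF k m = ∑ a ∈ Finset.range (m + 1), FF (k-1) (m - (1 + k * a)) := by
  rcases eq_or_ne k 2 with rfl | hk2
  · show FF 2 m = ∑ a ∈ Finset.range (m + 1), FF 1 (m - (1 + 2 * a))
    rw [FF, if_neg (by omega), t2_closed]
    simp only [FF, reduceIte]
    split_ifs with hc
    · rw [Finset.sum_eq_single ((m - 2) / 2)]
      · rw [if_pos (by omega)]
      · intro a ha hne
        rw [if_neg (by omega)]
      · intro h
        exact absurd (Finset.mem_range.2 (by omega)) h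
    · symm
      apply Finset.sum_eq_zero
      intro a _
      rw [if_neg (by omega)]
  · have hk3 : 3 ≤ k := by omega
    have h1 : FF k = exactPartsTopTwice k := by
      funext x
      rw [FF, if_neg (by omega)]
    have h2 : FF (k-1) = exactPartsTopTwice (k-1) := by
      funext x
      rw [FF, if_neg (by omega)]
    rw [h1, h2]
    exact sum_shift hk (exactPartsTopTwice k) (exactPartsTopTwice (k-1))
      (fun m => exactPartsTopTwice_rec hk3) (exactPartsTopTwice_zero (by omega))
      (exactPartsTopTwice_zero (by omega)) m

lemma hCount_small {j x : ℕ} (hj : 1 ≤ j) (hx : x < 2 * j) : hCount j x = 0 := by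
  rw [hCount_conv hj]
  apply Finset.sum_eq_zero
  intro s hs
  rcases Nat.lt_or_ge s j with h | h
  · rw [exactParts_small h, Nat.zero_mul]
  · rw [FF_small (by omega), Nat.mul_zero]

lemma conv_shift {j c d : ℕ} (hj : 1 ≤ j) (hc : 1 ≤ c) (hd : 1 ≤ d) (n : ℕ) :
    ∑ s ∈ Finset.range (n + 1), exactParts j (s - c) * FF j ((n - s) - d)
      = hCount j (n - (c + d)) := by
  rw [hCount_conv hj]
  have e0 : exactParts j 0 = 0 := exactParts_small (by omega)
  have f0 : FF j 0 = 0 := FF_small (by omega)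
  -- rewrite LHS terms
  have hterm : ∀ s ∈ Finset.range (n + 1),
      exactParts j (s - c) * FF j ((n - s) - d)
        = exactParts j (s - c) * FF j ((n - (c + d)) - (s - c)) := by
    intro s _
    rcases Nat.lt_or_ge s c with h | h
    · rw [Nat.sub_eq_zero_of_le (by omega), e0, Nat.zero_mul, Nat.zero_mul]
    · congr 2
      omega
  rw [Finset.sum_congr rfl hterm]
  -- drop the first c terms
  have hsub : Finset.Ico c (n + 1) ⊆ Finset.range (n + 1) := by
    intro s hs
    have := Finset.mem_Ico.1 hs
    exact Finset.mem_range.2 (by omega)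
  rw [← Finset.sum_subset hsub (by
    intro s hs hns
    have h1 := Finset.mem_range.1 hs
    have h2 : s < c := by
      rcases Nat.lt_or_ge s c with h | h
      · exact h
      · exact absurd (Finset.mem_Ico.2 ⟨h, h1⟩) hns
    rw [Nat.sub_eq_zero_of_le (by omega), e0, Nat.zero_mul])]
  rw [Finset.sum_Ico_eq_sum_range]
  have hterm2 : ∀ i ∈ Finset.range (n + 1 - c),
      exactParts j (c + i - c) * FF j ((n - (c + d)) - (c + i - c))
        = exactParts j i * FF j ((n - (c + d)) - i) := by
    intro i _
    congr 2 <;> omega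
  rw [Finset.sum_congr rfl hterm2]
  -- now compare ranges: extend both to range (n+1)
  have hs1 : Finset.range (n + 1 - c) ⊆ Finset.range (n + 1) := by
    intro i hi
    exact Finset.mem_range.2 (by have := Finset.mem_range.1 hi; omega)
  have hs2 : Finset.range (n - (c + d) + 1) ⊆ Finset.range (n + 1) := by
    intro i hi
    exact Finset.mem_range.2 (by have := Finset.mem_range.1 hi; omega)
  rw [Finset.sum_subset hs1 (by
    intro i hi hni
    have h1 := Finset.mem_range.1 hi
    have h2 : ¬ i < n + 1 - c := fun h => hni (Finset.mem_range.2 h)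
    rcases Nat.eq_zero_or_pos i with rfl | hpos
    · rw [e0, Nat.zero_mul]
    · rw [Nat.sub_eq_zero_of_le (by omega), f0, Nat.mul_zero])]
  rw [Finset.sum_subset hs2 (by
    intro i hi hni
    have h1 := Finset.mem_range.1 hi
    have h2 : ¬ i < n - (c + d) + 1 := fun h => hni (Finset.mem_range.2 h)
    rw [Nat.sub_eq_zero_of_le (by omega), f0, Nat.mul_zero])]

end HAux

open HAux in
/-- For `k ≥ 2` and `n ≥ 0`,
`h_k(n) = Σ_{i=0}^{⌊n/k⌋-2} (i+1)·h_{k-1}(n - k·i - 2)`. -/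
theorem hCount_recurrence (k n : ℕ) (hk : 2 ≤ k) :
    hCount k n =
      ∑ i ∈ Finset.range (n / k - 1), (i + 1) * hCount (k - 1) (n - k * i - 2) := by
  have hj : 1 ≤ k - 1 := by omega
  rw [hCount_conv (by omega : 1 ≤ k)]
  have hterm : ∀ s ∈ Finset.range (n + 1),
      exactParts k s * FF k (n - s)
        = ∑ a ∈ Finset.range (n + 1), ∑ b ∈ Finset.range (n + 1),
            exactParts (k-1) (s - (1 + k * a)) * FF (k-1) ((n - s) - (1 + k * b)) := by
    intro s hs
    have hs' := Finset.mem_range.1 hs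
    have h1 : exactParts k s
        = ∑ a ∈ Finset.range (n + 1), exactParts (k-1) (s - (1 + k * a)) := by
      rw [sumE hk s]
      apply Finset.sum_subset
      · intro a ha
        exact Finset.mem_range.2 (by have := Finset.mem_range.1 ha; omega)
      · intro a ha hna
        have h1 := Finset.mem_range.1 ha
        have h2 : ¬ a < s + 1 := fun h => hna (Finset.mem_range.2 h)
        have hka : a ≤ k * a := Nat.le_mul_of_pos_left a (by omega)
        have hz : s - (1 + k * a) = 0 := by omega
        rw [hz]
        exact exactParts_small hj
    have h2 : FF k (n - s)
        = ∑ b ∈ Finset.range (n + 1), FF (k-1) ((n - s) - (1 + k * b)) := by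
      rw [sumF hk (n - s)]
      apply Finset.sum_subset
      · intro b hb
        exact Finset.mem_range.2 (by have := Finset.mem_range.1 hb; omega)
      · intro b hb hnb
        have h1 := Finset.mem_range.1 hb
        have h2 : ¬ b < n - s + 1 := fun h => hnb (Finset.mem_range.2 h)
        have hkb : b ≤ k * b := Nat.le_mul_of_pos_left b (by omega)
        have hz : (n - s) - (1 + k * b) = 0 := by omega
        rw [hz]
        exact FF_small hj
    rw [h1, h2, Finset.sum_mul_sum]
  rw [Finset.sum_congr rfl hterm]
  rw [Finset.sum_comm]
  have hswap : ∀ a ∈ Finset.range (n + 1),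
      ∑ s ∈ Finset.range (n + 1), ∑ b ∈ Finset.range (n + 1),
          exactParts (k-1) (s - (1 + k * a)) * FF (k-1) ((n - s) - (1 + k * b))
        = ∑ b ∈ Finset.range (n + 1), ∑ s ∈ Finset.range (n + 1),
            exactParts (k-1) (s - (1 + k * a)) * FF (k-1) ((n - s) - (1 + k * b)) :=
    fun a _ => Finset.sum_comm
  rw [Finset.sum_congr rfl hswap]
  have hinner : ∀ a ∈ Finset.range (n + 1), ∀ b ∈ Finset.range (n + 1),
      ∑ s ∈ Finset.range (n + 1),
          exactParts (k-1) (s - (1 + k * a)) * FF (k-1) ((n - s) - (1 + k * b))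
        = hCount (k-1) (n - (k * (a + b) + 2)) := by
    intro a _ b _
    rw [conv_shift hj (by omega) (by omega) n]
    congr 1
    rw [Nat.mul_add]
    omega
  rw [Finset.sum_congr rfl (fun a ha => Finset.sum_congr rfl (hinner a ha))]
  rw [pair_sum (n + 1) (fun i => hCount (k-1) (n - (k * i + 2))) (by
    intro i hi
    have hki : i ≤ k * i := Nat.le_mul_of_pos_left i (by omega)
    have hz : n - (k * i + 2) = 0 := by omega
    rw [hz]
    exact hCount_small hj (by omega))]
  symm
  have hsub : Finset.range (n / k - 1) ⊆ Finset.range (n + 1) := by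
    intro i hi
    have h1 := Finset.mem_range.1 hi
    have h2 := Nat.div_le_self n k
    exact Finset.mem_range.2 (by omega)
  have hre : ∀ i ∈ Finset.range (n / k - 1),
      (i + 1) * hCount (k - 1) (n - k * i - 2)
        = (i + 1) * hCount (k-1) (n - (k * i + 2)) := by
    intro i _
    have hz : n - k * i - 2 = n - (k * i + 2) := by omega
    rw [hz]
  rw [Finset.sum_congr rfl hre]
  apply Finset.sum_subset hsub
  intro i hi hni
  have h1 := Finset.mem_range.1 hi
  have h2 : ¬ i < n / k - 1 := fun h => hni (Finset.mem_range.2 h)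
  have hdm := Nat.div_add_mod n k
  have hmlt : n % k < k := Nat.mod_lt _ (by omega)
  have hmul : k * (n / k) ≤ k * (i + 1) := Nat.mul_le_mul_left k (by omega)
  have hexp : k * (i + 1) = k * i + k := Nat.mul_succ k i
  rw [hCount_small hj (by omega), Nat.mul_zero]
end

section
/- For all k ≥ 2 and n ≥ 0, k^2 · h_k(n) ≤ n^2 · h_{k-1}(n), where h_k(n) counts pairs (α,β) of partitions with |α|+|β|=n, each having exactly k parts, and the largest part of β appearing at least twice. -/
namespace HCountAux

open Multiset

/-- minimum element of a multiset of naturals (junk value for `0`). -/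
def minP (m : Multiset ℕ) : ℕ := (m.sort (· ≤ ·)).headI

lemma minP_spec {m : Multiset ℕ} (h : m ≠ 0) : minP m ∈ m ∧ ∀ x ∈ m, minP m ≤ x := by
  rcases hl : m.sort (· ≤ ·) with _ | ⟨a, t⟩
  · exfalso
    apply h
    have h2 := Multiset.sort_eq m (· ≤ ·)
    rw [hl] at h2
    simpa using h2.symm
  · have hm : ((a :: t : List ℕ) : Multiset ℕ) = m := by
      rw [← hl]; exact Multiset.sort_eq m _
    have hs : List.Pairwise (· ≤ ·) (a :: t) := by
      rw [← hl]; exact Multiset.pairwise_sort m _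
    have hmin : minP m = a := by rw [minP, hl]; rfl
    constructor
    · rw [hmin, ← hm]
      simp
    · intro x hx
      rw [hmin]
      rw [← hm, Multiset.mem_coe, List.mem_cons] at hx
      rcases hx with rfl | hx
      · exact le_rfl
      · exact List.rel_of_pairwise_cons hs hx

lemma sup_mem : ∀ (m : Multiset ℕ), m ≠ 0 → m.sup ∈ m := by
  intro m
  induction m using Multiset.induction_on with
  | empty => intro h; exact absurd rfl h
  | cons a s ih =>
    intro _
    rw [Multiset.sup_cons]
    rcases eq_or_ne s 0 with rfl | hs
    · simp
    · rcases le_total a s.sup with h | h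
      · rw [sup_eq_right.mpr h]; exact Multiset.mem_cons_of_mem (ih hs)
      · rw [sup_eq_left.mpr h]; exact Multiset.mem_cons_self a s

lemma sup_mem_erase_minP {m : Multiset ℕ} (h : 2 ≤ Multiset.card m) :
    m.sup ∈ m.erase (minP m) := by
  have h0 : m ≠ 0 := by rintro rfl; simp at h
  by_cases he : minP m = m.sup
  · have hall : ∀ x ∈ m, m.sup = x := fun x hx =>
      le_antisymm (by rw [← he]; exact (minP_spec h0).2 x hx) (Multiset.le_sup hx)
    have hc : m.count m.sup = Multiset.card m := Multiset.count_eq_card.mpr hall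
    have hp : 0 < (m.erase (minP m)).count m.sup := by
      rw [he, Multiset.count_erase_self, hc]; omega
    exact Multiset.count_pos.mp hp
  · exact (Multiset.mem_erase_of_ne (fun hh => he hh.symm)).mpr (sup_mem m h0)

lemma sup_erase_minP {m : Multiset ℕ} (h : 2 ≤ Multiset.card m) :
    (m.erase (minP m)).sup = m.sup :=
  le_antisymm (Multiset.sup_le.mpr fun b hb => Multiset.le_sup (Multiset.mem_of_mem_erase hb))
    (Multiset.le_sup (sup_mem_erase_minP h))

lemma count_sup_erase_minP {m : Multiset ℕ} (h3 : 3 ≤ Multiset.card m)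
    (h2 : 2 ≤ m.count m.sup) :
    2 ≤ (m.erase (minP m)).count (m.erase (minP m)).sup := by
  rw [sup_erase_minP (by omega)]
  by_cases he : minP m = m.sup
  · have h0 : m ≠ 0 := by rintro rfl; simp at h3
    have hall : ∀ x ∈ m, m.sup = x := fun x hx =>
      le_antisymm (by rw [← he]; exact (minP_spec h0).2 x hx) (Multiset.le_sup hx)
    have hc : m.count m.sup = Multiset.card m := Multiset.count_eq_card.mpr hall
    rw [he, Multiset.count_erase_self, hc]; omega
  · rw [Multiset.count_erase_of_ne (fun hh => he hh.symm)]; exact h2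

lemma card_mul_minP_le_sum {m : Multiset ℕ} (h : m ≠ 0) :
    Multiset.card m * minP m ≤ m.sum := by
  have h2 := Multiset.card_nsmul_le_sum (s := m) (a := minP m) (fun x hx => (minP_spec h).2 x hx)
  simpa [smul_eq_mul] using h2

lemma encode_lt {k n x a i : ℕ} (hx : x < k) (ha : 1 ≤ a) (hak : k * a ≤ i) (hin : i ≤ n) :
    x + (a - 1) * k < n := by
  have h1 : (a - 1) * k = a * k - 1 * k := Nat.sub_mul a 1 k
  rw [one_mul] at h1
  have h2 : k ≤ a * k := by
    calc k = 1 * k := (one_mul k).symm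
    _ ≤ a * k := Nat.mul_le_mul_right k ha
  have h3 : a * k ≤ i := by rw [mul_comm]; exact hak
  rcases Nat.exists_eq_add_of_le h2 with ⟨c, hc⟩
  rw [h1, hc]
  rw [hc] at h3
  omega

lemma decode_eq {k x x' a a' : ℕ} (hk : 0 < k) (hx : x < k) (hx' : x' < k)
    (ha : 1 ≤ a) (ha' : 1 ≤ a')
    (h : x + (a - 1) * k = x' + (a' - 1) * k) : x = x' ∧ a = a' := by
  have hm := congrArg (· % k) h
  simp only [Nat.add_mul_mod_self_right] at hm
  rw [Nat.mod_eq_of_lt hx, Nat.mod_eq_of_lt hx'] at hm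
  refine ⟨hm, ?_⟩
  rw [hm] at h
  have h2 : (a - 1) * k = (a' - 1) * k := Nat.add_left_cancel h
  have h3 : a - 1 = a' - 1 := Nat.eq_of_mul_eq_mul_right hk h2
  omega

lemma sup_cons_of_le {c : ℕ} {m : Multiset ℕ} (h : ∀ x ∈ m, x ≤ c) : (c ::ₘ m).sup = c := by
  rw [Multiset.sup_cons]; exact sup_eq_left.mpr (Multiset.sup_le.mpr h)

end HCountAux

namespace HCountAux

/-- move the smallest part of `α` onto the largest part, plus `s` extra. -/
def alphaMap {i : ℕ} (α : i.Partition) (s i' : ℕ) (h2 : 2 ≤ Multiset.card α.parts)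
    (hi' : i' = i + s) : i'.Partition where
  parts := (α.parts.sup + minP α.parts + s) ::ₘ
    ((α.parts.erase (minP α.parts)).erase α.parts.sup)
  parts_pos := by
    intro x hx
    rcases Multiset.mem_cons.mp hx with rfl | hx
    · have h0 : α.parts ≠ 0 := by intro he; rw [he] at h2; simp at h2
      have hp := α.parts_pos (minP_spec h0).1
      omega
    · exact α.parts_pos (Multiset.mem_of_mem_erase (Multiset.mem_of_mem_erase hx))
  parts_sum := by
    have h0 : α.parts ≠ 0 := by intro he; rw [he] at h2; simp at h2
    have e1 : minP α.parts ::ₘ α.parts.erase (minP α.parts) = α.parts :=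
      Multiset.cons_erase (minP_spec h0).1
    have e2 : α.parts.sup ::ₘ (α.parts.erase (minP α.parts)).erase α.parts.sup
        = α.parts.erase (minP α.parts) := Multiset.cons_erase (sup_mem_erase_minP h2)
    have hs1 := congrArg Multiset.sum e1
    have hs2 := congrArg Multiset.sum e2
    rw [Multiset.sum_cons] at hs1 hs2
    rw [α.parts_sum] at hs1
    rw [Multiset.sum_cons]
    omega

/-- remove the smallest part of `β`. -/
def betaMap {j : ℕ} (β : j.Partition) (j' : ℕ) (h0 : β.parts ≠ 0)
    (hj' : j' + minP β.parts = j) : j'.Partition where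
  parts := β.parts.erase (minP β.parts)
  parts_pos := by
    intro x hx
    exact β.parts_pos (Multiset.mem_of_mem_erase hx)
  parts_sum := by
    have e1 : minP β.parts ::ₘ β.parts.erase (minP β.parts) = β.parts :=
      Multiset.cons_erase (minP_spec h0).1
    have hs1 := congrArg Multiset.sum e1
    rw [Multiset.sum_cons, β.parts_sum] at hs1
    omega

def Ak (k i : ℕ) : Type := {p : i.Partition // p.parts.card = k}

def Bk (k j : ℕ) : Type := {p : j.Partition // p.parts.card = k ∧ 2 ≤ p.parts.count p.parts.sup}

def T (k n : ℕ) : Type := Σ i : Fin (n + 1), Ak k i.val × Bk k (n - i.val)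

instance (k i : ℕ) : Finite (Ak k i) := by unfold Ak; infer_instance
instance (k j : ℕ) : Finite (Bk k j) := by unfold Bk; infer_instance
instance (k n : ℕ) : Finite (T k n) := by unfold T; infer_instance

lemma hCount_eq_card (k n : ℕ) (hk : k ≠ 1) : hCount k n = Nat.card (T k n) := by
  classical
  have h1 : Nat.card (T k n)
      = ∑ i : Fin (n + 1), Nat.card (Ak k i.val) * Nat.card (Bk k (n - i.val)) := by
    letI : ∀ i : Fin (n + 1), Fintype (Ak k i.val) := fun i => Fintype.ofFinite _
    letI : ∀ i : Fin (n + 1), Fintype (Bk k (n - i.val)) := fun i => Fintype.ofFinite _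
    rw [show T k n = Σ i : Fin (n + 1), Ak k i.val × Bk k (n - i.val) from rfl]
    rw [Nat.card_eq_fintype_card, Fintype.card_sigma]
    exact Finset.sum_congr rfl fun i _ => by
      rw [Fintype.card_prod, Nat.card_eq_fintype_card, Nat.card_eq_fintype_card]
  rw [h1, Fin.sum_univ_eq_sum_range (fun i => Nat.card (Ak k i) * Nat.card (Bk k (n - i)))]
  unfold hCount
  rw [if_neg hk]
  rfl

end HCountAux

namespace HCountAux

def Fcore (k n : ℕ) (hk : 3 ≤ k) (x y : Fin k) (i : Fin (n + 1))
    (α : Ak k i.val) (β : Bk k (n - i.val)) : (Fin n × Fin n) × T (k - 1) n := by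
  have hα := α.2
  have hβc := β.2.1
  have hβt := β.2.2
  have h0a : α.val.parts ≠ 0 := by
    intro h; rw [h] at hα; simp at hα; omega
  have h0b : β.val.parts ≠ 0 := by
    intro h; rw [h] at hβc; simp at hβc; omega
  have ha1 : 1 ≤ minP α.val.parts := α.val.parts_pos (minP_spec h0a).1
  have hs1 : 1 ≤ minP β.val.parts := β.val.parts_pos (minP_spec h0b).1
  have haki : k * minP α.val.parts ≤ i.val := by
    have h := card_mul_minP_le_sum h0a
    rwa [hα, α.val.parts_sum] at h
  have hskj : k * minP β.val.parts ≤ n - i.val := by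
    have h := card_mul_minP_le_sum h0b
    rwa [hβc, β.val.parts_sum] at h
  have hsle : minP β.val.parts ≤ n - i.val :=
    le_trans (Nat.le_mul_of_pos_left _ (by omega : 0 < k)) hskj
  have hile : i.val ≤ n := by have := i.isLt; omega
  refine ⟨⟨⟨x.val + (minP α.val.parts - 1) * k, encode_lt x.isLt ha1 haki hile⟩,
          ⟨y.val + (minP β.val.parts - 1) * k,
            encode_lt y.isLt hs1 hskj (by omega)⟩⟩,
         ⟨⟨i.val + minP β.val.parts, by omega⟩,
          ⟨alphaMap α.val (minP β.val.parts) _ (by omega) rfl, ?_⟩,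
          ⟨betaMap β.val (n - (i.val + minP β.val.parts)) h0b (by omega), ?_, ?_⟩⟩⟩
  · show Multiset.card (_ ::ₘ _) = k - 1
    rw [Multiset.card_cons,
      Multiset.card_erase_of_mem (sup_mem_erase_minP (by omega)),
      Multiset.card_erase_of_mem (minP_spec h0a).1, hα]
    simp only [Nat.pred_eq_sub_one]
    omega
  · show Multiset.card (β.val.parts.erase (minP β.val.parts)) = k - 1
    rw [Multiset.card_erase_of_mem (minP_spec h0b).1, hβc]
    simp only [Nat.pred_eq_sub_one]
  · exact count_sup_erase_minP (by omega) hβt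

def F (k n : ℕ) (hk : 3 ≤ k) (p : (Fin k × Fin k) × T k n) :
    (Fin n × Fin n) × T (k - 1) n :=
  Fcore k n hk p.1.1 p.1.2 p.2.1 p.2.2.1 p.2.2.2

lemma F_inj (k n : ℕ) (hk : 3 ≤ k) : Function.Injective (F k n hk) := by
  rintro ⟨⟨x, y⟩, ⟨i, α, β⟩⟩ ⟨⟨x', y'⟩, ⟨i', α', β'⟩⟩ h
  have e1 : x.val + (minP α.val.parts - 1) * k = x'.val + (minP α'.val.parts - 1) * k :=
    congrArg (fun r => r.1.1.val) h
  have e2 : y.val + (minP β.val.parts - 1) * k = y'.val + (minP β'.val.parts - 1) * k :=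
    congrArg (fun r => r.1.2.val) h
  have e3 : i.val + minP β.val.parts = i'.val + minP β'.val.parts :=
    congrArg (fun r => r.2.1.val) h
  have e4 : (α.val.parts.sup + minP α.val.parts + minP β.val.parts) ::ₘ
      ((α.val.parts.erase (minP α.val.parts)).erase α.val.parts.sup)
      = (α'.val.parts.sup + minP α'.val.parts + minP β'.val.parts) ::ₘ
      ((α'.val.parts.erase (minP α'.val.parts)).erase α'.val.parts.sup) :=
    congrArg (fun r => r.2.2.1.val.parts) h
  have e5 : β.val.parts.erase (minP β.val.parts) = β'.val.parts.erase (minP β'.val.parts) :=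
    congrArg (fun r => r.2.2.2.val.parts) h
  have hα := α.2
  have hα' := α'.2
  obtain ⟨hβc, hβt⟩ := β.2
  obtain ⟨hβc', hβt'⟩ := β'.2
  have h0a : α.val.parts ≠ 0 := by intro hh; rw [hh] at hα; simp at hα; omega
  have h0a' : α'.val.parts ≠ 0 := by intro hh; rw [hh] at hα'; simp at hα'; omega
  have h0b : β.val.parts ≠ 0 := by intro hh; rw [hh] at hβc; simp at hβc; omega
  have h0b' : β'.val.parts ≠ 0 := by intro hh; rw [hh] at hβc'; simp at hβc'; omega
  have ha1 : 1 ≤ minP α.val.parts := α.val.parts_pos (minP_spec h0a).1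
  have ha1' : 1 ≤ minP α'.val.parts := α'.val.parts_pos (minP_spec h0a').1
  have hs1 : 1 ≤ minP β.val.parts := β.val.parts_pos (minP_spec h0b).1
  have hs1' : 1 ≤ minP β'.val.parts := β'.val.parts_pos (minP_spec h0b').1
  obtain ⟨hxx, haa⟩ := decode_eq (by omega) x.isLt x'.isLt ha1 ha1' e1
  obtain ⟨hyy, hss⟩ := decode_eq (by omega) y.isLt y'.isLt hs1 hs1' e2
  have hii : i.val = i'.val := by omega
  have hi : i = i' := Fin.ext hii
  subst hi
  have hbp : β.val.parts = β'.val.parts := by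
    rw [← Multiset.cons_erase (minP_spec h0b).1, ← Multiset.cons_erase (minP_spec h0b').1,
      e5, hss]
  have hsup4 : α.val.parts.sup + minP α.val.parts + minP β.val.parts
      = α'.val.parts.sup + minP α'.val.parts + minP β'.val.parts := by
    have t1 := congrArg Multiset.sup e4
    rw [sup_cons_of_le (fun z hz => le_trans
        (Multiset.le_sup (Multiset.mem_of_mem_erase (Multiset.mem_of_mem_erase hz)))
        (by omega)),
      sup_cons_of_le (fun z hz => le_trans
        (Multiset.le_sup (Multiset.mem_of_mem_erase (Multiset.mem_of_mem_erase hz)))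
        (by omega))] at t1
    exact t1
  have hMM : α.val.parts.sup = α'.val.parts.sup := by omega
  have e4' : (α.val.parts.erase (minP α.val.parts)).erase α.val.parts.sup
      = (α'.val.parts.erase (minP α'.val.parts)).erase α'.val.parts.sup := by
    have t2 := e4
    rw [← hsup4] at t2
    exact (Multiset.cons_inj_right _).mp t2
  have hap : α.val.parts = α'.val.parts := by
    calc α.val.parts
        = minP α.val.parts ::ₘ α.val.parts.erase (minP α.val.parts) :=
          (Multiset.cons_erase (minP_spec h0a).1).symm
      _ = minP α.val.parts ::ₘ (α.val.parts.sup ::ₘ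
            (α.val.parts.erase (minP α.val.parts)).erase α.val.parts.sup) := by
          rw [Multiset.cons_erase (sup_mem_erase_minP (by omega))]
      _ = minP α'.val.parts ::ₘ (α'.val.parts.sup ::ₘ
            (α'.val.parts.erase (minP α'.val.parts)).erase α'.val.parts.sup) := by
          rw [e4', haa, hMM]
      _ = minP α'.val.parts ::ₘ α'.val.parts.erase (minP α'.val.parts) := by
          rw [Multiset.cons_erase (sup_mem_erase_minP (by omega))]
      _ = α'.val.parts := Multiset.cons_erase (minP_spec h0a').1
  have hαeq : α = α' := Subtype.ext (Nat.Partition.ext hap)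
  have hβeq : β = β' := Subtype.ext (Nat.Partition.ext hbp)
  have hx : x = x' := Fin.ext hxx
  have hy : y = y' := Fin.ext hyy
  subst hαeq; subst hβeq; subst hx; subst hy
  rfl

lemma step3 (k n : ℕ) (hk : 3 ≤ k) :
    k ^ 2 * hCount k n ≤ n ^ 2 * hCount (k - 1) n := by
  rw [hCount_eq_card k n (by omega), hCount_eq_card (k - 1) n (by omega)]
  have hck : Nat.card (Fin k) = k := by rw [Nat.card_eq_fintype_card, Fintype.card_fin]
  have hcn : Nat.card (Fin n) = n := by rw [Nat.card_eq_fintype_card, Fintype.card_fin]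
  have h1 : k ^ 2 * Nat.card (T k n) = Nat.card ((Fin k × Fin k) × T k n) := by
    rw [Nat.card_prod, Nat.card_prod, hck]; ring
  have h2 : n ^ 2 * Nat.card (T (k - 1) n) = Nat.card ((Fin n × Fin n) × T (k - 1) n) := by
    rw [Nat.card_prod, Nat.card_prod, hcn]; ring
  rw [h1, h2]
  exact Nat.card_le_card_of_injective (F k n hk) (F_inj k n hk)

end HCountAux

namespace HCountAux

def F2core (n : ℕ) (x y : Fin 2) (i : Fin (n + 1))
    (α : Ak 2 i.val) (β : Bk 2 (n - i.val)) : Fin n × Fin n := by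
  have hα := α.2
  have hβc := β.2.1
  have h0a : α.val.parts ≠ 0 := by
    intro h; rw [h] at hα; simp at hα
  have h0b : β.val.parts ≠ 0 := by
    intro h; rw [h] at hβc; simp at hβc
  have ha1 : 1 ≤ minP α.val.parts := α.val.parts_pos (minP_spec h0a).1
  have hs1 : 1 ≤ minP β.val.parts := β.val.parts_pos (minP_spec h0b).1
  have haki : 2 * minP α.val.parts ≤ i.val := by
    have h := card_mul_minP_le_sum h0a
    rwa [hα, α.val.parts_sum] at h
  have hskj : 2 * minP β.val.parts ≤ n - i.val := by
    have h := card_mul_minP_le_sum h0b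
    rwa [hβc, β.val.parts_sum] at h
  have hile : i.val ≤ n := by have := i.isLt; omega
  exact ⟨⟨x.val + (minP α.val.parts - 1) * 2, encode_lt x.isLt ha1 haki hile⟩,
         ⟨y.val + (minP β.val.parts - 1) * 2, encode_lt y.isLt hs1 hskj (by omega)⟩⟩

def F2 (n : ℕ) (p : (Fin 2 × Fin 2) × T 2 n) : Fin n × Fin n :=
  F2core n p.1.1 p.1.2 p.2.1 p.2.2.1 p.2.2.2

lemma F2_inj (n : ℕ) : Function.Injective (F2 n) := by
  rintro ⟨⟨x, y⟩, ⟨i, α, β⟩⟩ ⟨⟨x', y'⟩, ⟨i', α', β'⟩⟩ h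
  have e1 : x.val + (minP α.val.parts - 1) * 2 = x'.val + (minP α'.val.parts - 1) * 2 :=
    congrArg (fun r => r.1.val) h
  have e2 : y.val + (minP β.val.parts - 1) * 2 = y'.val + (minP β'.val.parts - 1) * 2 :=
    congrArg (fun r => r.2.val) h
  have hα := α.2
  have hα' := α'.2
  obtain ⟨hβc, hβt⟩ := β.2
  obtain ⟨hβc', hβt'⟩ := β'.2
  have h0a : α.val.parts ≠ 0 := by intro hh; rw [hh] at hα; simp at hα
  have h0a' : α'.val.parts ≠ 0 := by intro hh; rw [hh] at hα'; simp at hα'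
  have h0b : β.val.parts ≠ 0 := by intro hh; rw [hh] at hβc; simp at hβc
  have h0b' : β'.val.parts ≠ 0 := by intro hh; rw [hh] at hβc'; simp at hβc'
  have ha1 : 1 ≤ minP α.val.parts := α.val.parts_pos (minP_spec h0a).1
  have ha1' : 1 ≤ minP α'.val.parts := α'.val.parts_pos (minP_spec h0a').1
  have hs1 : 1 ≤ minP β.val.parts := β.val.parts_pos (minP_spec h0b).1
  have hs1' : 1 ≤ minP β'.val.parts := β'.val.parts_pos (minP_spec h0b').1
  obtain ⟨hxx, haa⟩ := decode_eq (by omega) x.isLt x'.isLt ha1 ha1' e1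
  obtain ⟨hyy, hss⟩ := decode_eq (by omega) y.isLt y'.isLt hs1 hs1' e2
  -- β is two copies of its top
  have hball : ∀ z ∈ β.val.parts, z = β.val.parts.sup := by
    have hcc : Multiset.count β.val.parts.sup β.val.parts = Multiset.card β.val.parts :=
      le_antisymm (Multiset.count_le_card _ _) (by rw [hβc]; exact hβt)
    intro z hz
    exact (Multiset.count_eq_card.mp hcc z hz).symm
  have hball' : ∀ z ∈ β'.val.parts, z = β'.val.parts.sup := by
    have hcc : Multiset.count β'.val.parts.sup β'.val.parts = Multiset.card β'.val.parts :=
      le_antisymm (Multiset.count_le_card _ _) (by rw [hβc']; exact hβt')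
    intro z hz
    exact (Multiset.count_eq_card.mp hcc z hz).symm
  have hmins : minP β.val.parts = β.val.parts.sup := hball _ (minP_spec h0b).1
  have hmins' : minP β'.val.parts = β'.val.parts.sup := hball' _ (minP_spec h0b').1
  have hrep : β.val.parts = Multiset.replicate 2 (minP β.val.parts) := by
    have h1 := Multiset.eq_replicate_card.mpr hball
    rw [hβc, ← hmins] at h1
    exact h1
  have hrep' : β'.val.parts = Multiset.replicate 2 (minP β'.val.parts) := by
    have h1 := Multiset.eq_replicate_card.mpr hball'
    rw [hβc', ← hmins'] at h1
    exact h1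
  have hsum : n - i.val = 2 * minP β.val.parts := by
    have h1 := β.val.parts_sum
    rw [hrep, Multiset.sum_replicate, smul_eq_mul] at h1
    exact h1.symm
  have hsum' : n - i'.val = 2 * minP β'.val.parts := by
    have h1 := β'.val.parts_sum
    rw [hrep', Multiset.sum_replicate, smul_eq_mul] at h1
    exact h1.symm
  -- recover i
  have hii : i.val = i'.val := by
    have hs2 : 2 * minP β.val.parts ≥ 2 := by omega
    have h1 := i.isLt
    have h2 := i'.isLt
    omega
  have hi : i = i' := Fin.ext hii
  subst hi
  have hbp : β.val.parts = β'.val.parts := by rw [hrep, hrep', hss]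
  -- recover α
  have hone : Multiset.card (α.val.parts.erase (minP α.val.parts)) = 1 := by
    rw [Multiset.card_erase_of_mem (minP_spec h0a).1, hα]; rfl
  have hone' : Multiset.card (α'.val.parts.erase (minP α'.val.parts)) = 1 := by
    rw [Multiset.card_erase_of_mem (minP_spec h0a').1, hα']; rfl
  obtain ⟨c, hc⟩ := Multiset.card_eq_one.mp hone
  obtain ⟨c', hc'⟩ := Multiset.card_eq_one.mp hone'
  have hsc : minP α.val.parts + c = i.val := by
    have h1 := congrArg Multiset.sum (Multiset.cons_erase (minP_spec h0a).1)
    rw [Multiset.sum_cons, hc, α.val.parts_sum] at h1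
    simpa using h1
  have hsc' : minP α'.val.parts + c' = i.val := by
    have h1 := congrArg Multiset.sum (Multiset.cons_erase (minP_spec h0a').1)
    rw [Multiset.sum_cons, hc', α'.val.parts_sum] at h1
    simpa using h1
  have hcc : c = c' := by omega
  have hap : α.val.parts = α'.val.parts := by
    rw [← Multiset.cons_erase (minP_spec h0a).1, ← Multiset.cons_erase (minP_spec h0a').1,
      hc, hc', haa, hcc]
  have hαeq : α = α' := Subtype.ext (Nat.Partition.ext hap)
  have hβeq : β = β' := Subtype.ext (Nat.Partition.ext hbp)
  have hx : x = x' := Fin.ext hxx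
  have hy : y = y' := Fin.ext hyy
  subst hαeq; subst hβeq; subst hx; subst hy
  rfl

lemma step2 (n : ℕ) : 2 ^ 2 * hCount 2 n ≤ n ^ 2 * hCount 1 n := by
  by_cases hz : hCount 2 n = 0
  · simp [hz]
  · have hcard : hCount 2 n = Nat.card (T 2 n) := hCount_eq_card 2 n (by omega)
    have hne : Nat.card (T 2 n) ≠ 0 := by rw [← hcard]; exact hz
    have hnonempty : Nonempty (T 2 n) := (Nat.card_ne_zero.mp hne).1
    obtain ⟨⟨i, α, β⟩⟩ := hnonempty
    have hn2 : 2 ≤ n := by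
      have hβc := β.2.1
      have h2 : 2 ≤ β.val.parts.sum := by
        have h3 := Multiset.card_nsmul_le_sum (s := β.val.parts) (a := 1)
          (fun x hx => β.val.parts_pos hx)
        rw [hβc] at h3
        simpa using h3
      rw [β.val.parts_sum] at h2
      omega
    have h1 : hCount 1 n = 1 := by unfold hCount; rw [if_pos rfl, if_pos hn2]
    have hc2 : Nat.card (Fin 2) = 2 := by rw [Nat.card_eq_fintype_card, Fintype.card_fin]
    have hcn : Nat.card (Fin n) = n := by rw [Nat.card_eq_fintype_card, Fintype.card_fin]
    have hL : 2 ^ 2 * hCount 2 n = Nat.card ((Fin 2 × Fin 2) × T 2 n) := by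
      rw [hcard, Nat.card_prod, Nat.card_prod, hc2]; ring
    have hR : Nat.card (Fin n × Fin n) = n ^ 2 * hCount 1 n := by
      rw [h1, Nat.card_prod, hcn]; ring
    rw [hL, ← hR]
    exact Nat.card_le_card_of_injective (F2 n) (F2_inj n)

end HCountAux


/-- For `k ≥ 2` and `n ≥ 0`, `k² · h_k(n) ≤ n² · h_{k-1}(n)`. -/
theorem hCount_bound (k n : ℕ) (hk : 2 ≤ k) :
    k ^ 2 * hCount k n ≤ n ^ 2 * hCount (k - 1) n := by
  rcases eq_or_lt_of_le hk with h2 | h3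
  · rw [← h2]
    exact HCountAux.step2 n
  · exact HCountAux.step3 k n h3
end

section
/- For all k ≥ 4 and all n ≥ 0, g_k(n) ≥ 21·h_k(n), where g_k(n) counts pairs of partitions of total size n each with at most k parts, and h_k(n) counts pairs (α,β) of partitions of total size n with α and β each having exactly k parts and the largest part of β appearing at least twice. -/
open PowerSeries

/-- The empty partition is included so that `exactPartsTopTwice k (m + k) = atMostPartsTopTwice k m`;
for `k ≥ 1` the generating function is `1 / (q²;q)_{k-1}`. -/
noncomputable def atMostPartsTopTwice (k n : ℕ) : ℕ :=
  Nat.card {p : n.Partition //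
    p.parts.card ≤ k ∧ (p.parts = 0 ∨ 2 ≤ p.parts.count p.parts.sup)}

def shrinkParts (P : Multiset ℕ) : Multiset ℕ := (P.filter (1 < ·)).map (· - 1)

def growParts (Q : Multiset ℕ) (r : ℕ) : Multiset ℕ := Q.map (· + 1) + Multiset.replicate r 1

theorem pos_of_mem_shrinkParts {P : Multiset ℕ} {a : ℕ} (ha : a ∈ shrinkParts P) : 0 < a := by
  obtain ⟨b, hb, rfl⟩ := Multiset.mem_map.1 ha
  have := (Multiset.mem_filter.1 hb).2
  omega

theorem pos_of_mem_growParts {Q : Multiset ℕ} {r a : ℕ} (ha : a ∈ growParts Q r) : 0 < a := by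
  rcases Multiset.mem_add.1 ha with h | h
  · obtain ⟨b, -, rfl⟩ := Multiset.mem_map.1 h
    exact b.succ_pos
  · rw [Multiset.eq_of_mem_replicate h]
    exact one_pos

theorem card_growParts (Q : Multiset ℕ) (r : ℕ) : (growParts Q r).card = Q.card + r := by
  simp [growParts]

theorem sum_growParts (Q : Multiset ℕ) (r : ℕ) : (growParts Q r).sum = Q.sum + Q.card + r := by
  simp [growParts, Multiset.sum_map_add]

theorem growParts_shrinkParts {P : Multiset ℕ} (hP : ∀ {a}, a ∈ P → 0 < a) :
    growParts (shrinkParts P) (P.count 1) = P := by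
  have hbig : (shrinkParts P).map (· + 1) = P.filter (1 < ·) := by
    rw [shrinkParts, Multiset.map_map]
    refine (Multiset.map_congr rfl fun a ha => ?_).trans (Multiset.map_id _)
    have := (Multiset.mem_filter.1 ha).2
    simp only [Function.comp_apply, id]
    omega
  have hones : P.filter (fun a => ¬ 1 < a) = Multiset.replicate (P.count 1) 1 := by
    rw [← Multiset.filter_eq']
    refine Multiset.filter_congr fun a ha => ?_
    have := hP ha
    omega
  rw [growParts, hbig, ← hones, Multiset.filter_add_not]

theorem shrinkParts_growParts {Q : Multiset ℕ} (hQ : ∀ {a}, a ∈ Q → 0 < a) (r : ℕ) :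
    shrinkParts (growParts Q r) = Q := by
  have hones : (Multiset.replicate r 1).filter (1 < ·) = 0 :=
    Multiset.filter_eq_nil.2 fun a ha => by simp [Multiset.eq_of_mem_replicate ha]
  rw [shrinkParts, growParts, Multiset.filter_add, hones, add_zero, Multiset.filter_map,
    Multiset.filter_eq_self.2 fun a ha => by simpa using hQ ha, Multiset.map_map]
  exact (Multiset.map_congr rfl fun a _ => by simp).trans (Multiset.map_id _)

theorem card_shrinkParts_add_count {P : Multiset ℕ} (hP : ∀ {a}, a ∈ P → 0 < a) :
    (shrinkParts P).card + P.count 1 = P.card := by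
  conv_rhs => rw [← growParts_shrinkParts hP]
  rw [card_growParts]

theorem sum_shrinkParts_add_card {P : Multiset ℕ} (hP : ∀ {a}, a ∈ P → 0 < a) :
    (shrinkParts P).sum + P.card = P.sum := by
  conv_rhs => rw [← growParts_shrinkParts hP]
  rw [sum_growParts, ← card_shrinkParts_add_count hP, add_assoc]

def exactPartsEquivAtMostParts (m k : ℕ) :
    {p : (m + k).Partition // p.parts.card = k} ≃ {q : m.Partition // q.parts.card ≤ k} where
  toFun p :=
    ⟨⟨shrinkParts p.1.parts, pos_of_mem_shrinkParts, by
        have := sum_shrinkParts_add_card p.1.parts_pos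
        rw [p.2, p.1.parts_sum] at this
        omega⟩, by
      have := card_shrinkParts_add_count p.1.parts_pos
      rw [p.2] at this
      change (shrinkParts p.1.parts).card ≤ k
      omega⟩
  invFun q :=
    ⟨⟨growParts q.1.parts (k - q.1.parts.card), pos_of_mem_growParts, by
        rw [sum_growParts, q.1.parts_sum]
        have := q.2
        omega⟩, by
      rw [card_growParts]
      have := q.2
      omega⟩
  left_inv p := by
    refine Subtype.ext (Nat.Partition.ext ?_)
    have := card_shrinkParts_add_count p.1.parts_pos
    rw [p.2] at this
    change growParts _ _ = _
    rw [show k - (shrinkParts p.1.parts).card = p.1.parts.count 1 by omega,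
      growParts_shrinkParts p.1.parts_pos]
  right_inv q := Subtype.ext (Nat.Partition.ext (shrinkParts_growParts q.1.parts_pos _))

theorem shrinkParts_eq_zero_iff {P : Multiset ℕ} : shrinkParts P = 0 ↔ ∀ a ∈ P, a ≤ 1 := by
  simp [shrinkParts, Multiset.filter_eq_nil]

theorem sup_shrinkParts (P : Multiset ℕ) : (shrinkParts P).sup = P.sup - 1 := by
  refine le_antisymm (Multiset.sup_le.2 fun b hb => ?_) ?_
  · obtain ⟨a, ha, rfl⟩ := Multiset.mem_map.1 hb
    have := Multiset.le_sup (Multiset.mem_filter.1 ha).1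
    omega
  · suffices P.sup ≤ (shrinkParts P).sup + 1 by omega
    refine Multiset.sup_le.2 fun a ha => ?_
    by_cases h : 1 < a
    · have : a - 1 ∈ shrinkParts P := Multiset.mem_map_of_mem _ (Multiset.mem_filter.2 ⟨ha, h⟩)
      have := Multiset.le_sup this
      omega
    · omega

theorem count_shrinkParts (P : Multiset ℕ) {a : ℕ} (ha : 2 ≤ a) :
    (shrinkParts P).count (a - 1) = P.count a := by
  rw [shrinkParts, Multiset.count_map, Multiset.filter_filter, Multiset.count_eq_card_filter_eq]
  congr 1
  refine Multiset.filter_congr fun b _ => ?_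
  omega

theorem two_le_count_sup_iff_shrinkParts {P : Multiset ℕ} (hP : ∀ {a}, a ∈ P → 0 < a)
    (hcard : 2 ≤ P.card) :
    2 ≤ P.count P.sup ↔ shrinkParts P = 0 ∨ 2 ≤ (shrinkParts P).count (shrinkParts P).sup := by
  by_cases hsup : 2 ≤ P.sup
  · have hne : shrinkParts P ≠ 0 := fun h => by
      have := Multiset.sup_le.2 (shrinkParts_eq_zero_iff.1 h)
      omega
    rw [sup_shrinkParts, count_shrinkParts P hsup]
    simp [hne]
  · have hones : ∀ a ∈ P, a = 1 := fun a ha => by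
      have := Multiset.le_sup ha
      have := hP ha
      omega
    obtain ⟨a, ha⟩ := Multiset.card_pos_iff_exists_mem.1 (by omega : 0 < P.card)
    have hsup1 : P.sup = 1 := by
      have := Multiset.le_sup ha
      have := hones a ha
      omega
    rw [hsup1, Multiset.count_eq_card.2 fun b hb => (hones b hb).symm]
    simp [hcard, shrinkParts_eq_zero_iff.2 fun b hb => (hones b hb).le]

theorem Nat.Partition.card_parts_le {n : ℕ} (p : n.Partition) : p.parts.card ≤ n := by
  simpa [← p.parts_sum] using Multiset.card_nsmul_le_sum fun a (ha : a ∈ p.parts) => p.parts_pos ha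

theorem exactParts_add (m k : ℕ) : exactParts k (m + k) = atMostParts k m :=
  Nat.card_congr (exactPartsEquivAtMostParts m k)

theorem exactPartsTopTwice_add {k : ℕ} (hk : 2 ≤ k) (m : ℕ) :
    exactPartsTopTwice k (m + k) = atMostPartsTopTwice k m := by
  refine Nat.card_congr ((Equiv.subtypeSubtypeEquivSubtypeInter _ _).symm.trans
    (((exactPartsEquivAtMostParts m k).subtypeEquiv fun p => ?_).trans
      (Equiv.subtypeSubtypeEquivSubtypeInter _ _)))
  exact two_le_count_sup_iff_shrinkParts p.1.parts_pos (p.2.symm ▸ hk)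

theorem natCard_subtype_eq_add {α : Type*} [Finite α] {p q r : α → Prop}
    (h : ∀ x, p x ↔ q x ∨ r x) (hqr : ∀ x, q x → ¬ r x) :
    Nat.card {x // p x} = Nat.card {x // q x} + Nat.card {x // r x} := by
  classical
  rw [← Nat.card_sum]
  exact Nat.card_congr ((Equiv.subtypeEquivRight h).trans
    (subtypeOrEquiv q r fun _ hq hr x hx => hqr x (hq x hx) (hr x hx)))

theorem exactParts_of_lt {k n : ℕ} (h : n < k) : exactParts k n = 0 := by
  have : IsEmpty {p : n.Partition // p.parts.card = k} :=
    ⟨fun p => by have := p.1.card_parts_le; omega⟩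
  exact Nat.card_of_isEmpty

theorem exactPartsTopTwice_of_lt {k n : ℕ} (h : n < k) : exactPartsTopTwice k n = 0 := by
  have : IsEmpty {p : n.Partition // p.parts.card = k ∧ 2 ≤ p.parts.count p.parts.sup} :=
    ⟨fun p => by have := p.1.card_parts_le; omega⟩
  exact Nat.card_of_isEmpty

theorem atMostParts_succ (k n : ℕ) :
    atMostParts (k + 1) n = atMostParts k n + exactParts (k + 1) n :=
  natCard_subtype_eq_add (fun _ => Nat.le_succ_iff) fun _ h h' => by omega

theorem atMostPartsTopTwice_succ (k n : ℕ) :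
    atMostPartsTopTwice (k + 1) n = atMostPartsTopTwice k n + exactPartsTopTwice (k + 1) n := by
  refine natCard_subtype_eq_add (fun p => ?_) fun _ h h' => by omega
  rcases eq_or_ne p.parts.card (k + 1) with hc | hc
  · have : p.parts ≠ 0 := fun h => by simp [h] at hc
    simp [hc, this]
  · have : p.parts.card ≤ k + 1 ↔ p.parts.card ≤ k := by omega
    simp [hc, this]

section Recurrence

variable {R : Type*} [Semiring R]

theorem coeff_mk_mul_mk (f g : ℕ → R) (n : ℕ) :
    coeff n (mk f * mk g) = ∑ i ∈ Finset.range (n + 1), f i * g (n - i) := by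
  simp only [coeff_mul, coeff_mk]
  exact Finset.Nat.sum_antidiagonal_eq_sum_range_succ (fun i j => f i * g j) n

theorem coeff_mul_mk_one (φ : R⟦X⟧) (n : ℕ) :
    coeff n (φ * mk 1) = ∑ i ∈ Finset.range (n + 1), coeff i φ := by
  simp only [coeff_mul, coeff_mk, Pi.one_apply, mul_one]
  exact Finset.Nat.sum_antidiagonal_eq_sum_range_succ (fun i _ => coeff i φ) n

theorem coeff_of_eq_add_X_pow_mul {κ : ℕ} {φ φ' : R⟦X⟧} (hφ : φ' = φ + X ^ κ * φ') (n : ℕ) :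
    coeff n φ' = coeff n φ + if κ ≤ n then coeff (n - κ) φ' else 0 := by
  conv_lhs => rw [hφ]
  rw [map_add, coeff_X_pow_mul']

theorem eq_of_eq_add_X_pow_mul {κ : ℕ} (hκ : 0 < κ) {ψ φ φ' : R⟦X⟧}
    (hφ : φ = ψ + X ^ κ * φ) (hφ' : φ' = ψ + X ^ κ * φ') : φ = φ' := by
  ext n
  induction n using Nat.strong_induction_on with
  | _ n ih =>
    rw [coeff_of_eq_add_X_pow_mul hφ, coeff_of_eq_add_X_pow_mul hφ']
    split_ifs with h
    · rw [ih (n - κ) (by omega)]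
    · rfl

theorem mul_eq_add_X_pow_mul_of_eq_add_X_pow_mul {R : Type*} [CommSemiring R] {κ : ℕ}
    {φ φ' : R⟦X⟧} (hφ : φ' = φ + X ^ κ * φ') (ψ : R⟦X⟧) :
    φ' * ψ = φ * ψ + X ^ κ * (φ' * ψ) := by
  conv_lhs => rw [hφ]
  ring

theorem mk_one_eq_one_add_X_mul : (mk 1 : R⟦X⟧) = 1 + X * mk 1 := by
  ext (_ | n) <;> simp [coeff_one, coeff_succ_X_mul]

end Recurrence

theorem mk_exactParts (k : ℕ) : mk (exactParts k) = X ^ k * mk (atMostParts k) := by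
  ext n
  rw [coeff_mk, coeff_X_pow_mul', coeff_mk]
  split_ifs with h
  · rw [← exactParts_add, Nat.sub_add_cancel h]
  · exact exactParts_of_lt (by omega)

theorem mk_exactPartsTopTwice {k : ℕ} (hk : 2 ≤ k) :
    mk (exactPartsTopTwice k) = X ^ k * mk (atMostPartsTopTwice k) := by
  ext n
  rw [coeff_mk, coeff_X_pow_mul', coeff_mk]
  split_ifs with h
  · rw [← exactPartsTopTwice_add hk, Nat.sub_add_cancel h]
  · exact exactPartsTopTwice_of_lt (by omega)

theorem mk_natCard_eq_one {P : ∀ n, n.Partition → Prop} (hP : ∀ n p, P n p ↔ p.parts = 0) :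
    mk (fun n => Nat.card {p : n.Partition // P n p}) = 1 := by
  ext n
  rw [coeff_mk, coeff_one]
  split_ifs with hn
  · subst hn
    have : Unique {p : Nat.Partition 0 // P 0 p} :=
      (Equiv.subtypeUnivEquiv fun p => (hP 0 p).2 p.partition_zero_parts).unique
    exact Nat.card_unique
  · have : IsEmpty {p : n.Partition // P n p} := ⟨fun p => hn <| by
      rw [← p.1.parts_sum, (hP n p.1).1 p.2, Multiset.sum_zero]⟩
    exact Nat.card_of_isEmpty

theorem mk_atMostParts_zero : mk (atMostParts 0) = 1 :=
  mk_natCard_eq_one fun _ _ => by simp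

theorem mk_atMostPartsTopTwice_one : mk (atMostPartsTopTwice 1) = 1 :=
  mk_natCard_eq_one fun _ p => by
    have := Multiset.count_le_card p.parts.sup p.parts
    constructor
    · rintro ⟨h1, h | h⟩
      · exact h
      · omega
    · intro h
      simp [h]

theorem mk_atMostParts_succ (k : ℕ) :
    mk (atMostParts (k + 1)) = mk (atMostParts k) + X ^ (k + 1) * mk (atMostParts (k + 1)) := by
  rw [← mk_exactParts]
  ext n
  simp [atMostParts_succ]

theorem mk_atMostPartsTopTwice_succ {k : ℕ} (hk : 1 ≤ k) :
    mk (atMostPartsTopTwice (k + 1)) =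
      mk (atMostPartsTopTwice k) + X ^ (k + 1) * mk (atMostPartsTopTwice (k + 1)) := by
  rw [← mk_exactPartsTopTwice (by omega)]
  ext n
  simp [atMostPartsTopTwice_succ]

theorem mk_atMostParts_one : mk (atMostParts 1) = mk 1 :=
  eq_of_eq_add_X_pow_mul one_pos (by simpa [mk_atMostParts_zero] using mk_atMostParts_succ 0)
    (by rw [pow_one]; exact mk_one_eq_one_add_X_mul)

theorem mk_atMostParts_eq_mul {k : ℕ} (hk : 1 ≤ k) :
    mk (atMostParts k) = mk (atMostPartsTopTwice k) * mk 1 := by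
  induction k, hk using Nat.le_induction with
  | base => rw [mk_atMostPartsTopTwice_one, one_mul, mk_atMostParts_one]
  | succ k hk ih =>
    refine eq_of_eq_add_X_pow_mul (by omega) (mk_atMostParts_succ k) ?_
    conv_lhs => rw [mk_atMostPartsTopTwice_succ hk]
    rw [ih]
    ring

/-- `pairSeries k k = (1 - q) / (q;q)_k²` is the series `C_k` of the argument, and
`pairSeries (k + 1) k` is the intermediate stage between `C_k` and `C_{k+1}`. -/
noncomputable def pairSeries (k l : ℕ) : ℕ⟦X⟧ :=
  mk (atMostParts k) * mk (atMostPartsTopTwice l)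

theorem pairSeries_succ_left (k l : ℕ) :
    pairSeries (k + 1) l = pairSeries k l + X ^ (k + 1) * pairSeries (k + 1) l :=
  mul_eq_add_X_pow_mul_of_eq_add_X_pow_mul (mk_atMostParts_succ k) _

theorem pairSeries_succ_right (k : ℕ) {l : ℕ} (hl : 1 ≤ l) :
    pairSeries k (l + 1) = pairSeries k l + X ^ (l + 1) * pairSeries k (l + 1) := by
  unfold pairSeries
  conv_lhs => rw [mk_atMostPartsTopTwice_succ hl]
  ring

theorem pairSeries_one_one : pairSeries 1 1 = mk 1 := by
  rw [pairSeries, mk_atMostParts_one, mk_atMostPartsTopTwice_one, mul_one]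

theorem gCount_eq_coeff {k : ℕ} (hk : 1 ≤ k) (n : ℕ) :
    gCount k n = coeff n (pairSeries k k * mk 1) := by
  rw [pairSeries, mul_assoc, ← mk_atMostParts_eq_mul hk, coeff_mk_mul_mk]
  rfl

theorem hCount_eq_coeff {k : ℕ} (hk : 2 ≤ k) (n : ℕ) :
    hCount k n = coeff n (X ^ (2 * k) * pairSeries k k) := by
  rw [hCount, if_neg (by omega), ← coeff_mk_mul_mk, mk_exactParts, mk_exactPartsTopTwice hk,
    pairSeries]
  ring_nf

/-- Here `coeff (M + J) (φ * mk 1)` is the partial sum of the coefficients of `φ` up to `M + J`. -/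
def SumDominates (r J N : ℕ) (φ : ℕ⟦X⟧) : Prop :=
  ∀ M, N ≤ M → r * coeff M φ ≤ coeff (M + J) (φ * mk 1)

theorem coeff_mul_mk_one_mono (φ : ℕ⟦X⟧) {m n : ℕ} (h : m ≤ n) :
    coeff m (φ * mk 1) ≤ coeff n (φ * mk 1) := by
  rw [coeff_mul_mk_one, coeff_mul_mk_one]
  exact Finset.sum_le_sum_of_subset (Finset.range_subset_range.2 (by omega))

namespace SumDominates

variable {r J N : ℕ} {φ φ' : ℕ⟦X⟧}

theorem mono_lag (h : SumDominates r J N φ) {J' : ℕ} (hJ : J ≤ J') : SumDominates r J' N φ :=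
  fun M hM => (h M hM).trans (coeff_mul_mk_one_mono φ (by omega))

theorem of_eq_add_X_pow_mul {κ N' B : ℕ} (hκ : 0 < κ) (hφ : φ' = φ + X ^ κ * φ')
    (h : SumDominates r J N φ) (hN : N ≤ B) (hB : N' + κ ≤ B)
    (hcheck : ∀ M, N' ≤ M → M < B → r * coeff M φ' ≤ coeff (M + J) (φ' * mk 1)) :
    SumDominates r J N' φ' := by
  have hψ := mul_eq_add_X_pow_mul_of_eq_add_X_pow_mul hφ (mk 1)
  intro M hM
  induction M using Nat.strong_induction_on with
  | _ M ih =>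
    by_cases hMB : M < B
    · exact hcheck M hM hMB
    have ih' := ih (M - κ) (by omega) (by omega)
    rw [show M - κ + J = M + J - κ by omega] at ih'
    rw [coeff_of_eq_add_X_pow_mul hφ, coeff_of_eq_add_X_pow_mul hψ, if_pos (by omega),
      if_pos (by omega), mul_add]
    exact add_le_add (h M (by omega)) ih'

theorem of_eq_add_X_pow_mul_zero {κ : ℕ} (hκ : 0 < κ) (hφ : φ' = φ + X ^ κ * φ')
    (h : SumDominates r J 0 φ) : SumDominates r J 0 φ' := by
  refine h.of_eq_add_X_pow_mul hκ hφ κ.zero_le (by omega) fun M _ hM => ?_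
  have hψ := mul_eq_add_X_pow_mul_of_eq_add_X_pow_mul hφ (mk 1)
  rw [coeff_of_eq_add_X_pow_mul hφ, if_neg (by omega), add_zero,
    coeff_of_eq_add_X_pow_mul hψ]
  exact (h M M.zero_le).trans le_self_add

end SumDominates

/-- `stepCumsum κ` turns the list of the first coefficients of `φ` into that of `φ'`, where
`φ' = φ + X ^ κ * φ'`. It works on reversed lists, where `c'_{n-κ}` sits at position `κ - 1`. -/
def revStepCumsum (κ : ℕ) : List ℕ → List ℕ
  | [] => []
  | x :: r => (x + (revStepCumsum κ r).getD (κ - 1) 0) :: revStepCumsum κ r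

def stepCumsum (κ : ℕ) (l : List ℕ) : List ℕ := (revStepCumsum κ l.reverse).reverse

theorem getD_map_range_reverse (f : ℕ → ℕ) (L i : ℕ) :
    ((List.range L).reverse.map f).getD i 0 = if i < L then f (L - 1 - i) else 0 := by
  split_ifs with h <;> simp [List.getD_eq_getElem?_getD, h]

theorem map_coeff_range_of_eq_add_X_pow_mul {κ : ℕ} (hκ : 0 < κ) {φ φ' : ℕ⟦X⟧}
    (hφ : φ' = φ + X ^ κ * φ') (L : ℕ) :
    (List.range L).map (coeff · φ') = stepCumsum κ ((List.range L).map (coeff · φ)) := by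
  suffices h : revStepCumsum κ ((List.range L).reverse.map (coeff · φ)) =
      (List.range L).reverse.map (coeff · φ') by
    rw [stepCumsum, ← List.map_reverse, h, List.map_reverse, List.reverse_reverse]
  induction L with
  | zero => rfl
  | succ L ih =>
    rw [List.range_succ, List.reverse_append, List.reverse_singleton, List.singleton_append,
      List.map_cons, List.map_cons, revStepCumsum, ih, getD_map_range_reverse,
      coeff_of_eq_add_X_pow_mul hφ L]
    congr 2
    split_ifs <;> first | omega | rw [show L - 1 - (κ - 1) = L - κ by omega]

theorem le_coeff_mul_mk_one_of_map_coeff_range {r J L a b : ℕ} {φ : ℕ⟦X⟧} {l : List ℕ}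
    (hl : (List.range L).map (coeff · φ) = l) (hL : b + J ≤ L)
    (hcheck : ∀ M, a ≤ M → M < b → r * l.getD M 0 ≤ ∑ i ∈ Finset.range (M + J + 1), l.getD i 0) :
    ∀ M, a ≤ M → M < b → r * coeff M φ ≤ coeff (M + J) (φ * mk 1) := by
  have hcoeff : ∀ i < L, coeff i φ = l.getD i 0 := fun i hi => by
    simp [← hl, List.getD_eq_getElem?_getD, hi]
  intro M haM hMb
  rw [coeff_mul_mk_one, hcoeff M (by omega),
    Finset.sum_congr rfl fun i hi => hcoeff i (by simp at hi; omega)]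
  exact hcheck M haM hMb

theorem SumDominates.of_eq_add_X_pow_mul_of_map_coeff_range {r J N N' B L κ : ℕ}
    {φ φ' : ℕ⟦X⟧} {l : List ℕ} (hκ : 0 < κ) (hφ : φ' = φ + X ^ κ * φ')
    (h : SumDominates r J N φ) (hl : (List.range L).map (coeff · φ) = l)
    (hN : N ≤ B) (hB : N' + κ ≤ B) (hL : B + J ≤ L)
    (hcheck : ∀ M, N' ≤ M → M < B →
      r * (stepCumsum κ l).getD M 0 ≤ ∑ i ∈ Finset.range (M + J + 1), (stepCumsum κ l).getD i 0) :
    SumDominates r J N' φ' ∧ (List.range L).map (coeff · φ') = stepCumsum κ l := by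
  have hl' := (map_coeff_range_of_eq_add_X_pow_mul hκ hφ L).trans (congrArg _ hl)
  exact ⟨h.of_eq_add_X_pow_mul hκ hφ hN hB (le_coeff_mul_mk_one_of_map_coeff_range hl' hL hcheck),
    hl'⟩

theorem SumDominates.pairSeries_succ {r J k : ℕ} (hk : 1 ≤ k)
    (h : SumDominates r J 0 (pairSeries k k)) :
    SumDominates r J 0 (pairSeries (k + 1) (k + 1)) :=
  (h.of_eq_add_X_pow_mul_zero k.succ_pos (pairSeries_succ_left k k)).of_eq_add_X_pow_mul_zero
    k.succ_pos (pairSeries_succ_right (k + 1) hk)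

theorem sumDominates_pairSeries_four : SumDominates 21 8 0 (pairSeries 4 4) := by
  -- The thresholds `12, 21, 29, 33, 36` are the least from which the successive series satisfy
  -- the bound; the checks read coefficients up to index `39 + 8 < 47`.
  have t11 : (List.range 47).map (coeff · (pairSeries 1 1)) = List.replicate 47 1 := by
    simp [pairSeries_one_one]
  have d11 : SumDominates 21 8 12 (pairSeries 1 1) := fun M hM => by
    simp [pairSeries_one_one, coeff_mul_mk_one]
    omega
  obtain ⟨d21, t21⟩ := d11.of_eq_add_X_pow_mul_of_map_coeff_range two_pos
    (pairSeries_succ_left 1 1) t11 (N' := 21) (B := 23) (by norm_num) (by norm_num)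
    (by norm_num) (by decide)
  obtain ⟨d22, t22⟩ := d21.of_eq_add_X_pow_mul_of_map_coeff_range two_pos
    (pairSeries_succ_right 2 le_rfl) t21 (N' := 29) (B := 31) (by norm_num) (by norm_num)
    (by norm_num) (by decide)
  obtain ⟨d32, t32⟩ := d22.of_eq_add_X_pow_mul_of_map_coeff_range three_pos
    (pairSeries_succ_left 2 2) t22 (N' := 33) (B := 36) (by norm_num) (by norm_num)
    (by norm_num) (by decide)
  obtain ⟨d33, t33⟩ := d32.of_eq_add_X_pow_mul_of_map_coeff_range three_pos
    (pairSeries_succ_right 3 (by norm_num)) t32 (N' := 36) (B := 39) (by norm_num) (by norm_num)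
    (by norm_num) (by decide)
  obtain ⟨d43, -⟩ := d33.of_eq_add_X_pow_mul_of_map_coeff_range four_pos
    (pairSeries_succ_left 3 3) t33 (N' := 0) (B := 36) (by norm_num) (by norm_num)
    (by norm_num) (by decide)
  exact d43.of_eq_add_X_pow_mul_zero four_pos (pairSeries_succ_right 4 (by norm_num))

theorem sumDominates_pairSeries {k : ℕ} (hk : 4 ≤ k) :
    SumDominates 21 (2 * k) 0 (pairSeries k k) := by
  refine SumDominates.mono_lag ?_ (by omega : 8 ≤ 2 * k)
  induction k, hk using Nat.le_induction with
  | base => exact sumDominates_pairSeries_four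
  | succ k hk ih => exact ih.pairSeries_succ (by omega)

/-- For `k ≥ 4` and all `n ≥ 0`, `g_k(n) ≥ 21 · h_k(n)`. -/
theorem gCount_ge_21_hCount (k n : ℕ) (hk : 4 ≤ k) :
    21 * hCount k n ≤ gCount k n := by
  rw [hCount_eq_coeff (by omega), gCount_eq_coeff (by omega), coeff_X_pow_mul']
  split_ifs with h
  · simpa [Nat.sub_add_cancel h] using sumDominates_pairSeries hk (n - 2 * k) (Nat.zero_le _)
  · simp
end

section
/- For every m ≥ 0, as formal power series in q, the product (1-q^{m+2})/((1-q^2)(1-q^3)) has nonnegative coefficients; consequently, for all k ≥ 4, the coefficients t_k(n) of Σ_{j=2}^{k} q^{2j}(1-q^{k-j+2})/((q^2;q)_{j-1}) satisfy t_k(n) ≥ 0 for all n ≥ 0. -/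
/-!
Write `[d] = 1 / (1 - q^d) = ∑ q^(d n)`, a series with nonnegative coefficients.
For `t ≥ 2` the series `(1 - q^t) [2] [3]` is nonnegative: for `t = 2m` it is
`(1 + q^2 + ⋯ + q^(2m-2)) [3]`, and for `t = 2m + 3` it is `[2] + q^3 (1 + ⋯ + q^(2m-2)) [3]`.

For `j ≥ 3` the `j`-th summand of the series of `t_k` is `q^(2j) (1 - q^(k-j+2)) [2] [3]` times
further factors `[d]`, hence nonnegative. The summand `j = 2` is `q^4 (1 - q^k) [2]`, a polynomial
with nonnegative coefficients when `k` is even. When `k = 2m + 1` it is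
`q^4 (1 + ⋯ + q^(2m-2)) + q^(k+3) [2] - q^(k+4) [2]`, whose only negative coefficients are `-1` at
odd `n ≥ k + 4`. These are compensated by the summand `j = 3`, which is `∑_{i<m} q^(2i+6) [3]`
(one of `n - 6, n - 8, n - 10` is a multiple of 3), except that for `k = 5` the exponent `10` is
supplied by the summand `j = 5`, which is `q^10 [3] [4] [5]`.
-/

open PowerSeries Finset

namespace ChanMao

section CoeffNonneg

variable {R : Type*} [CommSemiring R] [PartialOrder R] [IsOrderedRing R]

def CoeffNonneg (f : R⟦X⟧) : Prop := ∀ n, 0 ≤ coeff n f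

lemma coeffNonneg_one : CoeffNonneg (1 : R⟦X⟧) := fun n => by
  rw [coeff_one]; split_ifs <;> simp

lemma coeffNonneg_X_pow (a : ℕ) : CoeffNonneg (X ^ a : R⟦X⟧) := fun n => by
  rw [coeff_X_pow]; split_ifs <;> simp

lemma CoeffNonneg.add {f g : R⟦X⟧} (hf : CoeffNonneg f) (hg : CoeffNonneg g) :
    CoeffNonneg (f + g) := fun n => by
  rw [map_add]; exact add_nonneg (hf n) (hg n)

lemma CoeffNonneg.mul {f g : R⟦X⟧} (hf : CoeffNonneg f) (hg : CoeffNonneg g) :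
    CoeffNonneg (f * g) := fun n => by
  rw [coeff_mul]; exact sum_nonneg fun p _ => mul_nonneg (hf _) (hg _)

lemma CoeffNonneg.sum {ι : Type*} {s : Finset ι} {f : ι → R⟦X⟧}
    (h : ∀ i ∈ s, CoeffNonneg (f i)) : CoeffNonneg (∑ i ∈ s, f i) := fun n => by
  rw [map_sum]; exact sum_nonneg fun i hi => h i hi n

lemma CoeffNonneg.prod {ι : Type*} {s : Finset ι} {f : ι → R⟦X⟧}
    (h : ∀ i ∈ s, CoeffNonneg (f i)) : CoeffNonneg (∏ i ∈ s, f i) :=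
  prod_induction f CoeffNonneg (fun _ _ => CoeffNonneg.mul) coeffNonneg_one h

lemma CoeffNonneg.coeff_mul_coeff_le {f g : R⟦X⟧} (hf : CoeffNonneg f) (hg : CoeffNonneg g)
    (i j : ℕ) : coeff i f * coeff j g ≤ coeff (i + j) (f * g) := by
  rw [coeff_mul]
  exact single_le_sum (f := fun p : ℕ × ℕ => coeff p.1 f * coeff p.2 g)
    (fun p _ => mul_nonneg (hf _) (hg _)) (a := (i, j)) (mem_antidiagonal.mpr rfl)

end CoeffNonneg

section GeomSeries

variable {R : Type*} [CommRing R]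

def geomSeries (d : ℕ) : R⟦X⟧ := mk fun n => if d ∣ n then 1 else 0

@[simp]
lemma coeff_geomSeries (d n : ℕ) : coeff n (geomSeries d : R⟦X⟧) = if d ∣ n then 1 else 0 :=
  coeff_mk _ _

@[simp]
lemma constantCoeff_geomSeries (d : ℕ) : constantCoeff (geomSeries d : R⟦X⟧) = 1 := by
  simp [← coeff_zero_eq_constantCoeff_apply]

lemma geomSeries_eq_expand {d : ℕ} (hd : d ≠ 0) : (geomSeries d : R⟦X⟧) = expand d hd (mk 1) := by
  ext n; simp [coeff_expand]

lemma one_sub_X_pow_mul_geomSeries {d : ℕ} (hd : d ≠ 0) :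
    (1 - X ^ d) * (geomSeries d : R⟦X⟧) = 1 := by
  rw [geomSeries_eq_expand hd, ← expand_X d hd, ← map_one (expand d hd), ← map_sub, ← map_mul,
    mul_comm, mk_one_mul_one_sub_eq_one, map_one]

lemma one_sub_X_pow_mul_mul_geomSeries {d : ℕ} (hd : d ≠ 0) (m : ℕ) :
    (1 - X ^ (d * m)) * (geomSeries d : R⟦X⟧) = ∑ i ∈ range m, X ^ (d * i) := by
  simp_rw [pow_mul]
  rw [← geom_sum_mul_neg, mul_assoc, one_sub_X_pow_mul_geomSeries hd, mul_one]

lemma coeffNonneg_geomSeries [PartialOrder R] [IsOrderedRing R] (d : ℕ) :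
    CoeffNonneg (geomSeries d : R⟦X⟧) := fun n => by
  rw [coeff_geomSeries]; split_ifs <;> simp

lemma inv_eq_of_mul_eq_one {k : Type*} [Field k] {φ ψ : k⟦X⟧} (h : φ * ψ = 1) : φ⁻¹ = ψ := by
  refine (inv_eq_iff_mul_eq_one fun h0 => ?_).2 (by rw [mul_comm, h])
  simpa [h0] using congrArg constantCoeff h

lemma inv_prod_one_sub_X_pow {k ι : Type*} [Field k] (s : Finset ι) {e : ι → ℕ}
    (he : ∀ i ∈ s, e i ≠ 0) : (∏ i ∈ s, (1 - X ^ e i : k⟦X⟧))⁻¹ = ∏ i ∈ s, geomSeries (e i) :=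
  inv_eq_of_mul_eq_one <| by
    rw [← prod_mul_distrib]; exact prod_eq_one fun i hi => one_sub_X_pow_mul_geomSeries (he i hi)

end GeomSeries

section TwoThree

variable {R : Type*} [CommRing R] [PartialOrder R] [IsOrderedRing R]

lemma coeffNonneg_one_sub_X_pow_mul_geomSeries_two_mul_three {t : ℕ} (ht : 2 ≤ t) :
    CoeffNonneg ((1 - X ^ t) * (geomSeries 2 * geomSeries 3 : R⟦X⟧)) := by
  have hsum (m : ℕ) : CoeffNonneg (∑ i ∈ range m, X ^ (2 * i) : R⟦X⟧) :=
    CoeffNonneg.sum fun i _ => coeffNonneg_X_pow _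
  obtain ⟨m, rfl | rfl⟩ : ∃ m, t = 2 * m ∨ t = 2 * m + 3 := by
    obtain ⟨m, rfl | rfl⟩ := Nat.even_or_odd' t
    exacts [⟨m, .inl rfl⟩, ⟨m - 1, .inr (by omega)⟩]
  · rw [← mul_assoc, one_sub_X_pow_mul_mul_geomSeries two_ne_zero]
    exact (hsum m).mul (coeffNonneg_geomSeries 3)
  · have h : (1 - X ^ (2 * m + 3)) * (geomSeries 2 * geomSeries 3 : R⟦X⟧) =
        (1 - X ^ 3) * geomSeries 3 * geomSeries 2 +
          X ^ 3 * ((1 - X ^ (2 * m)) * geomSeries 2) * geomSeries 3 := by ring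
    rw [h, one_sub_X_pow_mul_geomSeries three_ne_zero, one_mul,
      one_sub_X_pow_mul_mul_geomSeries two_ne_zero]
    exact (coeffNonneg_geomSeries 2).add
      (((coeffNonneg_X_pow 3).mul (hsum m)).mul (coeffNonneg_geomSeries 3))

end TwoThree

section TSeries

variable {R : Type*} [CommRing R]

noncomputable def tSummand (k j : ℕ) : R⟦X⟧ :=
  X ^ (2 * j) * (1 - X ^ (k - j + 2)) * ∏ i ∈ range (j - 1), geomSeries (2 + i)

lemma prod_range_geomSeries_eq {j : ℕ} (hj : 2 ≤ j) :
    ∏ i ∈ range j, (geomSeries (2 + i) : R⟦X⟧) =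
      geomSeries 2 * geomSeries 3 * ∏ i ∈ Ico 2 j, geomSeries (2 + i) := by
  rw [← prod_range_mul_prod_Ico _ hj]
  simp [prod_range_succ]

lemma tSummand_eq_of_three_le {k j : ℕ} (hj : 3 ≤ j) :
    (tSummand k j : R⟦X⟧) = X ^ (2 * j) *
      ((1 - X ^ (k - j + 2)) * (geomSeries 2 * geomSeries 3)) *
        ∏ i ∈ Ico 2 (j - 1), geomSeries (2 + i) := by
  rw [tSummand, prod_range_geomSeries_eq (by omega)]; ring

lemma tSummand_two {k : ℕ} (hk : 2 ≤ k) :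
    (tSummand k 2 : R⟦X⟧) = X ^ 4 * ((1 - X ^ k) * geomSeries 2) := by
  rw [tSummand, Nat.sub_add_cancel hk]; simp only [Nat.reduceMul, Nat.add_one_sub_one, range_one, prod_singleton, add_zero]
  ring

lemma tSummand_three_of_odd {m : ℕ} (hm : 1 ≤ m) :
    (tSummand (2 * m + 1) 3 : R⟦X⟧) = ∑ i ∈ range m, X ^ (2 * i + 6) * geomSeries 3 := by
  have h := one_sub_X_pow_mul_mul_geomSeries (R := R) two_ne_zero m
  have hsum : ∑ i ∈ range m, X ^ (2 * i + 6) * (geomSeries 3 : R⟦X⟧) =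
      X ^ 6 * (∑ i ∈ range m, X ^ (2 * i)) * geomSeries 3 := by
    rw [mul_sum, sum_mul]; exact sum_congr rfl fun i _ => by ring
  rw [tSummand_eq_of_three_le le_rfl, show 2 * m + 1 - 3 + 2 = 2 * m by omega, hsum]
  simp only [Nat.reduceSub, Ico_self, prod_empty, mul_one]
  linear_combination (X ^ 6 * geomSeries 3 : R⟦X⟧) * h

lemma tSummand_five_five :
    (tSummand 5 5 : R⟦X⟧) = X ^ 10 * geomSeries 3 * (geomSeries 4 * geomSeries 5) := by
  have h := one_sub_X_pow_mul_geomSeries (R := R) two_ne_zero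
  simp only [tSummand, prod_range_succ, prod_range_zero]
  linear_combination (X ^ 10 * geomSeries 3 * (geomSeries 4 * geomSeries 5) : R⟦X⟧) * h

end TSeries

section TSeriesNonneg

variable {R : Type*} [CommRing R] [PartialOrder R] [IsOrderedRing R]

lemma coeffNonneg_tSummand {k j : ℕ} (hj : 3 ≤ j) :
    CoeffNonneg (tSummand k j : R⟦X⟧) := by
  rw [tSummand_eq_of_three_le hj]
  exact ((coeffNonneg_X_pow _).mul
    (coeffNonneg_one_sub_X_pow_mul_geomSeries_two_mul_three (by omega))).mul
      (CoeffNonneg.prod fun i _ => coeffNonneg_geomSeries _)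

lemma one_le_sum_coeff_tSummand_of_odd {m n : ℕ} (hm : 2 ≤ m) (hn : 2 * m + 5 ≤ n)
    (hodd : Odd n) :
    1 ≤ ∑ j ∈ Icc 3 (2 * m + 1), coeff n (tSummand (2 * m + 1) j : R⟦X⟧) := by
  obtain ⟨i, hi, hin, hdvd⟩ : ∃ i ≤ 2, 2 * i + 6 ≤ n ∧ 3 ∣ n - (2 * i + 6) := by
    obtain ⟨r, rfl⟩ := hodd
    rcases (by omega : (2 * r + 1) % 3 = 0 ∨ (2 * r + 1) % 3 = 1 ∨ (2 * r + 1) % 3 = 2)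
      with h | h | h
    · exact ⟨0, by omega, by omega, by omega⟩
    · exact ⟨2, by omega, by omega, by omega⟩
    · exact ⟨1, by omega, by omega, by omega⟩
  have hcoeff : coeff n (X ^ (2 * i + 6) * geomSeries 3 : R⟦X⟧) = 1 := by
    rw [coeff_X_pow_mul', if_pos hin, coeff_geomSeries, if_pos hdvd]
  have hnonneg : ∀ j ∈ Icc 3 (2 * m + 1), 0 ≤ coeff n (tSummand (2 * m + 1) j : R⟦X⟧) :=
    fun j hj => coeffNonneg_tSummand (mem_Icc.1 hj).1 n
  by_cases him : i < m
  · calc 1 = coeff n (X ^ (2 * i + 6) * geomSeries 3 : R⟦X⟧) := hcoeff.symm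
      _ ≤ coeff n (tSummand (2 * m + 1) 3 : R⟦X⟧) := by
        rw [tSummand_three_of_odd (by omega), map_sum]
        exact single_le_sum (f := fun l => coeff n (X ^ (2 * l + 6) * geomSeries 3 : R⟦X⟧))
          (fun l _ => ((coeffNonneg_X_pow _).mul (coeffNonneg_geomSeries 3)) n) (mem_range.2 him)
      _ ≤ _ := single_le_sum hnonneg (mem_Icc.2 ⟨le_rfl, by omega⟩)
  · obtain ⟨rfl, rfl⟩ : i = 2 ∧ m = 2 := by omega
    calc (1 : R) = coeff n (X ^ 10 * geomSeries 3 : R⟦X⟧) *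
          coeff 0 (geomSeries 4 * geomSeries 5 : R⟦X⟧) := by
          rw [hcoeff, coeff_zero_eq_constantCoeff_apply, map_mul, constantCoeff_geomSeries,
            constantCoeff_geomSeries, mul_one, mul_one]
      _ ≤ coeff n (tSummand 5 5 : R⟦X⟧) := by
        rw [tSummand_five_five]
        exact ((coeffNonneg_X_pow 10).mul (coeffNonneg_geomSeries 3)).coeff_mul_coeff_le
          ((coeffNonneg_geomSeries 4).mul (coeffNonneg_geomSeries 5)) n 0
      _ ≤ _ := single_le_sum hnonneg (mem_Icc.2 ⟨by norm_num, le_rfl⟩)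

lemma coeffNonneg_sum_tSummand {k : ℕ} (hk : 4 ≤ k) :
    CoeffNonneg (∑ j ∈ Icc 2 k, tSummand k j : R⟦X⟧) := by
  rw [← insert_Icc_add_one_left_eq_Icc (by omega : 2 ≤ k), sum_insert (by simp),
    tSummand_two (by omega)]
  have hrest : CoeffNonneg (∑ j ∈ Icc 3 k, tSummand k j : R⟦X⟧) :=
    CoeffNonneg.sum fun j hj => coeffNonneg_tSummand (mem_Icc.1 hj).1
  have hpoly (m : ℕ) : CoeffNonneg (X ^ 4 * ∑ i ∈ range m, X ^ (2 * i) : R⟦X⟧) :=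
    (coeffNonneg_X_pow 4).mul (CoeffNonneg.sum fun i _ => coeffNonneg_X_pow _)
  obtain ⟨m, rfl | rfl⟩ := Nat.even_or_odd' k
  · rw [one_sub_X_pow_mul_mul_geomSeries two_ne_zero]
    exact (hpoly m).add hrest
  · have hsplit : X ^ 4 * ((1 - X ^ (2 * m + 1)) * geomSeries 2) =
        X ^ 4 * ((1 - X ^ (2 * m)) * geomSeries 2) + X ^ (2 * m + 4) * geomSeries 2 -
          X ^ (2 * m + 5) * (geomSeries 2 : R⟦X⟧) := by ring
    rw [hsplit, one_sub_X_pow_mul_mul_geomSeries two_ne_zero]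
    intro n
    have hpos := ((hpoly m).add ((coeffNonneg_X_pow (2 * m + 4)).mul (coeffNonneg_geomSeries 2))) n
    have hneg : coeff n (X ^ (2 * m + 5) * geomSeries 2 : R⟦X⟧) ≤
        coeff n (∑ j ∈ Icc 3 (2 * m + 1), tSummand (2 * m + 1) j : R⟦X⟧) := by
      rw [coeff_X_pow_mul', coeff_geomSeries]
      split_ifs with hn hdvd
      · rw [map_sum]
        exact one_le_sum_coeff_tSummand_of_odd (by omega) hn (Nat.odd_iff.2 (by omega))
      all_goals exact hrest n
    rw [map_add, map_sub]
    linear_combination hpos + hneg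

end TSeriesNonneg

end ChanMao

/-- For every `m ≥ 0`, the formal power series `(1-q^{m+2})/((1-q²)(1-q³))` has
nonnegative coefficients; consequently, for `k ≥ 4`, all coefficients of
`Σ_{j=2}^{k} q^{2j}(1-q^{k-j+2})/((q²;q)_{j-1})` are nonnegative. -/
theorem chanMao_nonneg :
    (∀ m n : ℕ,
      0 ≤ coeff (R := ℚ) n ((1 - X ^ (m + 2)) * ((1 - X ^ 2) * (1 - X ^ 3))⁻¹)) ∧
    (∀ k : ℕ, 4 ≤ k → ∀ n : ℕ,
      0 ≤ coeff (R := ℚ) n (∑ j ∈ Icc 2 k,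
        X ^ (2 * j) * (1 - X ^ (k - j + 2)) *
          (∏ i ∈ range (j - 1), (1 - X ^ (2 + i)))⁻¹)) := by
  open ChanMao in
  refine ⟨fun m => ?_, fun k hk => ?_⟩
  · have hinv : ((1 - X ^ 2) * (1 - X ^ 3) : ℚ⟦X⟧)⁻¹ = geomSeries 2 * geomSeries 3 :=
      inv_eq_of_mul_eq_one <| by
        rw [mul_mul_mul_comm, one_sub_X_pow_mul_geomSeries two_ne_zero,
          one_sub_X_pow_mul_geomSeries three_ne_zero, one_mul]
    rw [hinv]
    exact coeffNonneg_one_sub_X_pow_mul_geomSeries_two_mul_three (by omega)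
  · have hsum : ∑ j ∈ Icc 2 k, X ^ (2 * j) * (1 - X ^ (k - j + 2)) *
        (∏ i ∈ range (j - 1), (1 - X ^ (2 + i) : ℚ⟦X⟧))⁻¹ = ∑ j ∈ Icc 2 k, tSummand k j :=
      sum_congr rfl fun j _ => by rw [inv_prod_one_sub_X_pow _ fun i _ => by omega, tSummand]
    rw [hsum]
    exact coeffNonneg_sum_tSummand hk
end
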